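/- arXiv:2008.09294 — 11 statements merged into one kernel-verified Lean document; each statement's English description precedes it below -/
import Mathlib

section
/- Every edge-coloring of the complete graph K_n (n ≥ 2) that contains no monochromatic triangle admits a properly colored Hamilton path, i.e., a Hamilton path in which consecutive edges receive distinct colors. -/
/-- An edge-colored graph (with total symmetric coloring `col`) contains a
monochromatic triangle. -/
def HasMonoTriangle {V : Type*} (col : V → V → ℕ) : Prop :=
  ∃ x y z : V, x ≠ y ∧ y ≠ z ∧ x ≠ z ∧ col x y = col y z ∧ col x y = col x z

/-- `c : ZMod ℓ → V` is a properly colored cycle of length `ℓ` in the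
edge-colored complete graph with coloring `col`. -/
def IsPCCycle {V : Type*} {ℓ : ℕ} (col : V → V → ℕ) (c : ZMod ℓ → V) : Prop :=
  Function.Injective c ∧
    ∀ i : ZMod ℓ, col (c i) (c (i + 1)) ≠ col (c (i + 1)) (c (i + 2))

/-- There is a properly colored cycle of length `ℓ` through `v`. -/
def PCThrough {V : Type*} (col : V → V → ℕ) (ℓ : ℕ) (v : V) : Prop :=
  ∃ c : ZMod ℓ → V, IsPCCycle col c ∧ ∃ i, c i = v

/-- `S` is a degenerate set of the edge-colored complete graph `col`. -/
def DegenSet {V : Type*} (col : V → V → ℕ) (S : Set V) : Prop :=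
  S.Nonempty ∧ ∃ f : V → ℕ,
    (∀ u ∈ S, ∀ v ∈ S, u ≠ v → col u v = f u ∨ col u v = f v) ∧
    (∀ u ∈ S, ∀ v, v ∉ S → col u v = f u)

/-!
Build the path by inserting the vertices one at a time. To insert `v` into a properly colored
path `a b c …`, put `v` in front unless `col v a = col a b`. In that case put `v` right after `a`:
the triangle `v a b` is not monochromatic, so `col a v ≠ col v b`, and the path `a v b c …` is
proper unless also `col v b = col b c`, which is the same situation one step further along the
path. If the insertion finally happens after `b`, the new edge at `b` has color `col v b`, which
differs from `col a b = col v a`, so the edge `a b` still fits.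
-/

section PCPath

variable {V : Type*}

def IsPCPath (col : V → V → ℕ) : List V → Prop
  | a :: b :: c :: l => col a b ≠ col b c ∧ IsPCPath col (b :: c :: l)
  | _ => True

variable {col : V → V → ℕ}

lemma isPCPath_cons_cons_iff {a b : V} {l : List V} :
    IsPCPath col (a :: b :: l) ↔
      (∀ c ∈ l.head?, col a b ≠ col b c) ∧ IsPCPath col (b :: l) := by
  cases l <;> simp [IsPCPath]

lemma IsPCPath.tail {l : List V} (h : IsPCPath col l) : IsPCPath col l.tail := by
  match l, h with
  | [], _ | [_], _ | [_, _], _ => trivial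
  | _ :: _ :: _ :: _, h => exact h.2

lemma IsPCPath.getElem_ne {l : List V} (h : IsPCPath col l) (i : ℕ) (hi : i + 2 < l.length) :
    col l[i] l[i + 1] ≠ col l[i + 1] l[i + 2] := by
  induction i generalizing l with
  | zero =>
    match l, h with
    | _ :: _ :: _ :: _, h => exact h.1
  | succ i ih =>
    match l, h with
    | _ :: _ :: _ :: _, h => exact ih h.2 (by simpa using hi)

lemma col_ne_of_not_hasMonoTriangle (hmono : ¬ HasMonoTriangle col) {x y z : V}
    (hxy : x ≠ y) (hyz : y ≠ z) (hxz : x ≠ z) (h : col x y = col y z) :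
    col x z ≠ col x y :=
  fun h' => hmono ⟨x, y, z, hxy, hyz, hxz, h, h'.symm⟩

lemma exists_perm_isPCPath_cons_cons_of_col_eq (hsym : ∀ u v, col u v = col v u)
    (hmono : ¬ HasMonoTriangle col) {a v : V} {l : List V} (hnd : (v :: a :: l).Nodup)
    (hpc : IsPCPath col (a :: l)) (hhead : ∀ b ∈ l.head?, col v a = col a b) :
    ∃ b l', (v :: l).Perm (b :: l') ∧ IsPCPath col (a :: b :: l') ∧ col a b = col v a := by
  induction l generalizing a with
  | nil => exact ⟨v, [], .refl _, trivial, hsym a v⟩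
  | cons b t ih =>
    simp only [List.nodup_cons, List.mem_cons, not_or] at hnd
    obtain ⟨⟨hva, hvb, hvt⟩, ⟨hab, -⟩, hbt, hnd⟩ := hnd
    have hvab : col v a = col a b := hhead b rfl
    have hvb_ne : col v b ≠ col v a := col_ne_of_not_hasMonoTriangle hmono hva hab hvb hvab
    by_cases hc : ∃ c ∈ t.head?, col v b = col b c
    · obtain ⟨c, hc, hvbc⟩ := hc
      obtain ⟨w, l', hperm, hpc', hbw⟩ :=
        ih (List.nodup_cons.2 ⟨by simp [hvb, hvt], List.nodup_cons.2 ⟨hbt, hnd⟩⟩) hpc.tail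
          fun c' hc' => Option.mem_unique hc hc' ▸ hvbc
      have hab_ne : col a b ≠ col b w := by
        rw [hbw, ← hvab]
        exact hvb_ne.symm
      exact ⟨b, w :: l', (List.Perm.swap b v t).trans (hperm.cons b), ⟨hab_ne, hpc'⟩,
        hvab.symm⟩
    · push Not at hc
      have hav_ne : col a v ≠ col v b := by
        rw [hsym a v]
        exact hvb_ne.symm
      exact ⟨v, b :: t, .refl _, ⟨hav_ne, isPCPath_cons_cons_iff.2 ⟨hc, hpc.tail⟩⟩, hsym a v⟩

lemma exists_perm_isPCPath_cons (hsym : ∀ u v, col u v = col v u)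
    (hmono : ¬ HasMonoTriangle col) {v : V} {l : List V} (hnd : (v :: l).Nodup)
    (hpc : IsPCPath col l) : ∃ l', (v :: l).Perm l' ∧ IsPCPath col l' := by
  rcases l with _ | ⟨a, t⟩
  · exact ⟨[v], .refl _, trivial⟩
  by_cases h : ∃ b ∈ t.head?, col v a = col a b
  · obtain ⟨b, hb, hvab⟩ := h
    obtain ⟨w, l', hperm, hpc', -⟩ :=
      exists_perm_isPCPath_cons_cons_of_col_eq hsym hmono hnd hpc
        fun b' hb' => Option.mem_unique hb hb' ▸ hvab
    exact ⟨a :: w :: l', (List.Perm.swap a v t).trans (hperm.cons a), hpc'⟩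
  · push Not at h
    exact ⟨v :: a :: t, .refl _, isPCPath_cons_cons_iff.2 ⟨h, hpc⟩⟩

theorem exists_perm_isPCPath (hsym : ∀ u v, col u v = col v u)
    (hmono : ¬ HasMonoTriangle col) {s : List V} (hs : s.Nodup) :
    ∃ l, s.Perm l ∧ IsPCPath col l := by
  induction s with
  | nil => exact ⟨[], .refl _, trivial⟩
  | cons v s ih =>
    obtain ⟨l, hperm, hpc⟩ := ih (List.nodup_cons.1 hs).2
    obtain ⟨l', hperm', hpc'⟩ :=
      exists_perm_isPCPath_cons hsym hmono ((hperm.cons v).nodup_iff.1 hs) hpc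
    exact ⟨l', (hperm.cons v).trans hperm', hpc'⟩

end PCPath

/-- Every edge-coloring of $K_n$ ($n ≥ 2$) with no monochromatic triangle
admits a properly colored Hamilton path. -/
theorem pc_hamilton_path_of_no_mono_triangle
    (n : ℕ) (col : Fin n → Fin n → ℕ)
    (hsym : ∀ u v, col u v = col v u)
    (hmono : ¬ HasMonoTriangle col) :
    ∃ p : Fin n → Fin n, Function.Bijective p ∧
      ∀ i : ℕ, ∀ h : i + 2 < n,
        col (p ⟨i, by omega⟩) (p ⟨i + 1, by omega⟩) ≠
          col (p ⟨i + 1, by omega⟩) (p ⟨i + 2, by omega⟩) := by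
  obtain ⟨l, hperm, hpc⟩ := exists_perm_isPCPath hsym hmono (List.nodup_finRange n)
  have hlen : l.length = n := by simpa using hperm.length_eq.symm
  let p : Fin n ≃ Fin n := (finCongr hlen.symm).trans <|
    List.Nodup.getEquivOfForallMemList l (hperm.nodup_iff.1 (List.nodup_finRange n))
      fun x => hperm.mem_iff.1 (List.mem_finRange x)
  exact ⟨p, p.bijective, fun i hi => hpc.getElem_ne i (by omega)⟩
end

section
/- Let G be an edge-colored graph and suppose S is a degenerate set of G with S ≠ V(G). Then no edge joining a vertex of S to a vertex outside S lies on any properly colored cycle of G; in particular, G has no properly colored Hamilton cycle. -/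
lemma cross_false_aux {V : Type*} (G : SimpleGraph V) (col : V → V → ℕ)
    (hsym : ∀ u v, col u v = col v u)
    (S : Set V) (f : V → ℕ)
    (hin : ∀ u ∈ S, ∀ v ∈ S, G.Adj u v → col u v = f u ∨ col u v = f v)
    (hout : ∀ u ∈ S, ∀ v, v ∉ S → G.Adj u v → col u v = f u)
    {ℓ : ℕ} (hℓ : ℓ ≠ 0) (c : ZMod ℓ → V)
    (hadj : ∀ i, G.Adj (c i) (c (i + 1)))
    (hpc : ∀ i, col (c i) (c (i + 1)) ≠ col (c (i + 1)) (c (i + 2)))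
    (i : ZMod ℓ) (hi : c i ∈ S) (hi1 : c (i + 1) ∉ S) : False := by
  have key : ∀ n : ℕ, c (i - n) ∈ S ∧ col (c (i - n)) (c (i - n + 1)) = f (c (i - n)) := by
    intro n
    induction n with
    | zero =>
      simp only [Nat.cast_zero, sub_zero]
      exact ⟨hi, hout _ hi _ hi1 (hadj i)⟩
    | succ n ih =>
      obtain ⟨hmem, hcol⟩ := ih
      set j : ZMod ℓ := i - (n : ZMod ℓ) with hj
      have hj1 : j - 1 + 1 = j := by ring
      have hj2 : j - 1 + 2 = j + 1 := by ring
      have hne : col (c (j - 1)) (c j) ≠ f (c j) := by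
        have h := hpc (j - 1)
        rw [hj1, hj2, hcol] at h
        exact h
      have hadj' : G.Adj (c (j - 1)) (c j) := by
        have h := hadj (j - 1); rwa [hj1] at h
      have hmem' : c (j - 1) ∈ S := by
        by_contra h
        exact hne (by rw [hsym]; exact hout _ hmem _ h hadj'.symm)
      have hcol' : col (c (j - 1)) (c j) = f (c (j - 1)) := by
        rcases hin _ hmem' _ hmem hadj' with h | h
        · exact h
        · exact absurd h hne
      have heq : i - ((n + 1 : ℕ) : ZMod ℓ) = j - 1 := by rw [hj]; push_cast; ring
      refine ⟨heq ▸ hmem', ?_⟩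
      rw [heq, hj1]; exact hcol'
  have heq : i - ((ℓ - 1 : ℕ) : ZMod ℓ) = i + 1 := by
    rw [Nat.cast_sub (Nat.one_le_iff_ne_zero.mpr hℓ), ZMod.natCast_self]
    push_cast; ring
  exact hi1 (heq ▸ (key (ℓ - 1)).1)

/-- If  is a degenerate set of an edge-colored graph  with ,
then no edge joining  to its complement lies on a properly colored cycle;
in particular there is no properly colored Hamilton cycle. -/
theorem no_pc_cycle_through_degenerate_cut
    {V : Type*} [Fintype V] (G : SimpleGraph V) (col : V → V → ℕ)
    (hsym : ∀ u v, col u v = col v u)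
    (S : Set V) (hS : S.Nonempty) (hSV : S ≠ Set.univ)
    (f : V → ℕ)
    (hin : ∀ u ∈ S, ∀ v ∈ S, G.Adj u v → col u v = f u ∨ col u v = f v)
    (hout : ∀ u ∈ S, ∀ v, v ∉ S → G.Adj u v → col u v = f u) :
    (∀ (ℓ : ℕ) (c : ZMod ℓ → V), Function.Injective c →
        (∀ i, G.Adj (c i) (c (i + 1))) →
        (∀ i, col (c i) (c (i + 1)) ≠ col (c (i + 1)) (c (i + 2))) →
        ∀ i, (c i ∈ S ↔ c (i + 1) ∈ S)) ∧
    ¬ ∃ c : ZMod (Fintype.card V) → V, Function.Bijective c ∧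
        (∀ i, G.Adj (c i) (c (i + 1))) ∧
        (∀ i, col (c i) (c (i + 1)) ≠ col (c (i + 1)) (c (i + 2))) := by
  have Hcut : ∀ (ℓ : ℕ) (c : ZMod ℓ → V), Function.Injective c →
      (∀ i, G.Adj (c i) (c (i + 1))) →
      (∀ i, col (c i) (c (i + 1)) ≠ col (c (i + 1)) (c (i + 2))) →
      ∀ i, (c i ∈ S ↔ c (i + 1) ∈ S) := by
    intro ℓ c hinj hadj hpc i
    have hℓ : ℓ ≠ 0 := by
      rintro rfl
      haveI : Finite ℤ := Finite.of_injective c hinj; exact not_finite ℤ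
    constructor
    · intro h
      by_contra h1
      exact cross_false_aux G col hsym S f hin hout hℓ c hadj hpc i h h1
    · intro h1
      by_contra h
      refine cross_false_aux G col hsym S f hin hout hℓ (fun j => c (-j)) ?_ ?_ (-(i + 1)) ?_ ?_
      · intro j
        have h2 : (-(j + 1) : ZMod ℓ) + 1 = -j := by ring
        have := hadj (-(j + 1))
        rw [h2] at this
        have h3 : (-(j + 1) : ZMod ℓ) = -j - 1 := by ring
        rw [h3] at this
        simpa [show (-(j+1) : ZMod ℓ) = -j - 1 from by ring] using this.symm
      · intro j
        have h4 : (-(j + 2) : ZMod ℓ) + 1 = -(j + 1) := by ring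
        have h5 : (-(j + 2) : ZMod ℓ) + 2 = -j := by ring
        have hp := hpc (-(j + 2))
        rw [h4, h5] at hp
        rw [hsym (c (-j)) (c (-(j+1))), hsym (c (-(j+1))) (c (-(j+2)))]
        exact fun he => hp he.symm
      · simpa using h1
      · simpa using h
  refine ⟨Hcut, ?_⟩
  rintro ⟨c, hbij, hadj, hpc⟩
  obtain ⟨s, hs⟩ := hS
  haveI : Nonempty V := ⟨s⟩
  obtain ⟨t, ht⟩ : ∃ t, t ∉ S := by
    by_contra h
    push_neg at h
    exact hSV (Set.eq_univ_iff_forall.mpr h)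
  have H := Hcut (Fintype.card V) c hbij.injective hadj hpc
  have Hn : ∀ (n : ℕ) (i : ZMod (Fintype.card V)), c i ∈ S ↔ c (i + n) ∈ S := by
    intro n
    induction n with
    | zero => simp
    | succ n ih =>
      intro i
      have he : i + ((n + 1 : ℕ) : ZMod (Fintype.card V)) = (i + n) + 1 := by push_cast; ring
      rw [he]
      exact (ih i).trans (H (i + n))
  obtain ⟨a, ha⟩ := hbij.surjective s
  obtain ⟨b, hb⟩ := hbij.surjective t
  haveI : NeZero (Fintype.card V) := ⟨Fintype.card_ne_zero⟩
  obtain ⟨k, hk⟩ := ZMod.natCast_rightInverse.surjective (b - a)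
  have hbS : c b ∈ S := by
    have := (Hn k a).mp (by rw [ha]; exact hs)
    rwa [hk, show a + (b - a) = b from by ring] at this
  exact ht (hb ▸ hbS)
end

section
/- Every vertex of a strongly connected tournament on n ≥ 3 vertices is contained in directed cycles of every length from 3 to n (Moon's theorem). -/
/-!
Induction on the length of a cycle `C` through `v`. If `C` misses a vertex, either some vertex
`u` outside `C` has both an in- and an out-neighbour on `C`, and then `u` can be inserted between
two consecutive vertices of `C`; or every vertex outside `C` dominates `C` or is dominated by it.
In the second case strong connectivity yields an edge `t → w` from a vertex dominated by `C` to a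
vertex dominating `C`, and replacing the successor of `v` on `C` by `t, w` lengthens `C` by one.
The same argument with `C = {v}` produces the triangle through `v`.
-/

section Generic

variable {α : Type*} {r : α → α → Prop}

theorem Relation.ReflTransGen.exists_boundary_rel {p : α → Prop}
    {a b : α} (h : Relation.ReflTransGen r a b) (ha : p a) (hb : ¬ p b) :
    ∃ x y, p x ∧ ¬ p y ∧ r x y := by
  induction h with
  | refl => exact absurd ha hb
  | @tail c d _ hcd ih =>
    by_cases hc : p c
    · exact ⟨c, d, hc, hb, hcd⟩
    · exact ih hc

theorem Cycle.exists_eq_coe_cons_of_mem {s : Cycle α} {a : α} (h : a ∈ s) :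
    ∃ l : List α, s = ↑(a :: l) := by
  induction s using Quotient.inductionOn' with | h l => ?_
  rw [Cycle.mk''_eq_coe, Cycle.mem_coe_iff] at *
  obtain ⟨l₁, l₂, rfl⟩ := List.append_of_mem h
  exact ⟨l₂ ++ l₁, Cycle.coe_eq_coe.mpr List.isRotated_append⟩

theorem Cycle.Chain.rel_getElem_mod {l : List α}
    (hch : Cycle.Chain r (l : Cycle α)) (hl : 2 ≤ l.length) (i : ℕ) :
    r (l[i % l.length]'(Nat.mod_lt _ (by omega)))
      (l[(i + 1) % l.length]'(Nat.mod_lt _ (by omega))) := by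
  have rel_zero_one :
      ∀ (m : List α) (hm : 2 ≤ m.length), Cycle.Chain r (m : Cycle α) → r m[0] m[1]
    | a :: b :: t, _, h => (List.isChain_cons_cons.mp h).1
  have hrot : Cycle.Chain r (l.rotate i : Cycle α) := by
    rwa [Cycle.coe_eq_coe.mpr (List.IsRotated.forall l i)]
  have h := rel_zero_one (l.rotate i) (by simpa) hrot
  rwa [List.getElem_rotate, List.getElem_rotate, Nat.zero_add, Nat.add_comm 1] at h

theorem Cycle.Chain.exists_injective_zmod {l : List α} (hnd : l.Nodup)
    (hch : Cycle.Chain r (l : Cycle α)) (hl : 2 ≤ l.length) :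
    ∃ c : ZMod l.length → α, Function.Injective c ∧ (∀ i, r (c i) (c (i + 1))) ∧
      ∀ a ∈ l, ∃ i, c i = a := by
  have : NeZero l.length := ⟨by omega⟩
  have : Fact (1 < l.length) := ⟨by omega⟩
  refine ⟨fun i => l[i.val]'(ZMod.val_lt i),
    fun i j h => ZMod.val_injective _ (hnd.getElem_inj_iff.mp h), fun i => ?_, fun a ha => ?_⟩
  · simpa [Nat.mod_eq_of_lt (ZMod.val_lt i), ZMod.val_add, ZMod.val_one] using
      hch.rel_getElem_mod hl i.val
  · obtain ⟨k, hk, rfl⟩ := List.getElem_of_mem ha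
    exact ⟨k, by simp [ZMod.val_natCast, Nat.mod_eq_of_lt hk]⟩

theorem Cycle.exists_notMem_of_length_lt [Fintype α] {s : Cycle α}
    (h : s.length < Fintype.card α) : ∃ a, a ∉ s := by
  classical
  induction s using Quotient.inductionOn' with | h l => ?_
  by_contra! hall
  have huniv : (Finset.univ : Finset α) ⊆ l.toFinset := fun a _ => by simpa using hall a
  have := (Finset.card_le_card huniv).trans (List.toFinset_card_le l)
  simp only [Cycle.mk''_eq_coe, Cycle.length_coe, Finset.card_univ] at h this
  omega

theorem exists_isChain_insert {u b : α} (hub : r u b) :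
    ∀ {a : α} {l : List α}, List.IsChain r (a :: (l ++ [b])) → (∃ x ∈ a :: l, r x u) →
      (∀ x ∈ l, r x u ∨ r u x) →
      ∃ l', List.IsChain r (a :: (l' ++ [b])) ∧ l'.Perm (u :: l)
  | a, [], _, hin, _ => ⟨[u], by simp_all, .refl _⟩
  | a, c :: l, hch, hin, hcomp => by
    rw [List.cons_append, List.isChain_cons_cons] at hch
    by_cases hin' : ∃ x ∈ c :: l, r x u
    · obtain ⟨l', hch', hperm⟩ :=
        exists_isChain_insert hub hch.2 hin' fun x hx => hcomp x (List.mem_cons_of_mem _ hx)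
      exact ⟨c :: l', List.isChain_cons_cons.mpr ⟨hch.1, hch'⟩,
        (hperm.cons c).trans (.swap _ _ _)⟩
    · push Not at hin'
      have hau : r a u := by
        obtain ⟨x, hx, hxu⟩ := hin
        rcases List.mem_cons.mp hx with rfl | hx
        · exact hxu
        · exact absurd hxu (hin' x hx)
      have huc : r u c := (hcomp c List.mem_cons_self).resolve_left (hin' c List.mem_cons_self)
      exact ⟨u :: c :: l, by simp_all, .refl _⟩

end Generic

section Tournament

variable {V : Type*} {r : V → V → Prop}

theorem exists_dominated_rel_dominating (hasymm : ∀ a b, r a b → ¬ r b a)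
    (hstrong : ∀ a b, Relation.ReflTransGen r a b) {C : Set V} {c u : V} (hc : c ∈ C)
    (hu : u ∉ C)
    (hsplit : ∀ x ∉ C, (∀ y ∈ C, r x y) ∨ (∀ y ∈ C, r y x)) :
    ∃ t w, t ∉ C ∧ w ∉ C ∧ (∀ y ∈ C, r y t) ∧ (∀ y ∈ C, r w y) ∧ r t w := by
  obtain ⟨x, t, hx, ht, hxt⟩ := (hstrong c u).exists_boundary_rel (p := (· ∈ C)) hc hu
  have htC : ∀ y ∈ C, r y t := (hsplit t ht).resolve_left fun h => hasymm _ _ hxt (h x hx)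
  obtain ⟨t', w, ⟨ht', ht'C⟩, hw, ht'w⟩ := (hstrong t c).exists_boundary_rel
    (p := fun z => z ∉ C ∧ ∀ y ∈ C, r y z) ⟨ht, htC⟩ fun h => h.1 hc
  have hwC : w ∉ C := fun hw' => hasymm _ _ ht'w (ht'C w hw')
  exact ⟨t', w, ht', hwC, ht'C, (hsplit w hwC).resolve_right fun h => hw ⟨hwC, h⟩, ht'w⟩

theorem exists_three_cycle (hasymm : ∀ a b, r a b → ¬ r b a)
    (htotal : ∀ a b, a ≠ b → r a b ∨ r b a) (hstrong : ∀ a b, Relation.ReflTransGen r a b)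
    {v u : V} (hvu : v ≠ u) :
    ∃ s : Cycle V, s.Nodup ∧ s.Chain r ∧ s.length = 3 ∧ v ∈ s := by
  obtain ⟨t, w, ht, hw, hvt, hwv, htw⟩ := exists_dominated_rel_dominating hasymm hstrong
    (C := {v}) rfl hvu.symm fun x hx => by simpa [or_comm] using htotal x v hx
  have htw' : t ≠ w := by rintro rfl; exact hasymm _ _ htw htw
  refine ⟨↑[v, t, w], ?_, ?_, rfl, by simp⟩
  · simp_all [Ne.symm ht, Ne.symm hw]
  · simp_all

theorem exists_cycle_insert (htotal : ∀ a b, a ≠ b → r a b ∨ r b a) {s : Cycle V}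
    (hnd : s.Nodup) (hch : s.Chain r) {u x y : V} (hu : u ∉ s) (hx : x ∈ s) (hy : y ∈ s)
    (hxu : r x u) (huy : r u y) :
    ∃ s' : Cycle V, s'.Nodup ∧ s'.Chain r ∧ s'.length = s.length + 1 ∧
      ∀ z ∈ s, z ∈ s' := by
  obtain ⟨m, rfl⟩ := Cycle.exists_eq_coe_cons_of_mem hy
  rw [Cycle.mem_coe_iff] at hu hx
  obtain ⟨l', hch', hperm⟩ := exists_isChain_insert huy hch ⟨x, hx, hxu⟩
    fun z hz => htotal z u (by rintro rfl; exact hu (List.mem_cons_of_mem _ hz))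
  have hperm' : (y :: l').Perm (u :: y :: m) := (hperm.cons y).trans (.swap _ _ _)
  refine ⟨↑(y :: l'), ?_, hch', ?_, fun z hz => ?_⟩
  · exact Cycle.nodup_coe_iff.mpr (hperm'.nodup_iff.mpr (.cons hu (Cycle.nodup_coe_iff.mp hnd)))
  · simp [hperm.length_eq]
  · rw [Cycle.mem_coe_iff, hperm'.mem_iff] at *
    exact List.mem_cons_of_mem _ hz

theorem exists_cycle_replace_succ (hasymm : ∀ a b, r a b → ¬ r b a) {s : Cycle V}
    (hnd : s.Nodup) (hch : s.Chain r) {v t w : V} (hv : v ∈ s) (ht : t ∉ s) (hw : w ∉ s)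
    (hvt : r v t) (htw : r t w) (hws : ∀ y ∈ s, r w y) :
    ∃ s' : Cycle V, s'.Nodup ∧ s'.Chain r ∧ s'.length = s.length + 1 ∧ v ∈ s' := by
  obtain ⟨_ | ⟨b, l⟩, rfl⟩ := Cycle.exists_eq_coe_cons_of_mem hv
  · exact absurd ((Cycle.chain_singleton r v).mp hch) fun h => hasymm _ _ h h
  refine ⟨↑(v :: t :: w :: l), ?_, ?_, by simp, by simp⟩
  · have htw' : t ≠ w := by rintro rfl; exact hasymm _ _ htw htw
    simp only [Cycle.nodup_coe_iff, Cycle.mem_coe_iff] at hnd ht hw ⊢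
    simp_all [List.nodup_cons, eq_comm]
  · have htail : List.IsChain r (l ++ [v]) := (List.isChain_cons_cons.mp hch).2.tail
    refine List.isChain_cons_cons.mpr ⟨hvt, List.isChain_cons_cons.mpr ⟨htw, htail.cons ?_⟩⟩
    intro y hy
    have hy' := List.mem_of_mem_head? hy
    simp only [List.mem_append, List.mem_singleton] at hy'
    exact hws y (by rw [Cycle.mem_coe_iff]; grind)

theorem exists_cycle_length_succ [Fintype V] (hasymm : ∀ a b, r a b → ¬ r b a)
    (htotal : ∀ a b, a ≠ b → r a b ∨ r b a) (hstrong : ∀ a b, Relation.ReflTransGen r a b)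
    {s : Cycle V} (hnd : s.Nodup) (hch : s.Chain r) {v : V} (hv : v ∈ s)
    (hlen : s.length < Fintype.card V) :
    ∃ s' : Cycle V, s'.Nodup ∧ s'.Chain r ∧ s'.length = s.length + 1 ∧ v ∈ s' := by
  obtain ⟨u, hu⟩ := Cycle.exists_notMem_of_length_lt hlen
  by_cases hins : ∃ u ∉ s, ∃ x ∈ s, ∃ y ∈ s, r x u ∧ r u y
  · obtain ⟨u, hu, x, hx, y, hy, hxu, huy⟩ := hins
    obtain ⟨s', hnd', hch', hlen', hss'⟩ := exists_cycle_insert htotal hnd hch hu hx hy hxu huy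
    exact ⟨s', hnd', hch', hlen', hss' v hv⟩
  push Not at hins
  have hsplit : ∀ x ∉ s, (∀ y ∈ s, r x y) ∨ (∀ y ∈ s, r y x) := by
    intro x hx
    by_cases hin : ∃ y ∈ s, r y x
    · obtain ⟨y, hy, hyx⟩ := hin
      exact .inr fun z hz => (htotal z x (by rintro rfl; exact hx hz)).resolve_right
        (hins x hx y hy z hz hyx)
    · push Not at hin
      exact .inl fun z hz => (htotal x z (by rintro rfl; exact hx hz)).resolve_right (hin z hz)
  obtain ⟨t, w, ht, hw, hst, hws, htw⟩ :=
    exists_dominated_rel_dominating hasymm hstrong (C := {x | x ∈ s}) hv hu hsplit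
  exact exists_cycle_replace_succ hasymm hnd hch hv ht hw (hst v hv) htw hws

theorem exists_cycle_of_length [Fintype V] (hasymm : ∀ a b, r a b → ¬ r b a)
    (htotal : ∀ a b, a ≠ b → r a b ∨ r b a) (hstrong : ∀ a b, Relation.ReflTransGen r a b)
    (v : V) {ℓ : ℕ} (h3 : 3 ≤ ℓ) (hℓ : ℓ ≤ Fintype.card V) :
    ∃ s : Cycle V, s.Nodup ∧ s.Chain r ∧ s.length = ℓ ∧ v ∈ s := by
  induction ℓ, h3 using Nat.le_induction with
  | base =>
    obtain ⟨u, hu⟩ := Fintype.exists_ne_of_one_lt_card (by omega) v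
    exact exists_three_cycle hasymm htotal hstrong hu.symm
  | succ ℓ _ ih =>
    obtain ⟨s, hnd, hch, rfl, hv⟩ := ih (by omega)
    exact exists_cycle_length_succ hasymm htotal hstrong hnd hch hv (by omega)

end Tournament

theorem moon_vertex_pancyclic_general
    {V : Type*} [Fintype V] (r : V → V → Prop)
    (hirr : ∀ v, ¬ r v v)
    (htour : ∀ u v : V, u ≠ v → Xor' (r u v) (r v u))
    (hstrong : ∀ u v : V, Relation.ReflTransGen r u v)
    (n : ℕ) (hcard : Fintype.card V = n) :
    ∀ v : V, ∀ ℓ : ℕ, 3 ≤ ℓ → ℓ ≤ n →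
      ∃ c : ZMod ℓ → V, Function.Injective c ∧
        (∀ i, r (c i) (c (i + 1))) ∧ ∃ i, c i = v := by
  have hasymm : ∀ a b, r a b → ¬ r b a := fun a b hab hba => by
    by_cases h : a = b
    · exact hirr a (h ▸ hab)
    · exact (htour a b h).elim (fun h => h.2 hba) (fun h => h.2 hab)
  have htotal : ∀ a b, a ≠ b → r a b ∨ r b a := fun a b h => Xor.or (htour a b h)
  intro v ℓ hℓ3 hℓn
  obtain ⟨s, hnd, hch, hlen, hv⟩ :=
    exists_cycle_of_length hasymm htotal hstrong v hℓ3 (hcard ▸ hℓn)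
  induction s using Quotient.inductionOn' with | h l => ?_
  rw [Cycle.mk''_eq_coe, Cycle.length_coe] at hlen
  subst hlen
  obtain ⟨c, hinj, hrel, hmem⟩ := hch.exists_injective_zmod hnd (by omega)
  exact ⟨c, hinj, hrel, hmem v hv⟩

/-- Moon's theorem: every vertex of a strongly connected tournament on
$n ≥ 3$ vertices lies on directed cycles of every length from $3$ to $n$. -/
theorem moon_vertex_pancyclic
    {V : Type*} [Fintype V] (r : V → V → Prop)
    (hirr : ∀ v, ¬ r v v)
    (htour : ∀ u v : V, u ≠ v → Xor' (r u v) (r v u))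
    (hstrong : ∀ u v : V, Relation.ReflTransGen r u v)
    (n : ℕ) (hcard : Fintype.card V = n) (hn : 3 ≤ n) :
    ∀ v : V, ∀ ℓ : ℕ, 3 ≤ ℓ → ℓ ≤ n →
      ∃ c : ZMod ℓ → V, Function.Injective c ∧
        (∀ i, r (c i) (c (i + 1))) ∧ ∃ i, c i = v :=
  moon_vertex_pancyclic_general r hirr htour hstrong n hcard
end

section
/- Let T be a strongly connected k-partite tournament with partite sets V_1,…,V_k, where V_i = {x_i, y_i} for i ∈ [1,t] (t ≥ 1) and V_j is a singleton for j ∈ [t+1,k]. Suppose |V(T)| ≥ 4 and for every i ∈ [1,t] the out-neighborhoods of x_i and y_i are disjoint. Then every vertex of T lies on directed cycles of every length from 4 to |V(T)|. -/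
section
variable {V : Type*}

private lemma negone_cast {ℓ : ℕ} [NeZero ℓ] (h : 1 ≤ ℓ) : ((ℓ - 1 : ℕ) : ZMod ℓ) = -1 := by
  have h0 : (((ℓ - 1) + 1 : ℕ) : ZMod ℓ) = 0 := by
    rw [Nat.sub_add_cancel h]; exact ZMod.natCast_self ℓ
  push_cast at h0
  exact eq_neg_of_add_eq_zero_left h0

private lemma negtwo_cast {ℓ : ℕ} [NeZero ℓ] (h : 2 ≤ ℓ) : ((ℓ - 2 : ℕ) : ZMod ℓ) = -2 := by
  have h0 : (((ℓ - 2) + 2 : ℕ) : ZMod ℓ) = 0 := by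
    rw [Nat.sub_add_cancel h]; exact ZMod.natCast_self ℓ
  push_cast at h0
  exact eq_neg_of_add_eq_zero_left h0

private lemma insLemma (r : V → V → Prop) {ℓ : ℕ} (h3 : 3 ≤ ℓ)
    (c : ZMod ℓ → V) (hinj : Function.Injective c)
    (harc : ∀ i, r (c i) (c (i+1))) (u : V) (hu : ∀ i, c i ≠ u)
    (e : ZMod ℓ) (h1 : r (c e) u) (h2 : r u (c (e+1))) :
    ∃ c' : ZMod (ℓ+1) → V, Function.Injective c' ∧ (∀ i, r (c' i) (c' (i+1))) ∧
      ∀ i, ∃ j, c' j = c i := by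
  haveI : NeZero ℓ := ⟨by omega⟩
  set c' : ZMod (ℓ+1) → V := fun j => if j.val < ℓ then c (e + 1 + (j.val : ZMod ℓ)) else u with hc'
  have hvlt : ∀ j : ZMod (ℓ+1), j.val < ℓ + 1 := fun j => ZMod.val_lt j
  have hsucc : ∀ j : ZMod (ℓ+1), (j + 1).val = (j.val + 1) % (ℓ + 1) := by
    intro j
    rw [ZMod.val_add, ZMod.val_one_eq_one_mod]
    have : 1 % (ℓ + 1) = 1 := Nat.mod_eq_of_lt (by omega)
    rw [this]
  refine ⟨c', ?_, ?_, ?_⟩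
  · intro j1 j2 h
    by_cases hj1 : j1.val < ℓ <;> by_cases hj2 : j2.val < ℓ <;>
      simp only [hc', hj1, hj2, if_pos, if_neg, if_true, if_false] at h
    · have h2' : ((j1.val : ZMod ℓ)) = ((j2.val : ZMod ℓ)) := add_left_cancel (hinj h)
      have : j1.val = j2.val := by
        rw [← ZMod.val_cast_of_lt hj1, ← ZMod.val_cast_of_lt hj2, h2']
      exact ZMod.val_injective _ this
    · exact absurd h (hu _)
    · exact absurd h.symm (hu _)
    · have : j1.val = j2.val := by have := hvlt j1; have := hvlt j2; omega
      exact ZMod.val_injective _ this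
  · intro j
    have hj := hvlt j
    have hs := hsucc j
    rcases lt_trichotomy (j.val + 1) ℓ with hlt | heq | hgt
    · -- j.val + 1 < ℓ
      have hjlt : j.val < ℓ := by omega
      have hs' : (j+1).val = j.val + 1 := by
        rw [hs]; exact Nat.mod_eq_of_lt (by omega)
      simp only [hc', if_pos hjlt, hs', if_pos hlt]
      have : ((j.val + 1 : ℕ) : ZMod ℓ) = (j.val : ZMod ℓ) + 1 := by push_cast; ring
      rw [this, ← add_assoc]
      exact harc _
    · -- j.val = ℓ - 1
      have hjlt : j.val < ℓ := by omega
      have hs' : (j+1).val = ℓ := by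
        rw [hs]; rw [heq]; exact Nat.mod_eq_of_lt (by omega)
      have hnl : ¬ (j+1).val < ℓ := by omega
      simp only [hc', if_pos hjlt, if_neg hnl]
      have hjv : (j.val : ZMod ℓ) = ((ℓ - 1 : ℕ) : ZMod ℓ) := by
        congr 1; omega
      rw [hjv, negone_cast (by omega)]
      have : e + 1 + -1 = e := by ring
      rw [this]; exact h1
    · -- j.val = ℓ
      have hjv : j.val = ℓ := by omega
      have hnl : ¬ j.val < ℓ := by omega
      have hs' : (j+1).val = 0 := by
        rw [hs, hjv]; exact Nat.mod_self _
      have hlt0 : (j+1).val < ℓ := by omega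
      simp only [hc', if_neg hnl, if_pos hlt0, hs']
      have : ((0 : ℕ) : ZMod ℓ) = 0 := by norm_num
      rw [this, add_zero]
      exact h2
  · intro i
    refine ⟨(((i - e - 1).val : ℕ) : ZMod (ℓ+1)), ?_⟩
    have hv : (i - e - 1).val < ℓ := ZMod.val_lt _
    have hcast : ((((i - e - 1).val : ℕ) : ZMod (ℓ+1))).val = (i - e - 1).val :=
      ZMod.val_cast_of_lt (by omega)
    simp only [hc', hcast, if_pos hv]
    have hri : ((((i - e - 1).val : ℕ)) : ZMod ℓ) = i - e - 1 := ZMod.natCast_rightInverse _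
    rw [hri]
    congr 1
    ring
end

section
variable {V : Type*}

private lemma replLemma (r : V → V → Prop) {ℓ : ℕ} (h3 : 3 ≤ ℓ)
    (c : ZMod ℓ → V) (hinj : Function.Injective c)
    (harc : ∀ i, r (c i) (c (i+1))) (a b : V)
    (ha : ∀ i, c i ≠ a) (hb : ∀ i, c i ≠ b) (hab : a ≠ b)
    (d : ZMod ℓ) (h1 : r (c (d - 1)) a) (h2 : r a b) (h3' : r b (c (d + 1))) :
    ∃ c' : ZMod (ℓ+1) → V, Function.Injective c' ∧ (∀ i, r (c' i) (c' (i+1))) ∧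
      ∀ i, i ≠ d → ∃ j, c' j = c i := by
  haveI : NeZero ℓ := ⟨by omega⟩
  set c' : ZMod (ℓ+1) → V := fun j =>
    if j.val < ℓ - 1 then c (d + 1 + (j.val : ZMod ℓ))
    else if j.val = ℓ - 1 then a else b with hc'
  have hvlt : ∀ j : ZMod (ℓ+1), j.val < ℓ + 1 := fun j => ZMod.val_lt j
  have hsucc : ∀ j : ZMod (ℓ+1), (j + 1).val = (j.val + 1) % (ℓ + 1) := by
    intro j
    rw [ZMod.val_add, ZMod.val_one_eq_one_mod]
    have : 1 % (ℓ + 1) = 1 := Nat.mod_eq_of_lt (by omega)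
    rw [this]
  refine ⟨c', ?_, ?_, ?_⟩
  · intro j1 j2 h
    by_cases hj1 : j1.val < ℓ - 1 <;> by_cases hj2 : j2.val < ℓ - 1
    · simp only [hc', if_pos hj1, if_pos hj2] at h
      have h2' : ((j1.val : ZMod ℓ)) = ((j2.val : ZMod ℓ)) := add_left_cancel (hinj h)
      have : j1.val = j2.val := by
        rw [← ZMod.val_cast_of_lt (show j1.val < ℓ by omega),
          ← ZMod.val_cast_of_lt (show j2.val < ℓ by omega), h2']
      exact ZMod.val_injective _ this
    · simp only [hc', if_pos hj1, if_neg hj2] at h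
      by_cases he : j2.val = ℓ - 1 <;> simp only [he, if_pos, if_neg, if_true, if_false] at h
      · exact absurd h (ha _)
      · exact absurd h (hb _)
    · simp only [hc', if_pos hj2, if_neg hj1] at h
      by_cases he : j1.val = ℓ - 1 <;> simp only [he, if_pos, if_neg, if_true, if_false] at h
      · exact absurd h.symm (ha _)
      · exact absurd h.symm (hb _)
    · by_cases he1 : j1.val = ℓ - 1 <;> by_cases he2 : j2.val = ℓ - 1 <;>
        simp only [hc', if_neg hj1, if_neg hj2, he1, he2, if_pos, if_neg, if_true,
          if_false] at h ⊢
      · exact ZMod.val_injective _ (he1.trans he2.symm)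
      · exact absurd h hab
      · exact absurd h.symm hab
      · have : j1.val = j2.val := by have := hvlt j1; have := hvlt j2; omega
        exact ZMod.val_injective _ this
  · intro j
    have hj := hvlt j
    have hs := hsucc j
    rcases (show j.val + 1 < ℓ - 1 ∨ j.val + 1 = ℓ - 1 ∨ j.val = ℓ - 1 ∨ j.val = ℓ by omega)
      with hlt | heq | heq | heq
    · have hjlt : j.val < ℓ - 1 := by omega
      have hs' : (j+1).val = j.val + 1 := by
        rw [hs]; exact Nat.mod_eq_of_lt (by omega)
      simp only [hc', if_pos hjlt, hs', if_pos hlt]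
      have : ((j.val + 1 : ℕ) : ZMod ℓ) = (j.val : ZMod ℓ) + 1 := by push_cast; ring
      rw [this, ← add_assoc]
      exact harc _
    · -- j.val = ℓ - 2, next is a
      have hjlt : j.val < ℓ - 1 := by omega
      have hs' : (j+1).val = ℓ - 1 := by
        rw [hs, heq]; exact Nat.mod_eq_of_lt (by omega)
      simp only [hc', if_pos hjlt, hs', if_neg (show ¬ (ℓ-1) < ℓ-1 by omega), if_pos rfl]
      have hjv : (j.val : ZMod ℓ) = ((ℓ - 2 : ℕ) : ZMod ℓ) := by congr 1; omega
      rw [hjv, negtwo_cast (by omega)]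
      have : d + 1 + -2 = d - 1 := by ring
      rw [this]; exact h1
    · -- j.val = ℓ - 1 : from a to b
      have hs' : (j+1).val = ℓ := by
        rw [hs, heq]
        have : ℓ - 1 + 1 = ℓ := by omega
        rw [this]; exact Nat.mod_eq_of_lt (by omega)
      simp only [hc', if_neg (show ¬ j.val < ℓ-1 by omega), if_pos heq, hs',
        if_neg (show ¬ ℓ < ℓ-1 by omega), if_neg (show ¬ ℓ = ℓ-1 by omega)]
      exact h2
    · -- j.val = ℓ : from b to c (d+1)
      have hs' : (j+1).val = 0 := by rw [hs, heq]; exact Nat.mod_self _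
      simp only [hc', if_neg (show ¬ j.val < ℓ-1 by omega),
        if_neg (show ¬ j.val = ℓ-1 by omega), hs', if_pos (show 0 < ℓ-1 by omega)]
      have : ((0 : ℕ) : ZMod ℓ) = 0 := by norm_num
      rw [this, add_zero]
      exact h3'
  · intro i hid
    have hv : (i - d - 1).val < ℓ := ZMod.val_lt _
    have hne : (i - d - 1).val ≠ ℓ - 1 := by
      intro hcon
      apply hid
      have : i - d - 1 = ((ℓ - 1 : ℕ) : ZMod ℓ) := by
        rw [← hcon]; exact (ZMod.natCast_rightInverse _).symm
      rw [negone_cast (by omega)] at this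
      linear_combination this
    refine ⟨(((i - d - 1).val : ℕ) : ZMod (ℓ+1)), ?_⟩
    have hcast : ((((i - d - 1).val : ℕ) : ZMod (ℓ+1))).val = (i - d - 1).val :=
      ZMod.val_cast_of_lt (by omega)
    simp only [hc', hcast, if_pos (show (i - d - 1).val < ℓ - 1 by omega)]
    have hri : ((((i - d - 1).val : ℕ)) : ZMod ℓ) = i - d - 1 := ZMod.natCast_rightInverse _
    rw [hri]
    congr 1
    ring

end

section
variable {V : Type*} [Fintype V] [DecidableEq V]

private lemma extLemma {k : ℕ} (p : V → Fin k) (r : V → V → Prop)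
    (hsame : ∀ u v : V, p u = p v → ¬ r u v)
    (hdiff : ∀ u v : V, p u ≠ p v → Xor' (r u v) (r v u))
    (hfib : ∀ i : Fin k, (Finset.univ.filter fun v => p v = i).card ≤ 2)
    (houtdisj : ∀ x y : V, x ≠ y → p x = p y → ∀ z : V, ¬ (r x z ∧ r y z))
    (hstrong : ∀ u v : V, Relation.ReflTransGen r u v)
    {ℓ : ℕ} (h3 : 3 ≤ ℓ) (hlt : ℓ < Fintype.card V)
    (c : ZMod ℓ → V) (hinj : Function.Injective c)
    (harc : ∀ i, r (c i) (c (i+1))) (v : V) (hv : ∃ i, c i = v) :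
    ∃ c' : ZMod (ℓ+1) → V, Function.Injective c' ∧ (∀ i, r (c' i) (c' (i+1))) ∧
      ∃ j, c' j = v := by
  haveI : NeZero ℓ := ⟨by omega⟩
  have hne : ∀ x y : V, r x y → p x ≠ p y := fun x y h hp => hsame x y hp h
  have hnr : ∀ x y : V, r x y → ¬ r y x := by
    intro x y h
    rcases hdiff x y (hne x y h) with ⟨_, hb⟩ | ⟨_, hb⟩
    · exact hb
    · exact absurd h hb
  have hor : ∀ x y : V, p x ≠ p y → ¬ r x y → r y x := by
    intro x y hp h
    rcases hdiff x y hp with ⟨ha, _⟩ | ⟨ha, _⟩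
    · exact absurd ha h
    · exact ha
  have three : ∀ w x y : V, p x = p w → p y = p w → x ≠ w → y ≠ w → x = y := by
    intro w x y hx hy hxw hyw
    by_contra hxy
    have hmem : ({w, x, y} : Finset V) ⊆ Finset.univ.filter (fun z => p z = p w) := by
      intro z hz
      simp only [Finset.mem_insert, Finset.mem_singleton] at hz
      rcases hz with rfl | rfl | rfl <;> simp [hx, hy]
    have hcard : ({w, x, y} : Finset V).card = 3 := by
      rw [Finset.card_insert_of_notMem (by simp [Ne.symm hxw, Ne.symm hyw]),
        Finset.card_insert_of_notMem (by simp [hxy]), Finset.card_singleton]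
    have hle := Finset.card_le_card hmem
    rw [hcard] at hle
    have := hfib (p w)
    omega
  have houtside : ∃ u, ∀ i, c i ≠ u := by
    by_contra hcon
    push_neg at hcon
    have hsurj' : Function.Surjective c := fun u => hcon u
    have hcle := Fintype.card_le_of_surjective c hsurj'
    rw [ZMod.card] at hcle
    omega
  by_cases hins : ∃ u, (∀ i, c i ≠ u) ∧ ∃ e, r (c e) u ∧ r u (c (e+1))
  · obtain ⟨u, hu, e, he1, he2⟩ := hins
    obtain ⟨c', h1, h2, h3c⟩ := insLemma r h3 c hinj harc u hu e he1 he2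
    obtain ⟨iv, hiv⟩ := hv
    obtain ⟨j, hj⟩ := h3c iv
    exact ⟨c', h1, h2, j, hj.trans hiv⟩
  · push_neg at hins
    -- hins : ∀ u, (∀ i, c i ≠ u) → ∀ e, r (c e) u → ¬ r u (c (e+1))
    have hProp : ∀ u, (∀ i, c i ≠ u) → ∀ i0, p (c i0) ≠ p u → r (c i0) u →
        ∀ i, p (c i) ≠ p u → r (c i) u := by
      intro u hu i0 hp0 hr0
      have step : ∀ m : ℕ, p (c (i0 + (m : ZMod ℓ))) ≠ p u → r (c (i0 + (m : ZMod ℓ))) u := by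
        intro m
        induction m with
        | zero => simp only [Nat.cast_zero, add_zero]; exact fun _ => hr0
        | succ m ih =>
          have hrw : i0 + ((m+1 : ℕ) : ZMod ℓ) = (i0 + (m : ZMod ℓ)) + 1 := by
            push_cast; ring
          rw [hrw]
          intro hpadj
          by_cases hpp : p (c (i0 + (m : ZMod ℓ))) = p u
          · have hnd := houtdisj u (c (i0 + (m : ZMod ℓ)))
              (Ne.symm (hu _)) hpp.symm (c ((i0 + (m : ZMod ℓ)) + 1))
            have hnu : ¬ r u (c ((i0 + (m : ZMod ℓ)) + 1)) := fun hh => hnd ⟨hh, harc _⟩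
            exact hor _ _ (Ne.symm hpadj) hnu
          · have hri := ih hpp
            have hnu := hins u hu (i0 + (m : ZMod ℓ)) hri
            exact hor _ _ (Ne.symm hpadj) hnu
      intro i hpi
      have hrw : i = i0 + (((i - i0).val : ℕ) : ZMod ℓ) := by
        rw [ZMod.natCast_rightInverse _]; ring
      rw [hrw] at hpi ⊢
      exact step _ hpi
    have hDomOrDoms : ∀ u, (∀ i, c i ≠ u) →
        (∀ i, p (c i) ≠ p u → r (c i) u) ∨ (∀ i, p (c i) ≠ p u → r u (c i)) := by
      intro u hu
      by_cases hex : ∃ i0, p (c i0) ≠ p u ∧ r (c i0) u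
      · obtain ⟨i0, h1, h2⟩ := hex
        exact Or.inl (hProp u hu i0 h1 h2)
      · push_neg at hex
        exact Or.inr (fun i hpi => hor _ _ hpi (hex i hpi))
    have hDomsAdj : ∀ b, (∀ i, c i ≠ b) → (∀ i, p (c i) ≠ p b → r b (c i)) →
        ∀ i, p (c i) ≠ p b := by
      intro b hb hdoms j
      by_contra hpj
      have hone : (1 : ZMod ℓ) ≠ 0 := by
        intro hcon
        have h1v : (1 : ZMod ℓ).val = 1 := by
          rw [ZMod.val_one_eq_one_mod]; exact Nat.mod_eq_of_lt (by omega)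
        rw [hcon] at h1v
        simp [ZMod.val_zero] at h1v
      have hne1 : c (j+1) ≠ c j := by
        intro hcc
        have := hinj hcc
        exact hone (by linear_combination this)
      have hadj : p (c (j+1)) ≠ p b := by
        intro hq
        exact hne1 (three b (c (j+1)) (c j) hq hpj (hb _) (hb _))
      have h1 := hdoms (j+1) hadj
      exact houtdisj b (c j) (Ne.symm (hb j)) hpj.symm (c (j+1)) ⟨h1, harc j⟩
    have hOex : ∃ b, (∀ i, c i ≠ b) ∧ (∀ i, p (c i) ≠ p b → r b (c i)) ∧
        ¬(∀ i, p (c i) ≠ p b → r (c i) b) := by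
      by_contra hno
      push_neg at hno
      have hAllDom : ∀ u, (∀ i, c i ≠ u) → ∀ i, p (c i) ≠ p u → r (c i) u := by
        intro u hu
        rcases hDomOrDoms u hu with h | h
        · exact h
        · exact hno u hu h
      obtain ⟨u0, hu0⟩ := houtside
      have hreach : ∀ w, Relation.ReflTransGen r u0 w → ∀ i, c i ≠ w := by
        intro w hw
        induction hw with
        | refl => exact hu0
        | @tail y w' hab hbc ih =>
          intro i hci
          by_cases hp : p y = p (c i)
          · exact hsame y (c i) hp (hci ▸ hbc)
          · have hra := hAllDom y ih i (fun hq => hp hq.symm)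
            exact hnr _ _ hra (hci ▸ hbc)
      exact hreach (c 0) (hstrong u0 (c 0)) 0 rfl
    obtain ⟨b, hbout, hbdoms, hbndom⟩ := hOex
    have haex : ∃ a b', (∀ i, c i ≠ a) ∧ (∀ i, c i ≠ b') ∧
        (∀ i, p (c i) ≠ p a → r (c i) a) ∧ (∀ i, r b' (c i)) ∧ r a b' := by
      by_contra hno
      push_neg at hno
      have hreach : ∀ w, Relation.ReflTransGen r (c 0) w →
          ¬((∀ i, c i ≠ w) ∧ (∀ i, p (c i) ≠ p w → r w (c i)) ∧
            ¬(∀ i, p (c i) ≠ p w → r (c i) w)) := by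
        intro w hw
        induction hw with
        | refl => rintro ⟨hout, -, -⟩; exact hout 0 rfl
        | @tail y w' hab hbc ih =>
          rintro ⟨hout, hdoms, hndom⟩
          have hwadj := hDomsAdj w' hout hdoms
          have hwall : ∀ i, r w' (c i) := fun i => hdoms i (hwadj i)
          by_cases hyout : ∀ i, c i ≠ y
          · rcases hDomOrDoms y hyout with hyDom | hyDoms
            · exact hno y w' hyout hout hyDom hwall hbc
            · by_cases hyDomd : ∀ i, p (c i) ≠ p y → r (c i) y
              · exact hno y w' hyout hout hyDomd hwall hbc
              · exact ih ⟨hyout, hyDoms, hyDomd⟩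
          · push_neg at hyout
            obtain ⟨i, hci⟩ := hyout
            exact hnr _ _ (hwall i) (hci ▸ hbc)
      exact hreach b (hstrong (c 0) b) ⟨hbout, hbdoms, hbndom⟩
    obtain ⟨a, b', haout, hb'out, hadom, hb'all, hab'⟩ := haex
    have hab_ne : a ≠ b' := fun h => hsame a b' (by rw [h]) hab'
    obtain ⟨iv, hiv⟩ := hv
    have hdchoice : ∃ d : ZMod ℓ, c d ≠ v ∧ p (c (d - 1)) ≠ p a := by
      by_contra hcon
      push_neg at hcon
      have hdis : ∀ d : ZMod ℓ, c d = v ∨ p (c (d-1)) = p a := by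
        intro d
        by_cases h : c d = v
        · exact Or.inl h
        · exact Or.inr (hcon d h)
      have huniq1 : ∀ d1 d2 : ZMod ℓ, c d1 = v → c d2 = v → d1 = d2 :=
        fun d1 d2 h1 h2 => hinj (h1.trans h2.symm)
      have huniq2 : ∀ d1 d2 : ZMod ℓ, p (c (d1-1)) = p a → p (c (d2-1)) = p a → d1 = d2 := by
        intro d1 d2 h1 h2
        have hcc := three a (c (d1-1)) (c (d2-1)) h1 h2 (haout _) (haout _)
        have := hinj hcc
        linear_combination this
      have h1lt : (1 : ZMod ℓ).val = 1 := by
        rw [ZMod.val_one_eq_one_mod]; exact Nat.mod_eq_of_lt (by omega)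
      have h2cast : (2 : ZMod ℓ) = ((2 : ℕ) : ZMod ℓ) := by push_cast; ring
      have h2lt : (2 : ZMod ℓ).val = 2 := by
        rw [h2cast]; exact ZMod.val_cast_of_lt (by omega)
      have e01 : (0 : ZMod ℓ) ≠ (1 : ZMod ℓ) := by
        intro h; rw [← h] at h1lt; simp [ZMod.val_zero] at h1lt
      have e02 : (0 : ZMod ℓ) ≠ (2 : ZMod ℓ) := by
        intro h; rw [← h] at h2lt; simp [ZMod.val_zero] at h2lt
      have e12 : (1 : ZMod ℓ) ≠ (2 : ZMod ℓ) := by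
        intro h; rw [← h] at h2lt; omega
      rcases hdis (0 : ZMod ℓ) with h0 | h0 <;>
        rcases hdis (1 : ZMod ℓ) with h1 | h1 <;>
        rcases hdis (2 : ZMod ℓ) with h2 | h2
      · exact e01 (huniq1 _ _ h0 h1)
      · exact e01 (huniq1 _ _ h0 h1)
      · exact e02 (huniq1 _ _ h0 h2)
      · exact e12 (huniq2 _ _ h1 h2)
      · exact e12 (huniq1 _ _ h1 h2)
      · exact e02 (huniq2 _ _ h0 h2)
      · exact e01 (huniq2 _ _ h0 h1)
      · exact e01 (huniq2 _ _ h0 h1)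
    obtain ⟨d, hdv, hdadj⟩ := hdchoice
    have hra := hadom (d-1) hdadj
    have hrb := hb'all (d+1)
    obtain ⟨c', hc'inj, hc'arc, hc'cov⟩ :=
      replLemma r h3 c hinj harc a b' haout hb'out hab_ne d hra hab' hrb
    have hivd : iv ≠ d := fun h => hdv (by rw [← h]; exact hiv)
    obtain ⟨j, hj⟩ := hc'cov iv hivd
    exact ⟨c', hc'inj, hc'arc, j, hj.trans hiv⟩

end
section
variable {V : Type*}

private lemma cyc4aux (r : V → V → Prop) (v a y b : V)
    (h1 : r v a) (h2 : r a y) (h3 : r y b) (h4 : r b v)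
    (d1 : v ≠ a) (d2 : v ≠ y) (d3 : v ≠ b) (d4 : a ≠ y) (d5 : a ≠ b) (d6 : y ≠ b) :
    ∃ c : ZMod 4 → V, Function.Injective c ∧ (∀ i, r (c i) (c (i+1))) ∧ ∃ i, c i = v := by
  refine ⟨fun i => if i = 0 then v else if i = 1 then a else if i = 2 then y else b,
    ?_, ?_, 0, by norm_num⟩
  · have hall : ∀ i : ZMod 4, i = 0 ∨ i = 1 ∨ i = 2 ∨ i = 3 := by decide
    intro i j h
    rcases hall i with rfl | rfl | rfl | rfl <;> rcases hall j with rfl | rfl | rfl | rfl <;>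
      simp_all (config := { decide := true })
  · have hall : ∀ i : ZMod 4, i = 0 ∨ i = 1 ∨ i = 2 ∨ i = 3 := by decide
    intro i
    rcases hall i with rfl | rfl | rfl | rfl <;>
      simp_all (config := { decide := true })

private lemma cyc3aux (r : V → V → Prop) (v a y : V)
    (h1 : r v a) (h2 : r a y) (h3 : r y v)
    (d1 : v ≠ a) (d2 : v ≠ y) (d4 : a ≠ y) :
    ∃ c : ZMod 3 → V, Function.Injective c ∧ (∀ i, r (c i) (c (i+1))) ∧ ∃ i, c i = v := by
  refine ⟨fun i => if i = 0 then v else if i = 1 then a else y, ?_, ?_, 0, by norm_num⟩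
  · have hall : ∀ i : ZMod 3, i = 0 ∨ i = 1 ∨ i = 2 := by decide
    intro i j h
    rcases hall i with rfl | rfl | rfl <;> rcases hall j with rfl | rfl | rfl <;>
      simp_all (config := { decide := true })
  · have hall : ∀ i : ZMod 3, i = 0 ∨ i = 1 ∨ i = 2 := by decide
    intro i
    rcases hall i with rfl | rfl | rfl <;>
      simp_all (config := { decide := true })

end

/-- Every vertex of a strongly connected multipartite tournament with parts of
size at most 2 (at least one of size 2), where vertices in a common part have
disjoint out-neighborhoods, lies on directed cycles of every length from 4 to
$|V(T)|$. -/
theorem multipartite_tournament_vertex_pancyclic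
    {V : Type*} [Fintype V] [DecidableEq V]
    (k : ℕ) (p : V → Fin k) (hsurj : Function.Surjective p)
    (r : V → V → Prop)
    (hsame : ∀ u v : V, p u = p v → ¬ r u v)
    (hdiff : ∀ u v : V, p u ≠ p v → Xor' (r u v) (r v u))
    (hfib : ∀ i : Fin k, (Finset.univ.filter fun v => p v = i).card ≤ 2)
    (ht : ∃ i : Fin k, (Finset.univ.filter fun v => p v = i).card = 2)
    (houtdisj : ∀ x y : V, x ≠ y → p x = p y → ∀ z : V, ¬ (r x z ∧ r y z))
    (hstrong : ∀ u v : V, Relation.ReflTransGen r u v)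
    (hV : 4 ≤ Fintype.card V) :
    ∀ v : V, ∀ ℓ : ℕ, 4 ≤ ℓ → ℓ ≤ Fintype.card V →
      ∃ c : ZMod ℓ → V, Function.Injective c ∧
        (∀ i, r (c i) (c (i + 1))) ∧ ∃ i, c i = v := by
  intro v ℓ h4 hlen
  have hne : ∀ x y : V, r x y → p x ≠ p y := fun x y h hp => hsame x y hp h
  have hnr : ∀ x y : V, r x y → ¬ r y x := by
    intro x y h
    rcases hdiff x y (hne x y h) with ⟨_, hb⟩ | ⟨_, hb⟩
    · exact hb
    · exact absurd h hb
  have hor : ∀ x y : V, p x ≠ p y → ¬ r x y → r y x := by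
    intro x y hp h
    rcases hdiff x y hp with ⟨ha, _⟩ | ⟨ha, _⟩
    · exact absurd ha h
    · exact ha
  have hsink : ∀ x : V, ∃ z, r x z := by
    intro x
    obtain ⟨w, hw⟩ := Fintype.exists_ne_of_one_lt_card (by omega) x
    rcases (hstrong x w).cases_head with heq | ⟨z, hz, _⟩
    · exact absurd heq.symm hw
    · exact ⟨z, hz⟩
  have hsource : ∀ x : V, ∃ z, r z x := by
    intro x
    obtain ⟨w, hw⟩ := Fintype.exists_ne_of_one_lt_card (by omega) x
    rcases (hstrong w x).cases_tail with heq | ⟨z, _, hz⟩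
    · exact absurd heq (Ne.symm hw)
    · exact ⟨z, hz⟩
  have hbase : ∃ c : ZMod 4 → V, Function.Injective c ∧
      (∀ i, r (c i) (c (i + 1))) ∧ ∃ i, c i = v := by
    by_cases hpart : ∃ y, y ≠ v ∧ p y = p v
    · obtain ⟨y, hyv, hyp⟩ := hpart
      obtain ⟨a, hva⟩ := hsink v
      obtain ⟨b, hyb⟩ := hsink y
      have hav : a ≠ v := fun h => hsame v v rfl (h ▸ hva)
      have hay : a ≠ y := fun h => hsame v y hyp.symm (h ▸ hva)
      have hpa : p a ≠ p y := fun h => hsame v a (hyp.symm.trans h.symm) hva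
      have hray : r a y :=
        hor y a (fun h => hpa h.symm)
          (fun hya => houtdisj v y (Ne.symm hyv) hyp.symm a ⟨hva, hya⟩)
      have hbv : b ≠ v := fun h => hsame y v hyp (h ▸ hyb)
      have hby : b ≠ y := fun h => hsame y y rfl (h ▸ hyb)
      have hpb : p b ≠ p v := fun h => hsame y b (hyp.trans h.symm) hyb
      have hrbv : r b v :=
        hor v b (fun h => hpb h.symm)
          (fun hvb => houtdisj y v hyv hyp b ⟨hyb, hvb⟩)
      have hab : a ≠ b := fun h => hnr v a hva (h ▸ hrbv)
      exact cyc4aux r v a y b hva hray hyb hrbv (Ne.symm hav) (Ne.symm hyv) (Ne.symm hbv)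
        hay hab (Ne.symm hby)
    · push_neg at hpart
      obtain ⟨b0, hb0v⟩ := hsource v
      by_cases h3c : ∃ x z, r v x ∧ r z v ∧ r x z
      · obtain ⟨x, z, h1, h2, h3x⟩ := h3c
        have hxv : v ≠ x := fun h => hsame v x (by rw [h]) h1
        have hzv : v ≠ z := fun h => hsame z v (by rw [h]) h2
        have hxz : x ≠ z := fun h => hnr v x h1 (h ▸ h2)
        obtain ⟨c3, hc3i, hc3a, hc3v⟩ := cyc3aux r v x z h1 h3x h2 hxv hzv hxz
        have hext := extLemma p r hsame hdiff hfib houtdisj hstrong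
          (le_refl 3) (by omega) c3 hc3i hc3a v (by obtain ⟨i, hi⟩ := hc3v; exact ⟨i, hi⟩)
        exact hext
      · push_neg at h3c
        exfalso
        have hreach : ∀ w, Relation.ReflTransGen r v w → w = v ∨ r v w := by
          intro w hw
          induction hw with
          | refl => exact Or.inl rfl
          | @tail y w' hab hbc ih =>
            by_cases hwv : w' = v
            · exact Or.inl hwv
            · refine Or.inr ?_
              have hrvw : ¬ r w' v := by
                intro hwv'
                rcases ih with h | hry
                · exact hnr _ _ (h ▸ hbc) hwv'
                · exact h3c y w' hry hwv' hbc
              exact hor w' v (hpart w' hwv) hrvw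
        rcases hreach b0 (hstrong v b0) with rfl | hrv
        · exact hsame b0 b0 rfl hb0v
        · exact hnr v b0 hrv hb0v
  have main : ∀ m : ℕ, 4 ≤ m → m ≤ Fintype.card V →
      ∃ c : ZMod m → V, Function.Injective c ∧
        (∀ i, r (c i) (c (i + 1))) ∧ ∃ i, c i = v := by
    intro m hm
    induction m, hm using Nat.le_induction with
    | base => exact fun _ => hbase
    | succ n hn ih =>
      intro hle
      obtain ⟨c, h1, h2, h3c⟩ := ih (by omega)
      exact extLemma p r hsame hdiff hfib houtdisj hstrong (by omega) (by omega)
        c h1 h2 v h3c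
  exact main ℓ h4 hlen
end

section
/- Let G be an edge-colored complete graph containing no monochromatic triangle, let C be a properly colored cycle in G with a fixed cyclic orientation, and let v be a vertex of G not on C. If there is no properly colored cycle with vertex set V(C) ∪ {v}, then one of the following holds: (a) all edges from v to C have the same color; (b) col(vu) = col(uu^-) for every vertex u on C; (c) col(vu) = col(uu^+) for every vertex u on C. -/
/-- Reach every index of `ZMod ℓ` from a starting index by `+1` steps. -/
lemma pc_reach {ℓ : ℕ} [NeZero ℓ] (S : ZMod ℓ → Prop) (i0 : ZMod ℓ) (h0 : S i0)
    (hstep : ∀ j, S j → S (j + 1)) : ∀ j, S j := by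
  have key : ∀ n : ℕ, S (i0 + n) := by
    intro n
    induction n with
    | zero => simpa using h0
    | succ m ih =>
      have h : ((m + 1 : ℕ) : ZMod ℓ) = (m : ZMod ℓ) + 1 := by push_cast; ring
      rw [h, ← add_assoc]
      exact hstep _ ih
  intro j
  have := key (j - i0).val
  rwa [ZMod.natCast_rightInverse, add_sub_cancel] at this

/-- The key combinatorial lemma about the color sequences. -/
lemma pc_key {ℓ : ℕ} [NeZero ℓ] (a e : ZMod ℓ → ℕ)
    (hP : ∀ i, e i ≠ e (i + 1))
    (hN : ∀ i, a i = e (i - 1) ∨ a i = a (i + 1) ∨ a (i + 1) = e (i + 1))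
    (hT : ∀ i, ¬(a i = a (i + 1) ∧ a i = e i)) :
    (∃ x, ∀ i, a i = x) ∨ (∀ i, a i = e (i - 1)) ∨ (∀ i, a i = e i) := by
  by_cases hD : ∀ i, a i = a (i + 1)
  · left
    refine ⟨a 0, pc_reach (fun j => a j = a 0) 0 rfl ?_⟩
    intro j hj
    rw [← hD j, hj]
  · push_neg at hD
    obtain ⟨i0, hi0⟩ := hD
    rcases hN i0 with h | h | h
    · right; left
      -- backward propagation of S' m := a m = e (m-1) ∧ a (m-1) ≠ a m
      set S' : ZMod ℓ → Prop := fun m => a m = e (m - 1) ∧ a (m - 1) ≠ a m with hS'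
      have hback : ∀ m, S' m → S' (m - 1) := by
        rintro m ⟨hm1, hm2⟩
        have e1 : (m - 1) + 1 = m := sub_add_cancel m 1
        have e2 : (m - 1 - 1) + 1 = m - 1 := sub_add_cancel (m - 1) 1
        have hfst : a (m - 1) = e (m - 1 - 1) := by
          rcases hN (m - 1) with h' | h' | h'
          · exact h'
          · rw [e1] at h'; exact absurd h' hm2
          · rw [e1] at h'
            have := hP (m - 1)
            rw [e1] at this
            rw [hm1] at h'
            exact absurd h' this
        refine ⟨hfst, ?_⟩
        intro hcon
        have := hT (m - 1 - 1)
        rw [e2] at this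
        exact this ⟨hcon, hcon.trans hfst⟩
      have hstart : S' i0 := by
        refine ⟨h, ?_⟩
        intro hcon
        have := hT (i0 - 1)
        rw [sub_add_cancel i0 1] at this
        exact this ⟨hcon, hcon.trans h⟩
      have hall : ∀ m, S' m := by
        have := pc_reach (fun j => S' (-j)) (-i0) (by simpa using hstart)
          (fun j hj => by
            have h' := hback (-j) hj
            show S' (-(j + 1))
            have heq : -(j + 1) = -j - 1 := by ring
            rw [heq]; exact h')
        intro m
        have := this (-m)
        simpa using this
      exact fun i => (hall i).1
    · exact absurd h hi0
    · right; right
      set S : ZMod ℓ → Prop := fun j => a j = e j ∧ a j ≠ a (j + 1) with hS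
      have hstep : ∀ j, S j → S (j + 1) := by
        rintro j ⟨hj1, hj2⟩
        have hfst : a (j + 1) = e (j + 1) := by
          rcases hN j with h' | h' | h'
          · have hpe := hP (j - 1)
            rw [sub_add_cancel j 1] at hpe
            rw [hj1] at h'
            exact absurd h'.symm hpe
          · exact absurd h' hj2
          · exact h'
        refine ⟨hfst, ?_⟩
        intro hcon
        exact hT (j + 1) ⟨hcon, hfst⟩
      have hstart : S (i0 + 1) := by
        refine ⟨h, ?_⟩
        intro hcon
        exact hT (i0 + 1) ⟨hcon, h⟩
      have hall := pc_reach S (i0 + 1) hstart hstep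
      exact fun i => (hall i).1

/-- If the three insertion conditions hold at `i`, we can extend the cycle. -/
lemma pc_insert {V : Type*} (col : V → V → ℕ) (hsym : ∀ u v, col u v = col v u)
    {ℓ : ℕ} (hl : 3 ≤ ℓ) (c : ZMod ℓ → V) (hC : IsPCCycle col c)
    (v : V) (hv : v ∉ Set.range c) (i : ZMod ℓ)
    (h1 : col v (c i) ≠ col (c (i - 1)) (c i))
    (h2 : col v (c i) ≠ col v (c (i + 1)))
    (h3 : col v (c (i + 1)) ≠ col (c (i + 1)) (c (i + 1 + 1))) :
    ∃ c' : ZMod (ℓ + 1) → V, IsPCCycle col c' ∧ Set.range c' = Set.range c ∪ {v} := by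
  haveI : NeZero ℓ := ⟨by omega⟩
  haveI : Fact (1 < ℓ + 1) := ⟨by omega⟩
  set c' : ZMod (ℓ + 1) → V := fun k => if k.val = 0 then v else c (i + (k.val : ZMod ℓ)) with hc'
  have hvlt : ∀ k : ZMod (ℓ + 1), k.val < ℓ + 1 := fun k => ZMod.val_lt k
  have hv1 : ∀ k : ZMod (ℓ + 1), (k + 1).val = (k.val + 1) % (ℓ + 1) := by
    intro k; rw [ZMod.val_add, ZMod.val_one]
  -- cast injectivity on [1, ℓ]
  have hcinj : ∀ n1 n2 : ℕ, 1 ≤ n1 → n1 ≤ ℓ → 1 ≤ n2 → n2 ≤ ℓ →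
      (n1 : ZMod ℓ) = (n2 : ZMod ℓ) → n1 = n2 := by
    intro n1 n2 hn11 hn12 hn21 hn22 h
    have hm : n1 % ℓ = n2 % ℓ := (ZMod.natCast_eq_natCast_iff _ _ _).mp h
    rcases eq_or_lt_of_le hn12 with h1' | hlt1 <;> rcases eq_or_lt_of_le hn22 with h2' | hlt2
    · omega
    · rw [h1', Nat.mod_self, Nat.mod_eq_of_lt hlt2] at hm; omega
    · rw [h2', Nat.mod_self, Nat.mod_eq_of_lt hlt1] at hm; omega
    · rw [Nat.mod_eq_of_lt hlt1, Nat.mod_eq_of_lt hlt2] at hm; exact hm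
  refine ⟨c', ⟨?_, ?_⟩, ?_⟩
  · -- injectivity
    intro k1 k2 h
    by_cases hk1 : k1.val = 0 <;> by_cases hk2 : k2.val = 0
    · exact ZMod.val_injective _ (hk1.trans hk2.symm)
    · simp only [hc', hk1, hk2, if_pos, if_neg, if_true] at h
      exact absurd ⟨_, h.symm⟩ hv
    · simp only [hc', hk1, hk2, if_pos, if_neg, if_true] at h
      exact absurd ⟨_, h⟩ hv
    · simp only [hc', hk1, hk2, if_neg] at h
      have := hC.1 h
      have heq : ((k1.val : ℕ) : ZMod ℓ) = ((k2.val : ℕ) : ZMod ℓ) := by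
        have := add_left_cancel this; exact this
      have := hcinj k1.val k2.val (by omega) (by have := hvlt k1; omega)
        (by omega) (by have := hvlt k2; omega) heq
      exact ZMod.val_injective _ this
  · -- PC property
    intro k
    have hn : k.val < ℓ + 1 := hvlt k
    have e1 : (k + 1).val = (k.val + 1) % (ℓ + 1) := hv1 k
    have e2 : (k + 1 + 1).val = ((k.val + 1) % (ℓ + 1) + 1) % (ℓ + 1) := by
      rw [hv1 (k + 1), e1]
    have hk2eq : k + 2 = k + 1 + 1 := by ring
    rcases Nat.lt_or_ge k.val 1 with h0 | h0'
    · -- k.val = 0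
      have hk0 : k.val = 0 := by omega
      have ha1 : (k + 1).val = 1 := by rw [e1, hk0]; exact Nat.mod_eq_of_lt (by omega)
      have ha2 : (k + 1 + 1).val = 2 := by
        rw [e2, hk0, Nat.mod_eq_of_lt (show 0 + 1 < ℓ + 1 by omega)]
        exact Nat.mod_eq_of_lt (by omega)
      simp only [hc', hk2eq, hk0, ha1, ha2, if_pos, if_neg, one_ne_zero, OfNat.ofNat_ne_zero,
        Nat.cast_one, Nat.cast_ofNat, if_true]
      have : (2 : ZMod ℓ) = 1 + 1 := by ring
      rw [this, ← add_assoc]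
      exact h3
    rcases Nat.lt_or_ge k.val (ℓ - 1) with hmid | hhi
    · -- 1 ≤ k.val ≤ ℓ - 2
      have ha1 : (k + 1).val = k.val + 1 := by rw [e1]; exact Nat.mod_eq_of_lt (by omega)
      have ha2 : (k + 1 + 1).val = k.val + 2 := by
        rw [e2, Nat.mod_eq_of_lt (show k.val + 1 < ℓ + 1 by omega)]
        exact Nat.mod_eq_of_lt (by omega)
      simp only [hc', hk2eq, ha1, ha2, if_neg (by omega : ¬ k.val = 0),
        if_neg (by omega : ¬ k.val + 1 = 0), if_neg (by omega : ¬ k.val + 2 = 0)]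
      have r1 : i + ((k.val + 1 : ℕ) : ZMod ℓ) = i + (k.val : ZMod ℓ) + 1 := by push_cast; ring
      have r2 : i + ((k.val + 2 : ℕ) : ZMod ℓ) = i + (k.val : ZMod ℓ) + 2 := by push_cast; ring
      rw [r1, r2]
      exact hC.2 (i + (k.val : ZMod ℓ))
    rcases Nat.lt_or_ge k.val ℓ with hpen | hlast
    · -- k.val = ℓ - 1
      have hkv : k.val = ℓ - 1 := by omega
      have ha1 : (k + 1).val = ℓ := by
        rw [e1, hkv, show ℓ - 1 + 1 = ℓ by omega]; exact Nat.mod_eq_of_lt (by omega)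
      have ha2 : (k + 1 + 1).val = 0 := by
        rw [e2, hkv, show ℓ - 1 + 1 = ℓ by omega, Nat.mod_eq_of_lt (show ℓ < ℓ + 1 by omega),
          Nat.mod_self]
      simp only [hc', hk2eq, hkv, ha1, ha2, if_neg (by omega : ¬ ℓ - 1 = 0),
        if_neg (by omega : ¬ ℓ = 0), if_pos rfl, if_true, ite_true]
      have hm1 : ((ℓ - 1 : ℕ) : ZMod ℓ) = -1 := by
        have h' : ((ℓ - 1 : ℕ) : ZMod ℓ) + 1 = 0 := by
          have : ((ℓ - 1 : ℕ) : ZMod ℓ) + 1 = ((ℓ - 1 + 1 : ℕ) : ZMod ℓ) := by push_cast; ring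
          rw [this, show ℓ - 1 + 1 = ℓ by omega, ZMod.natCast_self]
        linear_combination h'
      rw [hm1, ZMod.natCast_self, add_zero]
      have : i + -1 = i - 1 := by ring
      rw [this]
      intro hcon
      apply h1
      rw [hsym v (c i), hcon]
    · -- k.val = ℓ
      have hkv : k.val = ℓ := by omega
      have ha1 : (k + 1).val = 0 := by rw [e1, hkv, Nat.mod_self]
      have ha2 : (k + 1 + 1).val = 1 := by
        rw [e2, hkv, Nat.mod_self]; exact Nat.mod_eq_of_lt (by omega)
      simp only [hc', hk2eq, hkv, ha1, ha2, if_neg (by omega : ¬ ℓ = 0), if_pos rfl,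
        if_neg (by omega : ¬ (1:ℕ) = 0), Nat.cast_one, eq_self_iff_true, ite_true]
      rw [ZMod.natCast_self, add_zero]
      intro hcon
      apply h2
      rw [hsym v (c i), hcon]
  · -- range
    apply Set.Subset.antisymm
    · rintro x ⟨k, rfl⟩
      by_cases hk : k.val = 0
      · simp only [hc', hk, if_pos rfl]; right; rfl
      · simp only [hc', hk, if_neg, ite_false]; left; exact ⟨_, rfl⟩
    · rintro x (⟨j, rfl⟩ | rfl)
      · set m := (j - i).val with hm
        have hmlt : m < ℓ := ZMod.val_lt _
        by_cases hm0 : m = 0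
        · have hji : j = i := by
            have : j - i = 0 := (ZMod.val_eq_zero _).mp hm0
            have := sub_eq_zero.mp this; exact this
          refine ⟨(ℓ : ZMod (ℓ + 1)), ?_⟩
          have hval : ((ℓ : ZMod (ℓ + 1))).val = ℓ := ZMod.val_cast_of_lt (by omega)
          simp only [hc', hval, if_neg (by omega : ¬ ℓ = 0), if_true, ite_true, ZMod.natCast_self, add_zero, hji]
        · refine ⟨(m : ZMod (ℓ + 1)), ?_⟩
          have hval : ((m : ZMod (ℓ + 1))).val = m := ZMod.val_cast_of_lt (by omega)
          simp only [hc', hval, if_neg hm0]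
          rw [hm, ZMod.natCast_rightInverse, add_sub_cancel]
      · exact ⟨0, by simp [hc', ZMod.val_zero]⟩


/-- If a PC cycle $C$ in an edge-colored complete graph with no monochromatic
triangle cannot be extended through an outside vertex $v$ to a PC cycle on
$V(C) ∪ \{v\}$, then the colors from $v$ to $C$ are constant, or all match the
predecessor edges, or all match the successor edges. -/
theorem pc_cycle_nonextendable_structure
    {V : Type*} (col : V → V → ℕ) (hsym : ∀ u v, col u v = col v u)
    (hmono : ¬ HasMonoTriangle col)
    (ℓ : ℕ) (hl : 3 ≤ ℓ) (c : ZMod ℓ → V) (hC : IsPCCycle col c)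
    (v : V) (hv : v ∉ Set.range c)
    (hnoext : ¬ ∃ c' : ZMod (ℓ + 1) → V, IsPCCycle col c' ∧
        Set.range c' = Set.range c ∪ {v}) :
    (∃ a : ℕ, ∀ i : ZMod ℓ, col v (c i) = a) ∨
    (∀ i : ZMod ℓ, col v (c i) = col (c i) (c (i - 1))) ∨
    (∀ i : ZMod ℓ, col v (c i) = col (c i) (c (i + 1))) := by
  haveI : NeZero ℓ := ⟨by omega⟩
  haveI : Fact (1 < ℓ) := ⟨by omega⟩
  set a : ZMod ℓ → ℕ := fun i => col v (c i) with ha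
  set e : ZMod ℓ → ℕ := fun i => col (c i) (c (i + 1)) with he
  have hP : ∀ i, e i ≠ e (i + 1) := by
    intro i
    have := hC.2 i
    rwa [show i + 2 = i + 1 + 1 by ring] at this
  have hne : ∀ i : ZMod ℓ, c i ≠ c (i + 1) := by
    intro i hcon
    have := hC.1 hcon
    have h1 : (1 : ZMod ℓ) = 0 := by
      have := add_left_cancel (a := i) (b := (0 : ZMod ℓ)) (c := 1) (by rw [add_zero]; exact this)
      exact this.symm
    exact one_ne_zero h1
  have hvnotc : ∀ i : ZMod ℓ, v ≠ c i := fun i hcon => hv ⟨i, hcon.symm⟩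
  have hT : ∀ i, ¬(a i = a (i + 1) ∧ a i = e i) := by
    rintro i ⟨ht1, ht2⟩
    exact hmono ⟨v, c i, c (i + 1), hvnotc i, hne i, hvnotc (i + 1), ht2, ht1⟩
  have hN : ∀ i, a i = e (i - 1) ∨ a i = a (i + 1) ∨ a (i + 1) = e (i + 1) := by
    intro i
    by_contra hcon
    push_neg at hcon
    obtain ⟨n1, n2, n3⟩ := hcon
    apply hnoext
    apply pc_insert col hsym hl c hC v hv i _ n2 n3
    simp only [he] at n1
    rwa [sub_add_cancel] at n1
  rcases pc_key a e hP hN hT with h | h | h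
  · exact Or.inl h
  · right; left
    intro i
    have hh := h i
    simp only [ha, he] at hh
    rw [sub_add_cancel] at hh
    rw [hh]; exact hsym _ _
  · right; right
    exact fun i => h i
end

section
/- Let G be a non-degenerate edge-colored complete graph K_n with n ≥ 4 containing no monochromatic triangle. Then every vertex of G is contained in a properly colored cycle of length 4. -/
/-- In a non-degenerate edge-colored $K_n$ ($n ≥ 4$) with no monochromatic
triangle, every vertex lies on a properly colored quadrangle. -/
theorem pc_quadrangle_of_non_degenerate
    (n : ℕ) (hn : 4 ≤ n) (col : Fin n → Fin n → ℕ)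
    (hsym : ∀ u v, col u v = col v u)
    (hmono : ¬ HasMonoTriangle col)
    (hnondeg : ¬ ∃ S : Set (Fin n), DegenSet col S) :
    ∀ v : Fin n, PCThrough col 4 v := by
  classical
  intro v
  by_contra hpc
  apply hnondeg
  -- every quadrangle through v is non-properly-colored
  have hcyc : ∀ a b d : Fin n, a ≠ v → b ≠ v → d ≠ v → a ≠ b → a ≠ d → b ≠ d →
      col v a = col a b ∨ col a b = col b d ∨ col b d = col d v ∨ col d v = col v a := by
    intro a b d hav hbv hdv hab had hbd
    by_contra hcon
    push_neg at hcon
    obtain ⟨h1, h2, h3, h4⟩ := hcon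
    apply hpc
    refine ⟨(fun i => if i = 0 then v else if i = 1 then a else if i = 2 then b else d),
      ⟨?_, ?_⟩, 0, rfl⟩
    · intro i j hij
      have hq : ∀ k : ZMod 4, k = 0 ∨ k = 1 ∨ k = 2 ∨ k = 3 := by decide
      rcases hq i with rfl|rfl|rfl|rfl <;> rcases hq j with rfl|rfl|rfl|rfl <;>
        first
          | rfl
          | exact absurd hij (Ne.symm hav)
          | exact absurd hij hav
          | exact absurd hij (Ne.symm hbv)
          | exact absurd hij hbv
          | exact absurd hij (Ne.symm hdv)
          | exact absurd hij hdv
          | exact absurd hij hab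
          | exact absurd hij (Ne.symm hab)
          | exact absurd hij had
          | exact absurd hij (Ne.symm had)
          | exact absurd hij hbd
          | exact absurd hij (Ne.symm hbd)
    · intro i
      have hq : ∀ k : ZMod 4, k = 0 ∨ k = 1 ∨ k = 2 ∨ k = 3 := by decide
      rcases hq i with rfl|rfl|rfl|rfl
      · exact h1
      · exact h2
      · exact h3
      · exact h4
  have hmt : ∀ x y z : Fin n, x ≠ y → y ≠ z → x ≠ z → col x y = col y z → col x y = col x z →
      False := fun x y z h1 h2 h3 h4 h5 => hmono ⟨x, y, z, h1, h2, h3, h4, h5⟩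
  -- no edge inside a colour class of `v` carries the class colour
  have hc_ne : ∀ x y : Fin n, x ≠ v → y ≠ v → x ≠ y → col v x = col v y → col x y ≠ col v x := by
    intro x y hxv hyv hxy hcc hcol
    exact hmt x v y hxv (Ne.symm hyv) hxy ((hsym x v).trans hcc) ((hsym x v).trans hcol.symm)
  -- basic cycle consequence
  have hF1 : ∀ x y z : Fin n, x ≠ v → y ≠ v → z ≠ v → x ≠ y → x ≠ z → y ≠ z →
      col v x ≠ col v z →
      col x y = col v x ∨ col x y = col y z ∨ col y z = col v z := by
    intro x y z hxv hyv hzv hxy hxz hyz hne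
    rcases hcyc x y z hxv hyv hzv hxy hxz hyz with h|h|h|h
    · exact Or.inl h.symm
    · exact Or.inr (Or.inl h)
    · exact Or.inr (Or.inr (h.trans (hsym z v)))
    · exact absurd ((hsym v z).trans h).symm hne
  -- a deviating vertex of a class: all its class-internal edges carry the deviation colour
  have L5i : ∀ y z₀ x' : Fin n, y ≠ v → z₀ ≠ v → z₀ ≠ y → col v z₀ ≠ col v y →
      col y z₀ ≠ col v z₀ → x' ≠ v → x' ≠ y → col v x' = col v y →
      col x' y = col y z₀ := by
    intro y z₀ x' hyv hz₀v hz₀y hz₀c hdv hx'v hx'y hx'c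
    have hx'z₀ : x' ≠ z₀ := by
      intro h; rw [h] at hx'c; exact hz₀c hx'c
    rcases hF1 x' y z₀ hx'v hyv hz₀v hx'y hx'z₀ (Ne.symm hz₀y)
        (by rw [hx'c]; exact Ne.symm hz₀c) with h|h|h
    · exact absurd h (hc_ne x' y hx'v hyv hx'y hx'c)
    · exact h
    · exact absurd h hdv
  have L5ii : ∀ y z₀ x z : Fin n, y ≠ v → z₀ ≠ v → z₀ ≠ y → col v z₀ ≠ col v y →
      col y z₀ ≠ col v z₀ → x ≠ v → x ≠ y → col v x = col v y →
      z ≠ v → z ≠ y → col v z ≠ col v y →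
      col y z = col v z ∨ col y z = col y z₀ := by
    intro y z₀ x z hyv hz₀v hz₀y hz₀c hdv hxv hxy hxc hzv hzy hzc
    have hxz : x ≠ z := by
      intro h; rw [h] at hxc; exact hzc hxc
    rcases hF1 x y z hxv hyv hzv hxy hxz (Ne.symm hzy)
        (by rw [hxc]; exact Ne.symm hzc) with h|h|h
    · exact absurd h (hc_ne x y hxv hyv hxy hxc)
    · exact Or.inr (h.symm.trans (L5i y z₀ x hyv hz₀v hz₀y hz₀c hdv hxv hxy hxc))
    · exact Or.inl h
  -- Case 1: a "foreign" edge between two singleton classes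
  by_cases hS : ∃ u w : Fin n, u ≠ v ∧ w ≠ v ∧ u ≠ w ∧
      (∀ z, z ≠ v → z ≠ u → col v z ≠ col v u) ∧
      (∀ z, z ≠ v → z ≠ w → col v z ≠ col v w) ∧
      col u w ≠ col v u ∧ col u w ≠ col v w
  · obtain ⟨u, w, huv, hwv, huw, hSu, hSw, htu, htw⟩ := hS
    have key : ∀ z, z ≠ v → z ≠ u → z ≠ w → col u z = col v z ∧ col w z = col v z := by
      intro z hzv hzu hzw
      have hmt3 : col u z = col u w → col w z = col u w → False := by
        intro e1 e2
        exact hmt u w z huw (Ne.symm hzw) (Ne.symm hzu) e2.symm e1.symm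
      have h1 : col u z = col u w ∨ col u z = col v z := by
        rcases hF1 w u z hwv huv hzv (Ne.symm huw) (Ne.symm hzw) (Ne.symm hzu)
            (Ne.symm (hSw z hzv hzw)) with h|h|h
        · exact absurd ((hsym u w).trans h) htw
        · exact Or.inl (h.symm.trans (hsym w u))
        · exact Or.inr h
      have h2 : col w z = col u w ∨ col w z = col v z := by
        rcases hF1 u w z huv hwv hzv huw (Ne.symm hzu) (Ne.symm hzw)
            (Ne.symm (hSu z hzv hzu)) with h|h|h
        · exact absurd h htu
        · exact Or.inl h.symm
        · exact Or.inr h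
      have hcu : col u z = col v z := by
        rcases h1 with h|h
        · exfalso
          have hwzc : col w z = col v z := by
            rcases h2 with h'|h'
            · exact absurd h' (fun h'' => hmt3 h h'')
            · exact h'
          rcases hcyc u z w huv hzv hwv (Ne.symm hzu) huw hzw with e|e|e|e
          · exact htu (h.symm.trans e.symm)
          · exact hmt3 h (((hsym w z).trans e.symm).trans h)
          · exact hSw z hzv hzw ((hwzc.symm.trans (hsym w z)).trans (e.trans (hsym w v)))
          · exact hSu w hwv (Ne.symm huw) ((hsym v w).trans e)
        · exact h
      have hcw : col w z = col v z := by
        rcases h2 with h|h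
        · exfalso
          rcases hcyc w z u hwv hzv huv (Ne.symm hzw) (Ne.symm huw) hzu with e|e|e|e
          · exact htw (h.symm.trans e.symm)
          · exact hmt3 ((hsym u z).trans (e.symm.trans h)) h
          · exact hSu z hzv hzu ((hcu.symm.trans (hsym u z)).trans (e.trans (hsym u v)))
          · exact hSu w hwv (Ne.symm huw) (((hsym v u).trans e).symm)
        · exact h
      exact ⟨hcu, hcw⟩
    have hex : ∃ x : Fin n, x ≠ v ∧ x ≠ u ∧ x ≠ w := by
      by_contra hno
      push_neg at hno
      have hsub : (Finset.univ : Finset (Fin n)) ⊆ {v, u, w} := by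
        intro x _
        simp only [Finset.mem_insert, Finset.mem_singleton]
        rcases eq_or_ne x v with h|h
        · exact Or.inl h
        rcases eq_or_ne x u with h'|h'
        · exact Or.inr (Or.inl h')
        exact Or.inr (Or.inr (hno x h h'))
      have h1 := Finset.card_le_card hsub
      have a1 := Finset.card_insert_le v ({u, w} : Finset (Fin n))
      have a2 := Finset.card_insert_le u ({w} : Finset (Fin n))
      have a3 : ({w} : Finset (Fin n)).card = 1 := Finset.card_singleton w
      simp only [Finset.card_univ, Fintype.card_fin] at h1
      omega
    obtain ⟨x₀, hx₀⟩ := hex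
    refine ⟨{x | x ≠ v ∧ x ≠ u ∧ x ≠ w}, ⟨x₀, hx₀⟩, (fun x => col v x), ?_, ?_⟩
    · intro a ha b hb hab
      simp only [Set.mem_setOf_eq] at ha hb
      obtain ⟨hav, hau, haw⟩ := ha
      obtain ⟨hbv, hbu, hbw⟩ := hb
      rcases hF1 u a b huv hav hbv (Ne.symm hau) (Ne.symm hbu) hab
          (Ne.symm (hSu b hbv hbu)) with h|h|h
      · exact absurd ((key a hav hau haw).1.symm.trans h) (hSu a hav hau)
      · exact Or.inl (h.symm.trans (key a hav hau haw).1)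
      · exact Or.inr h
    · intro a ha y hy
      simp only [Set.mem_setOf_eq] at ha hy
      obtain ⟨hav, hau, haw⟩ := ha
      push_neg at hy
      by_cases e1 : y = v
      · rw [e1]; exact hsym a v
      by_cases e2 : y = u
      · rw [e2]; exact (hsym a u).trans (key a hav hau haw).1
      have e3 : y = w := hy e1 e2
      rw [e3]; exact (hsym a w).trans (key a hav hau haw).2
  · push_neg at hS
    -- deviation extractor
    have hdev : ∀ y, y ≠ v →
        ¬(∀ z, z ≠ v → z ≠ y → col v z ≠ col v y → col y z = col v z) →
        ∃ z₀, z₀ ≠ v ∧ z₀ ≠ y ∧ col v z₀ ≠ col v y ∧ col y z₀ ≠ col v z₀ := by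
      intro y _ hny
      push_neg at hny
      exact hny
    by_cases hD : ∃ d, d ≠ v ∧ ∀ z, z ≠ v → z ≠ d → col v z ≠ col v d → col d z = col v z
    · -- Case 2 : some fully dominated vertex exists
      obtain ⟨d₀, hd₀v, hd₀⟩ := hD
      have hDcls : ∀ d, d ≠ v →
          (∀ z, z ≠ v → z ≠ d → col v z ≠ col v d → col d z = col v z) →
          col v d = col v d₀ := by
        intro d hdv hd
        by_contra hne
        have hdd₀ : d ≠ d₀ := fun h => hne (congrArg (col v) h)
        have e1 : col d d₀ = col v d₀ := hd d₀ hd₀v (Ne.symm hdd₀) (Ne.symm hne)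
        have e2 : col d₀ d = col v d := hd₀ d hdv hdd₀ hne
        exact hne (e2.symm.trans ((hsym d₀ d).trans e1))
      have hsing : ∀ b z, b ≠ v → z ≠ v → z ≠ b → col v b ≠ col v d₀ →
          col v z = col v b → False := by
        intro b z hbv hzv hzb hbμ hcls
        have hbnd : ¬(∀ z', z' ≠ v → z' ≠ b → col v z' ≠ col v b → col b z' = col v z') :=
          fun h => hbμ (hDcls b hbv h)
        obtain ⟨z₀, hz₀v, hz₀b, hz₀c, hz₀dev⟩ := hdev b hbv hbnd
        have hd₀b : d₀ ≠ b := fun h => hbμ (congrArg (col v) h).symm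
        rcases L5ii b z₀ z d₀ hbv hz₀v hz₀b hz₀c hz₀dev hzv hzb hcls hd₀v hd₀b
            (Ne.symm hbμ) with h|h
        · have e2 := hd₀ b hbv (Ne.symm hd₀b) hbμ
          exact hbμ (e2.symm.trans ((hsym d₀ b).trans h))
        · have e2 := hd₀ b hbv (Ne.symm hd₀b) hbμ
          have e3 : col b z₀ = col v b := h.symm.trans ((hsym b d₀).trans e2)
          have e4 := L5i b z₀ z hbv hz₀v hz₀b hz₀c hz₀dev hzv hzb hcls
          exact (hc_ne z b hzv hbv hzb hcls) (e4.trans (e3.trans hcls.symm))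
      refine ⟨{x | x = v ∨ (x ≠ v ∧
          ¬(∀ z, z ≠ v → z ≠ x → col v z ≠ col v x → col x z = col v z))},
        ⟨v, Or.inl rfl⟩,
        (fun x => if x = v then col v d₀ else if col v x = col v d₀ then col x d₀ else col v x),
        ?_, ?_⟩
      · intro a ha b hb hab
        simp only [Set.mem_setOf_eq] at ha hb
        by_cases hav : a = v
        · have hbv : b ≠ v := fun hh => hab (hav.trans hh.symm)
          have hbmem : b ≠ v ∧ ¬(∀ z, z ≠ v → z ≠ b → col v z ≠ col v b → col b z = col v z) :=
            (hb.resolve_left hbv).imp id id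
          obtain ⟨_, hbnp⟩ := hbmem
          have hcab : col a b = col v b := congrArg (fun t => col t b) hav
          by_cases hbμ : col v b = col v d₀
          · left; simp only [if_pos hav]; exact hcab.trans hbμ
          · right; simp only [if_neg hbv, if_neg hbμ]; exact hcab
        · obtain ⟨_, hanp⟩ : a ≠ v ∧ ¬(∀ z, z ≠ v → z ≠ a → col v z ≠ col v a →
              col a z = col v z) := (ha.resolve_left hav).imp id id
          by_cases hbv' : b = v
          · have hcab : col a b = col v a := (congrArg (col a) hbv').trans (hsym a v)
            by_cases haμ : col v a = col v d₀
            · right; simp only [if_pos hbv']; exact hcab.trans haμ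
            · left; simp only [if_neg hav, if_neg haμ]; exact hcab
          · have hbv : b ≠ v := hbv'
            obtain ⟨_, hbnp⟩ : b ≠ v ∧ ¬(∀ z, z ≠ v → z ≠ b → col v z ≠ col v b →
                col b z = col v z) := (hb.resolve_left hbv).imp id id
            obtain ⟨za, hzav, hzaa, hzac, hzadev⟩ := hdev a hav hanp
            obtain ⟨zb, hzbv, hzbb, hzbc, hzbdev⟩ := hdev b hbv hbnp
            by_cases haμ : col v a = col v d₀
            · have had₀ : a ≠ d₀ := fun h => hanp (h.symm ▸ hd₀)
              have e2 := L5i a za d₀ hav hzav hzaa hzac hzadev hd₀v (Ne.symm had₀) haμ.symm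
              by_cases hbμ : col v b = col v d₀
              · left; simp only [if_neg hav, if_pos haμ]
                have e := L5i a za b hav hzav hzaa hzac hzadev hbv (Ne.symm hab)
                  (hbμ.trans haμ.symm)
                exact ((hsym a b).trans e).trans ((hsym a d₀).trans e2).symm
              · rcases L5ii a za d₀ b hav hzav hzaa hzac hzadev hd₀v (Ne.symm had₀) haμ.symm
                    hbv (Ne.symm hab) (fun h => hbμ (h.trans haμ)) with h|h
                · right; simp only [if_neg hbv, if_neg hbμ]; exact h
                · left; simp only [if_neg hav, if_pos haμ]
                  exact h.trans ((hsym a d₀).trans e2).symm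
            · by_cases hbμ : col v b = col v d₀
              · have hbd₀ : b ≠ d₀ := fun h => hbnp (h.symm ▸ hd₀)
                have e2 := L5i b zb d₀ hbv hzbv hzbb hzbc hzbdev hd₀v (Ne.symm hbd₀) hbμ.symm
                rcases L5ii b zb d₀ a hbv hzbv hzbb hzbc hzbdev hd₀v (Ne.symm hbd₀) hbμ.symm
                    hav hab (fun h => haμ (h.trans hbμ)) with h|h
                · left; simp only [if_neg hav, if_neg haμ]; exact (hsym a b).trans h
                · right; simp only [if_neg hbv, if_pos hbμ]
                  exact (hsym a b).trans (h.trans ((hsym b d₀).trans e2).symm)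
              · have hSa : ∀ z, z ≠ v → z ≠ a → col v z ≠ col v a :=
                  fun z h1 h2 h3 => hsing a z hav h1 h2 haμ h3
                have hSb : ∀ z, z ≠ v → z ≠ b → col v z ≠ col v b :=
                  fun z h1 h2 h3 => hsing b z hbv h1 h2 hbμ h3
                by_cases hfa : col a b = col v a
                · left; simp only [if_neg hav, if_neg haμ]; exact hfa
                · right; simp only [if_neg hbv, if_neg hbμ]
                  exact hS a b hav hbv hab hSa hSb hfa
      · intro a ha y hy
        simp only [Set.mem_setOf_eq] at ha hy
        push_neg at hy
        obtain ⟨hyv, hyP'⟩ := hy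
        have hyP : ∀ z, z ≠ v → z ≠ y → col v z ≠ col v y → col y z = col v z := hyP' hyv
        have hyμ : col v y = col v d₀ := hDcls y hyv hyP
        by_cases hav : a = v
        · simp only [if_pos hav]
          exact (congrArg (fun t => col t y) hav).trans hyμ
        · obtain ⟨_, hanp⟩ : a ≠ v ∧ ¬(∀ z, z ≠ v → z ≠ a → col v z ≠ col v a →
              col a z = col v z) := (ha.resolve_left hav).imp id id
          by_cases haμ : col v a = col v d₀
          · simp only [if_neg hav, if_pos haμ]
            obtain ⟨za, hzav, hzaa, hzac, hzadev⟩ := hdev a hav hanp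
            have hya : y ≠ a := by
              intro h; rw [h] at hyP; exact hanp hyP
            by_cases hyd : y = d₀
            · rw [hyd]
            · have had₀ : a ≠ d₀ := fun h => hanp (h.symm ▸ hd₀)
              have e1 := L5i a za y hav hzav hzaa hzac hzadev hyv hya (hyμ.trans haμ.symm)
              have e2 := L5i a za d₀ hav hzav hzaa hzac hzadev hd₀v (Ne.symm had₀) haμ.symm
              exact ((hsym a y).trans e1).trans ((hsym a d₀).trans e2).symm
          · simp only [if_neg hav, if_neg haμ]
            have hay : a ≠ y := by
              intro h; rw [← h] at hyP; exact hanp hyP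
            exact (hsym a y).trans (hyP a hav hay (fun h => haμ (h.trans hyμ)))
    · -- Case 3 : no dominated vertex: every vertex deviates
      push_neg at hD
      by_cases hPair : ∃ y x : Fin n, y ≠ v ∧ x ≠ v ∧ x ≠ y ∧ col v x = col v y
      · obtain ⟨y₀, x₀, hy₀v, hx₀v, hx₀y₀, hx₀c⟩ := hPair
        obtain ⟨z₀, hz₀v, hz₀y₀, hz₀c, hz₀dev⟩ := hD y₀ hy₀v
        obtain ⟨w₀, hw₀v, hw₀x₀, hw₀c, hw₀dev⟩ := hD x₀ hx₀v
        -- the two deviation colours of the pair agree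
        have hbridge : col x₀ w₀ = col y₀ z₀ := by
          have b1 : col y₀ x₀ = col x₀ w₀ :=
            L5i x₀ w₀ y₀ hx₀v hw₀v hw₀x₀ hw₀c hw₀dev hy₀v (Ne.symm hx₀y₀) hx₀c.symm
          have b2 : col x₀ y₀ = col y₀ z₀ :=
            L5i y₀ z₀ x₀ hy₀v hz₀v hz₀y₀ hz₀c hz₀dev hx₀v hx₀y₀ hx₀c
          exact (b1.symm.trans ((hsym y₀ x₀).trans b2))
        have hg0 : col y₀ z₀ ≠ col v y₀ := by
          have e := L5i y₀ z₀ x₀ hy₀v hz₀v hz₀y₀ hz₀c hz₀dev hx₀v hx₀y₀ hx₀c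
          intro h
          exact hc_ne x₀ y₀ hx₀v hy₀v hx₀y₀ hx₀c (e.trans (h.trans hx₀c.symm))
        -- all partnered vertices lie in the class of y₀
        have hPcls : ∀ y x, y ≠ v → x ≠ v → x ≠ y → col v x = col v y →
            col v y = col v y₀ := by
          intro y x hyv hxv hxy hxc
          by_contra hne
          obtain ⟨zy, hzyv, hzyy, hzyc, hzydev⟩ := hD y hyv
          have hyy₀ : y ≠ y₀ := fun h => hne (congrArg (col v) h)
          have hyx₀ : y ≠ x₀ := fun h => hne ((congrArg (col v) h).trans hx₀c)
          have hgy : col y zy ≠ col v y := by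
            have e := L5i y zy x hyv hzyv hzyy hzyc hzydev hxv hxy hxc
            intro h
            exact hc_ne x y hxv hyv hxy hxc (e.trans (h.trans hxc.symm))
          -- the edge y y₀ has colour (col y₀ z₀)
          have e1' : col y y₀ = col y₀ z₀ := by
            rcases L5ii y₀ z₀ x₀ y hy₀v hz₀v hz₀y₀ hz₀c hz₀dev hx₀v hx₀y₀ hx₀c hyv hyy₀
                hne with h'|h'
            · exfalso
              rcases L5ii y zy x y₀ hyv hzyv hzyy hzyc hzydev hxv hxy hxc hy₀v (Ne.symm hyy₀)
                  (Ne.symm hne) with h|h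
              · exact hne (h'.symm.trans ((hsym y₀ y).trans h))
              · exact hgy (h.symm.trans ((hsym y y₀).trans h'))
            · exact (hsym y y₀).trans h'
          -- the edge y x₀ has colour (col y₀ z₀)
          have e2' : col y x₀ = col y₀ z₀ := by
            have hycx₀ : col v y ≠ col v x₀ := fun h => hne (h.trans hx₀c)
            rcases L5ii x₀ w₀ y₀ y hx₀v hw₀v hw₀x₀ hw₀c hw₀dev hy₀v (Ne.symm hx₀y₀)
                hx₀c.symm hyv hyx₀ hycx₀ with h'|h'
            · exfalso
              rcases L5ii y zy x x₀ hyv hzyv hzyy hzyc hzydev hxv hxy hxc hx₀v (Ne.symm hyx₀)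
                  (Ne.symm hycx₀) with h|h
              · exact hycx₀ (h'.symm.trans ((hsym x₀ y).trans h))
              · exact hgy (h.symm.trans ((hsym y x₀).trans h'))
            · exact ((hsym y x₀).trans h').trans hbridge
          have e3 : col x₀ y₀ = col y₀ z₀ :=
            L5i y₀ z₀ x₀ hy₀v hz₀v hz₀y₀ hz₀c hz₀dev hx₀v hx₀y₀ hx₀c
          exact hmt y y₀ x₀ hyy₀ (Ne.symm hx₀y₀) hyx₀
            (e1'.trans ((hsym y₀ x₀).trans e3).symm) (e1'.trans e2'.symm)
        -- construct the degenerate witness on the whole vertex set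
        refine ⟨Set.univ, ⟨v, Set.mem_univ v⟩,
          (fun x => if x = v then col v y₀ else
            if h : ∃ x', x' ≠ v ∧ x' ≠ x ∧ col v x' = col v x then col x h.choose
            else col v x), ?_, ?_⟩
        · intro a _ b _ hab
          by_cases hav : a = v
          · have hbv : b ≠ v := fun hh => hab (hav.trans hh.symm)
            have hcab : col a b = col v b := congrArg (fun t => col t b) hav
            by_cases hb' : ∃ x', x' ≠ v ∧ x' ≠ b ∧ col v x' = col v b
            · left; simp only [if_pos hav]
              obtain ⟨x', h1, h2, h3⟩ := hb'
              exact hcab.trans (hPcls b x' hbv h1 h2 h3)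
            · right; simp only [if_neg hbv, dif_neg hb']; exact hcab
          · by_cases hbv : b = v
            · have hcab : col a b = col v a := (congrArg (col a) hbv).trans (hsym a v)
              by_cases ha' : ∃ x', x' ≠ v ∧ x' ≠ a ∧ col v x' = col v a
              · right; simp only [if_pos hbv]
                obtain ⟨x', h1, h2, h3⟩ := ha'
                exact hcab.trans (hPcls a x' hav h1 h2 h3)
              · left; simp only [if_neg hav, dif_neg ha']; exact hcab
            · by_cases ha' : ∃ x', x' ≠ v ∧ x' ≠ a ∧ col v x' = col v a
              · obtain ⟨hch1, hch2, hch3⟩ := ha'.choose_spec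
                obtain ⟨zy, hzyv, hzya, hzyc, hzydev⟩ := hD a hav
                have hfa : col ha'.choose a = col a zy :=
                  L5i a zy ha'.choose hav hzyv hzya hzyc hzydev hch1 hch2 hch3
                by_cases hcc : col v b = col v a
                · left; simp only [if_neg hav, dif_pos ha']
                  have e := L5i a zy b hav hzyv hzya hzyc hzydev hbv (Ne.symm hab) hcc
                  exact ((hsym a b).trans e).trans ((hsym a ha'.choose).trans hfa).symm
                · by_cases hb' : ∃ x', x' ≠ v ∧ x' ≠ b ∧ col v x' = col v b
                  · exfalso
                    obtain ⟨xb, hb1, hb2, hb3⟩ := hb'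
                    exact hcc ((hPcls b xb hbv hb1 hb2 hb3).trans
                      (hPcls a ha'.choose hav hch1 hch2 hch3).symm)
                  · rcases L5ii a zy ha'.choose b hav hzyv hzya hzyc hzydev hch1 hch2 hch3
                        hbv (Ne.symm hab) hcc with h|h
                    · right; simp only [if_neg hbv, dif_neg hb']; exact h
                    · left; simp only [if_neg hav, dif_pos ha']
                      exact h.trans ((hsym a ha'.choose).trans hfa).symm
              · by_cases hb' : ∃ x', x' ≠ v ∧ x' ≠ b ∧ col v x' = col v b
                · obtain ⟨hch1, hch2, hch3⟩ := hb'.choose_spec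
                  obtain ⟨zb, hzbv, hzbb, hzbc, hzbdev⟩ := hD b hbv
                  have hfb : col hb'.choose b = col b zb :=
                    L5i b zb hb'.choose hbv hzbv hzbb hzbc hzbdev hch1 hch2 hch3
                  have hcc : col v a ≠ col v b := fun h => ha' ⟨b, hbv, Ne.symm hab, h.symm⟩
                  rcases L5ii b zb hb'.choose a hbv hzbv hzbb hzbc hzbdev hch1 hch2 hch3
                      hav hab hcc with h|h
                  · left; simp only [if_neg hav, dif_neg ha']; exact (hsym a b).trans h
                  · right; simp only [if_neg hbv, dif_pos hb']
                    exact (hsym a b).trans (h.trans ((hsym b hb'.choose).trans hfb).symm)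
                · have hSa : ∀ z, z ≠ v → z ≠ a → col v z ≠ col v a :=
                    fun z h1 h2 h3 => ha' ⟨z, h1, h2, h3⟩
                  have hSb : ∀ z, z ≠ v → z ≠ b → col v z ≠ col v b :=
                    fun z h1 h2 h3 => hb' ⟨z, h1, h2, h3⟩
                  by_cases hfa : col a b = col v a
                  · left; simp only [if_neg hav, dif_neg ha']; exact hfa
                  · right; simp only [if_neg hbv, dif_neg hb']
                    exact hS a b hav hbv hab hSa hSb hfa
        · intro a _ y hy
          exact absurd (Set.mem_univ y) hy
      · -- Case 3b : all classes are singletons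
        push_neg at hPair
        refine ⟨Set.univ, ⟨v, Set.mem_univ v⟩, (fun x => col v x), ?_, ?_⟩
        · intro a _ b _ hab
          by_cases hav : a = v
          · exact Or.inr (congrArg (fun t => col t b) hav)
          · by_cases hbv : b = v
            · exact Or.inl ((congrArg (col a) hbv).trans (hsym a v))
            · have hSa : ∀ z, z ≠ v → z ≠ a → col v z ≠ col v a :=
                fun z h1 h2 => hPair a z hav h1 h2
              have hSb : ∀ z, z ≠ v → z ≠ b → col v z ≠ col v b :=
                fun z h1 h2 => hPair b z hbv h1 h2
              by_cases hfa : col a b = col v a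
              · exact Or.inl hfa
              · exact Or.inr (hS a b hav hbv hab hSa hSb hfa)
        · intro a _ y hy
          exact absurd (Set.mem_univ y) hy
end

section
/- Let G be a degenerate edge-colored complete graph K_n (n ≥ 4) containing no monochromatic triangle, and suppose no proper subset S ⊊ V(G) is a degenerate set of G. Then every vertex of G is contained in properly colored cycles of every length from 4 to n. -/
open Relation

variable {α V : Type*}

theorem List.exists_eq_append_cons_cons_of_not {p : α → Prop} {a b : α} {l : List α}
    (ha : p a) (hb : b ∈ l) (hpb : ¬ p b) :
    ∃ l₁ l₂ x y, a :: l = l₁ ++ x :: y :: l₂ ∧ p x ∧ ¬ p y := by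
  induction l generalizing a with
  | nil => simp at hb
  | cons c l ih =>
    by_cases hc : p c
    · have hbl : b ∈ l := (List.mem_cons.1 hb).resolve_left (by rintro rfl; exact hpb hc)
      obtain ⟨l₁, l₂, x, y, e, hx, hy⟩ := ih hc hbl
      exact ⟨a :: l₁, l₂, x, y, by rw [e]; rfl, hx, hy⟩
    · exact ⟨[], l, a, c, rfl, ha, hc⟩

theorem Relation.ReflTransGen.exists_rel_of_not {r : α → α → Prop} {p : α → Prop} {a b : α}
    (h : ReflTransGen r a b) (ha : p a) (hb : ¬ p b) : ∃ x y, r x y ∧ p x ∧ ¬ p y := by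
  induction h with
  | refl => exact absurd ha hb
  | @tail c d _ hcd ih =>
    by_cases hc : p c
    · exact ⟨c, d, hcd, hc, hb⟩
    · exact ih hc

namespace Cycle

theorem exists_eq_coe_cons {s : Cycle α} {a : α} (h : a ∈ s) : ∃ l : List α, s = ↑(a :: l) := by
  induction s using Quotient.inductionOn' with
  | h l =>
    obtain ⟨l₁, l₂, rfl⟩ := List.append_of_mem (mem_coe_iff.1 h)
    exact ⟨l₂ ++ l₁, coe_eq_coe.2 List.isRotated_append⟩

theorem exists_eq_coe_cons_cons_of_not {p : α → Prop} {s : Cycle α} {a b : α}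
    (ha : a ∈ s) (hpa : p a) (hb : b ∈ s) (hpb : ¬ p b) :
    ∃ x y l, s = ↑(x :: y :: l) ∧ p x ∧ ¬ p y := by
  obtain ⟨l, rfl⟩ := exists_eq_coe_cons ha
  have hbl : b ∈ l := (List.mem_cons.1 (mem_coe_iff.1 hb)).resolve_left
    (by rintro rfl; exact hpb hpa)
  obtain ⟨l₁, l₂, x, y, e, hx, hy⟩ := List.exists_eq_append_cons_cons_of_not hpa hbl hpb
  exact ⟨x, y, l₂ ++ l₁, by rw [e]; exact coe_eq_coe.2 List.isRotated_append, hx, hy⟩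

theorem Chain.exists_rel {r : α → α → Prop} {s : Cycle α} (h : s.Chain r) {a : α} (ha : a ∈ s) :
    ∃ b ∈ s, r a b := by
  obtain ⟨l, rfl⟩ := exists_eq_coe_cons ha
  rw [chain_coe_cons] at h
  cases l with
  | nil => exact ⟨a, by simp, by simpa using h⟩
  | cons b l => exact ⟨b, by simp, (List.isChain_cons_cons.1 h).1⟩

theorem exists_chain_coe_cons_of_reflTransGen {r : α → α → Prop} {a b : α}
    (h : ReflTransGen r a b) (hba : r b a) : ∃ l : List α, Chain r ↑(a :: l) := by
  obtain ⟨l, hl, hlast⟩ := List.exists_isChain_cons_of_relationReflTransGen h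
  refine ⟨l, (chain_coe_cons r a l).2 (hl.append (List.isChain_singleton a) ?_)⟩
  simp [List.getLast?_eq_some_getLast, hlast, hba]

theorem exists_notMem_of_length_lt_s7 [Fintype α] {s : Cycle α} (h : s.length < Fintype.card α) :
    ∃ a, a ∉ s := by
  classical
  induction s using Quotient.inductionOn' with
  | h l =>
    by_contra! hl
    have : (Finset.univ : Finset α) ⊆ l.toFinset :=
      fun a _ => List.mem_toFinset.2 (mem_coe_iff.1 (hl a))
    exact h.not_ge ((Finset.card_le_card this).trans l.toFinset_card_le)

end Cycle

/-- A multipartite tournament whose parts are the fibres of `f`. -/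
structure IsMultipartiteTournament (A : V → V → Prop) (f : V → ℕ) : Prop where
  label_ne : ∀ {u v}, A u v → f u ≠ f v
  asymm : ∀ {u v}, A u v → ¬ A v u
  rel_or_rel : ∀ {u v}, u ≠ v → f u ≠ f v → A u v ∨ A v u

def IsDirCycle (A : V → V → Prop) (s : Cycle V) : Prop :=
  s.Nodup ∧ s.Chain A

namespace IsDirCycle

variable {A : V → V → Prop}

theorem insert {p q u : V} {m : List V} (hs : IsDirCycle A ↑(p :: q :: m))
    (hu : u ∉ p :: q :: m) (hpu : A p u) (huq : A u q) : IsDirCycle A ↑(p :: u :: q :: m) := by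
  obtain ⟨hnd, hch⟩ := hs
  rw [Cycle.nodup_coe_iff] at hnd
  refine ⟨Cycle.nodup_coe_iff.2 ?_, ?_⟩
  · simp only [List.nodup_cons, List.mem_cons, not_or] at hnd hu ⊢
    tauto
  · simp only [Cycle.chain_coe_cons, List.cons_append, List.isChain_cons_cons] at hch ⊢
    exact ⟨hpu, huq, hch.2⟩

theorem replace {y x w z : V} {m : List V} (hs : IsDirCycle A ↑(y :: x :: m))
    (hw : w ∉ y :: x :: m) (hz : z ∉ y :: x :: m) (hwz_ne : w ≠ z) (hyw : A y w) (hwz : A w z)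
    (hzt : ∀ t ∈ y :: m, A z t) : IsDirCycle A ↑(y :: w :: z :: m) := by
  obtain ⟨hnd, hch⟩ := hs
  rw [Cycle.nodup_coe_iff] at hnd
  refine ⟨Cycle.nodup_coe_iff.2 ?_, ?_⟩
  · simp only [List.nodup_cons, List.mem_cons, not_or] at hnd hw hz ⊢
    tauto
  · simp only [Cycle.chain_coe_cons, List.cons_append, List.isChain_cons_cons] at hch ⊢
    refine ⟨hyw, hwz, List.isChain_cons.2 ⟨fun t ht => hzt t ?_, hch.2.tail⟩⟩
    have := List.mem_of_mem_head? ht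
    simp only [List.mem_append, List.mem_singleton] at this
    exact List.mem_cons.2 this.symm

theorem exists_zmod {s : Cycle V} (hs : IsDirCycle A s) {v : V} (hv : v ∈ s) :
    ∃ c : ZMod s.length → V, Function.Injective c ∧ (∀ i, A (c i) (c (i + 1))) ∧ ∃ i, c i = v := by
  obtain ⟨l, rfl⟩ := Cycle.exists_eq_coe_cons hv
  obtain ⟨hnd, hch⟩ := hs
  rw [Cycle.nodup_coe_iff] at hnd
  rw [Cycle.chain_coe_cons, ← List.cons_append] at hch
  rw [Cycle.length_coe]
  set L := v :: l
  have : NeZero L.length := ⟨by simp [L]⟩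
  have hsucc : ∀ j (hj : j < L.length),
      A L[j] (L[(j + 1) % L.length]'(Nat.mod_lt _ (by omega))) := by
    intro j hj
    have h := hch.getElem j (by simp; omega)
    rw [List.getElem_append_left hj] at h
    convert h using 1
    rcases Nat.lt_or_eq_of_le (Nat.succ_le_of_lt hj) with hj' | hj'
    · simp [Nat.mod_eq_of_lt hj', List.getElem_append_left hj']
    · obtain rfl : j = l.length := by simp [L] at hj'; omega
      simp [L]
  refine ⟨fun i => L[i.val]'(ZMod.val_lt i), ?_, fun i => ?_, 0, by simp [L]⟩
  · exact fun i j hij => ZMod.val_injective _ (hnd.getElem_inj_iff.1 hij)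
  · have hval : (i + 1).val = (i.val + 1) % L.length := by
      rw [ZMod.val_add, ZMod.val_one_eq_one_mod, Nat.add_mod_mod]
    simpa only [hval] using hsucc i.val (ZMod.val_lt i)

end IsDirCycle

namespace IsMultipartiteTournament

variable {A : V → V → Prop} {f : V → ℕ}

theorem ne_of_rel (hT : IsMultipartiteTournament A f) {u v : V} (h : A u v) : u ≠ v :=
  fun e => hT.label_ne h (congrArg f e)

theorem chain_shortcut (hT : IsMultipartiteTournament A f) {v x : V} {P Q : List V}
    (h : Cycle.Chain A ↑(v :: (P ++ x :: Q))) (hvx : f v ≠ f x) :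
    Cycle.Chain A ↑(v :: x :: Q) ∨ Cycle.Chain A ↑(v :: (P ++ [x])) := by
  simp only [Cycle.chain_coe_cons, List.append_assoc, List.cons_append] at h ⊢
  obtain ⟨hP, hQ⟩ := List.isChain_cons_split.1 h
  rcases hT.rel_or_rel (fun e => hvx (congrArg f e)) hvx with hvx | hxv
  · exact .inl (List.isChain_cons_cons.2 ⟨hvx, hQ⟩)
  · exact .inr (List.isChain_cons_split.2 ⟨hP, List.isChain_pair.2 hxv⟩)

theorem exists_short_chain (hT : IsMultipartiteTournament A f) {v : V} {l : List V}
    (h : Cycle.Chain A ↑(v :: l)) : ∃ m : List V, Cycle.Chain A ↑(v :: m) ∧ m.length ≤ 3 := by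
  induction hl : l.length using Nat.strong_induction_on generalizing l with
  | _ n ih =>
  by_cases hl3 : l.length ≤ 3
  · exact ⟨l, h, hl3⟩
  obtain ⟨b, c, d, e, r, rfl⟩ : ∃ b c d e r, l = b :: c :: d :: e :: r := by
    rcases l with _ | ⟨b, _ | ⟨c, _ | ⟨d, _ | ⟨e, r⟩⟩⟩⟩ <;> simp at hl3 ⊢
  have hcd : f c ≠ f d := by
    simp only [Cycle.chain_coe_cons, List.cons_append, List.isChain_cons_cons] at h
    exact hT.label_ne h.2.2.1
  -- `v` differs in label from `c` or from `d`, and a chord there shortcuts the walk.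
  by_cases hvc : f v = f c
  · rcases hT.chain_shortcut (P := [b, c]) h (hvc ▸ hcd) with h' | h' <;>
      exact ih _ (by simp [← hl]) h' rfl
  · rcases hT.chain_shortcut (P := [b]) h hvc with h' | h' <;>
      exact ih _ (by simp [← hl]) h' rfl

theorem isDirCycle_of_chain (hT : IsMultipartiteTournament A f) {v : V} {l : List V}
    (h : Cycle.Chain A ↑(v :: l)) (hl : l.length ≤ 3) :
    IsDirCycle A ↑(v :: l) ∧ 2 ≤ l.length := by
  rcases l with _ | ⟨b, _ | ⟨c, _ | ⟨d, _ | ⟨e, r⟩⟩⟩⟩ <;>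
    simp only [Cycle.chain_coe_cons, List.cons_append, List.nil_append, List.isChain_cons_cons,
      List.isChain_singleton, and_true] at h
  · exact (hT.ne_of_rel h rfl).elim
  · exact absurd h.2 (hT.asymm h.1)
  · obtain ⟨hvb, hbc, hcv⟩ := h
    refine ⟨⟨?_, by simpa using ⟨hvb, hbc, hcv⟩⟩, by simp⟩
    simp [hT.ne_of_rel hvb, (hT.ne_of_rel hcv).symm, hT.ne_of_rel hbc]
  · obtain ⟨hvb, hbc, hcd, hdv⟩ := h
    have hvc : v ≠ c := by rintro rfl; exact hT.asymm hvb hbc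
    have hbd : b ≠ d := by rintro rfl; exact hT.asymm hbc hcd
    refine ⟨⟨?_, by simpa using ⟨hvb, hbc, hcd, hdv⟩⟩, by simp⟩
    simp [hT.ne_of_rel hvb, hvc, (hT.ne_of_rel hdv).symm, hT.ne_of_rel hbc, hbd,
      hT.ne_of_rel hcd]
  · exact absurd hl (by simp)

theorem exists_short_isDirCycle (hT : IsMultipartiteTournament A f)
    (hstrong : ∀ a b, ReflTransGen A a b) {u v : V} (huv : u ≠ v) :
    ∃ s, IsDirCycle A s ∧ v ∈ s ∧ 3 ≤ s.length ∧ s.length ≤ 4 := by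
  obtain ⟨y, -, hyv⟩ := (hstrong u v).cases_tail.resolve_left huv.symm
  obtain ⟨l, hl⟩ := Cycle.exists_chain_coe_cons_of_reflTransGen (hstrong v y) hyv
  obtain ⟨m, hm, hm3⟩ := hT.exists_short_chain hl
  obtain ⟨hs, hm2⟩ := hT.isDirCycle_of_chain hm hm3
  exact ⟨_, hs, by simp, by simpa using hm2, by simpa [Nat.lt_succ_iff] using hm3⟩

theorem forall_rel_of_forall_not_rel (hT : IsMultipartiteTournament A f)
    (htwin : ∀ {u v w}, u ≠ v → f u = f v → A u w → ¬ A v w) {s : Cycle V} (hs : s.Chain A)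
    {z : V} (hz : z ∉ s) (hin : ∀ t ∈ s, ¬ A t z) : ∀ t ∈ s, A z t := by
  have hzt : ∀ t ∈ s, f z ≠ f t → A z t := fun t ht hf =>
    (hT.rel_or_rel (by rintro rfl; exact hz ht) hf).resolve_right (hin t ht)
  intro t ht
  by_cases hf : f z = f t
  · -- `z` would share with its twin `t` the successor of `t` on `s` as an out-neighbour.
    obtain ⟨t', ht', htt'⟩ := hs.exists_rel ht
    have hzt' : A z t' := hzt t' ht' (hf ▸ hT.label_ne htt')
    exact absurd htt' (htwin (by rintro rfl; exact hz ht) hf hzt')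
  · exact hzt t ht hf

theorem exists_insert (hT : IsMultipartiteTournament A f)
    (htwin : ∀ {u v w}, u ≠ v → f u = f v → A u w → ¬ A v w) {s : Cycle V} (hs : IsDirCycle A s)
    {u x y : V} (hu : u ∉ s) (hx : x ∈ s) (hxu : A x u) (hy : y ∈ s) (huy : A u y) :
    ∃ t, IsDirCycle A t ∧ (∀ a ∈ s, a ∈ t) ∧ t.length = s.length + 1 := by
  -- Going round `s` from `x`, the property `A t u ∨ f t = f u` is lost by the time `y` is
  -- reached; `u` fits in where it is lost.
  obtain ⟨p, q, m, rfl, hp, hq⟩ := Cycle.exists_eq_coe_cons_cons_of_not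
    (p := fun t => A t u ∨ f t = f u) hx (.inl hxu) hy
    (by rintro (h | h); exacts [hT.asymm huy h, hT.label_ne huy h.symm])
  rw [Cycle.mem_coe_iff] at hu
  have hpq : A p q := (List.isChain_cons_cons.1 ((Cycle.chain_coe_cons _ _ _).1 hs.2)).1
  have huq : A u q := by
    rw [not_or] at hq
    exact (hT.rel_or_rel (by rintro rfl; simp at hu) (Ne.symm hq.2)).resolve_right hq.1
  have hpu : A p u := hp.resolve_right fun hpu =>
    htwin (by rintro rfl; simp at hu) hpu hpq huq
  exact ⟨_, hs.insert hu hpu huq, by simp +contextual, by simp⟩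

theorem exists_replace (hT : IsMultipartiteTournament A f)
    (hpart : ∀ {u v w}, u ≠ v → u ≠ w → v ≠ w → f u = f w → f v ≠ f w)
    {s : Cycle V} (hs : IsDirCycle A s) {v w z : V} (hv : v ∈ s) (hlen : 3 ≤ s.length)
    (hw : w ∉ s) (hz : z ∉ s) (hwz : A w z) (hws : ∀ t ∈ s, f t ≠ f w → A t w)
    (hzs : ∀ t ∈ s, A z t) : ∃ t, IsDirCycle A t ∧ v ∈ t ∧ t.length = s.length + 1 := by
  -- `y` is `v` or its successor, whichever is not a twin of `w`.
  obtain ⟨y, x, m, rfl, hxv, hyw⟩ : ∃ y x m, s = ↑(y :: x :: m) ∧ x ≠ v ∧ f y ≠ f w := by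
    obtain ⟨l, rfl⟩ := Cycle.exists_eq_coe_cons hv
    obtain ⟨a, b, m, rfl⟩ : ∃ a b m, l = a :: b :: m := by
      rcases l with _ | ⟨a, _ | ⟨b, m⟩⟩ <;> simp at hlen ⊢
    have hnd := Cycle.nodup_coe_iff.1 hs.1
    simp only [List.nodup_cons, List.mem_cons, not_or] at hnd
    simp only [Cycle.mem_coe_iff, List.mem_cons, not_or] at hw
    by_cases hvw : f v = f w
    · exact ⟨a, b, m ++ [v], Cycle.coe_eq_coe.2 (List.isRotated_append (l := [v])),
        Ne.symm hnd.1.2.1, hpart hnd.1.1 (Ne.symm hw.1) (Ne.symm hw.2.1) hvw⟩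
    · exact ⟨v, a, b :: m, rfl, Ne.symm hnd.1.1, hvw⟩
  simp only [Cycle.mem_coe_iff] at hv hw hz hws hzs
  refine ⟨_, hs.replace hw hz (hT.ne_of_rel hwz) (hws y (by simp) hyw) hwz
    (fun t ht => hzs t (List.cons_subset_cons y (List.subset_cons_self x m) ht)), ?_, by simp⟩
  simp only [Cycle.mem_coe_iff, List.mem_cons] at hv ⊢
  tauto

theorem exists_isDirCycle_length_succ (hT : IsMultipartiteTournament A f)
    (hpart : ∀ {u v w}, u ≠ v → u ≠ w → v ≠ w → f u = f w → f v ≠ f w)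
    (htwin : ∀ {u v w}, u ≠ v → f u = f v → A u w → ¬ A v w)
    (hstrong : ∀ a b, ReflTransGen A a b) {s : Cycle V} (hs : IsDirCycle A s) {u v : V}
    (hu : u ∉ s) (hv : v ∈ s) (hlen : 3 ≤ s.length) :
    ∃ t, IsDirCycle A t ∧ v ∈ t ∧ t.length = s.length + 1 := by
  by_cases hmix : ∃ u' ∉ s, (∃ x ∈ s, A x u') ∧ ∃ y ∈ s, A u' y
  · obtain ⟨u', hu', ⟨x, hx, hxu'⟩, y, hy, hu'y⟩ := hmix
    obtain ⟨t, ht, hst, htlen⟩ := hT.exists_insert htwin hs hu' hx hxu' hy hu'y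
    exact ⟨t, ht, hst v hv, htlen⟩
  have hsplit : ∀ u' ∉ s, ∀ x ∈ s, A x u' → ∀ y ∈ s, ¬ A u' y :=
    fun u' hu' x hx hxu' y hy hu'y => hmix ⟨u', hu', ⟨x, hx, hxu'⟩, y, hy, hu'y⟩
  let P : V → Prop := fun t => t ∉ s ∧ ∀ y ∈ s, ¬ A t y
  obtain ⟨p, t, hpt, hp, ht⟩ := (hstrong v u).exists_rel_of_not (p := (· ∈ s)) hv hu
  obtain ⟨w, z, hwz, hw, hzP⟩ := (hstrong t v).exists_rel_of_not (p := P)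
    ⟨ht, hsplit t ht p hp hpt⟩ (fun h => h.1 hv)
  have hz : z ∉ s := fun hz => hw.2 z hz hwz
  have hzs : ∀ x ∈ s, ¬ A x z := fun x hx hxz => hzP ⟨hz, hsplit z hz x hx hxz⟩
  exact hT.exists_replace hpart hs hv hlen hw.1 hz hwz
    (fun x hx hxw => (hT.rel_or_rel (by rintro rfl; exact hw.1 hx) hxw).resolve_right (hw.2 x hx))
    (hT.forall_rel_of_forall_not_rel htwin hs.2 hz hzs)

theorem exists_isDirCycle_length [Fintype V] (hT : IsMultipartiteTournament A f)
    (hpart : ∀ {u v w}, u ≠ v → u ≠ w → v ≠ w → f u = f w → f v ≠ f w)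
    (htwin : ∀ {u v w}, u ≠ v → f u = f v → A u w → ¬ A v w)
    (hstrong : ∀ a b, ReflTransGen A a b) (v : V) {ℓ : ℕ} (hℓ : 4 ≤ ℓ)
    (hℓV : ℓ ≤ Fintype.card V) : ∃ s, IsDirCycle A s ∧ v ∈ s ∧ s.length = ℓ := by
  obtain ⟨u, hu⟩ := Fintype.exists_ne_of_one_lt_card (by omega) v
  obtain ⟨s₀, hs₀, hv₀, h3, h4⟩ := hT.exists_short_isDirCycle hstrong hu
  suffices ∀ k, s₀.length ≤ k → k ≤ Fintype.card V → ∃ s, IsDirCycle A s ∧ v ∈ s ∧ s.length = k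
    from this ℓ (h4.trans hℓ) hℓV
  intro k hk
  induction k, hk using Nat.le_induction with
  | base => exact fun _ => ⟨s₀, hs₀, hv₀, rfl⟩
  | succ k hk ih =>
    intro hkV
    obtain ⟨s, hs, hv, rfl⟩ := ih (by omega)
    obtain ⟨u, hu⟩ := Cycle.exists_notMem_of_length_lt_s7 (by omega : s.length < Fintype.card V)
    exact hT.exists_isDirCycle_length_succ hpart htwin hstrong hs hu hv (by omega)

end IsMultipartiteTournament

def colorArc (col : V → V → ℕ) (f : V → ℕ) (u v : V) : Prop :=
  col u v = f u ∧ f u ≠ f v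

section Coloring

variable {col : V → V → ℕ} {f : V → ℕ}

theorem isMultipartiteTournament_colorArc (hsym : ∀ u v, col u v = col v u)
    (hcompat : ∀ u v, u ≠ v → col u v = f u ∨ col u v = f v) :
    IsMultipartiteTournament (colorArc col f) f where
  label_ne h := h.2
  asymm {u v} h h' := h.2 (h.1.symm.trans ((hsym u v).trans h'.1))
  rel_or_rel {u v} huv hf :=
    (hcompat u v huv).imp (fun h => ⟨h, hf⟩) (fun h => ⟨(hsym v u).trans h, hf.symm⟩)

theorem col_eq_of_label_eq (hcompat : ∀ u v, u ≠ v → col u v = f u ∨ col u v = f v) {u v : V}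
    {c : ℕ} (huv : u ≠ v) (hu : f u = c) (hv : f v = c) : col u v = c :=
  (hcompat u v huv).elim (·.trans hu) (·.trans hv)

theorem colorArc_part (hcompat : ∀ u v, u ≠ v → col u v = f u ∨ col u v = f v)
    (hmono : ¬ HasMonoTriangle col) {u v w : V} (huv : u ≠ v) (huw : u ≠ w) (hvw : v ≠ w)
    (hu : f u = f w) : f v ≠ f w := fun hv =>
  hmono ⟨u, v, w, huv, hvw, huw,
    by rw [col_eq_of_label_eq hcompat huv hu hv, col_eq_of_label_eq hcompat hvw hv rfl],
    by rw [col_eq_of_label_eq hcompat huv hu hv, col_eq_of_label_eq hcompat huw hu rfl]⟩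

theorem colorArc_twin (hcompat : ∀ u v, u ≠ v → col u v = f u ∨ col u v = f v)
    (hmono : ¬ HasMonoTriangle col) {u v w : V} (huv : u ≠ v) (hf : f u = f v)
    (huw : colorArc col f u w) : ¬ colorArc col f v w := fun hvw =>
  hmono ⟨u, v, w, huv, fun e => hvw.2 (congrArg f e), fun e => huw.2 (congrArg f e),
    by rw [col_eq_of_label_eq hcompat huv rfl hf.symm, hvw.1, hf],
    by rw [col_eq_of_label_eq hcompat huv rfl hf.symm, huw.1]⟩

theorem reflTransGen_colorArc (hsym : ∀ u v, col u v = col v u)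
    (hcompat : ∀ u v, u ≠ v → col u v = f u ∨ col u v = f v)
    (hnodeg : ∀ S : Set V, DegenSet col S → S = Set.univ) (u v : V) :
    ReflTransGen (colorArc col f) u v := by
  -- The vertices from which `v` is reachable form a degenerate set, with the labels `f`.
  have hS : {x | ReflTransGen (colorArc col f) x v} = Set.univ := by
    refine hnodeg _ ⟨⟨v, .refl⟩, f, fun x _ y _ hxy => hcompat x y hxy, fun x hx y hy => ?_⟩
    rcases hcompat x y (by rintro rfl; exact hy hx) with h | h
    · exact h
    · by_cases hf : f y = f x
      · rw [h, hf]
      · exact absurd (ReflTransGen.head ⟨(hsym y x).trans h, hf⟩ hx) hy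
  exact Set.eq_univ_iff_forall.1 hS u

theorem pcThrough_of_isDirCycle {s : Cycle V} (hs : IsDirCycle (colorArc col f) s) {v : V}
    (hv : v ∈ s) : PCThrough col s.length v := by
  obtain ⟨c, hinj, harc, hv⟩ := hs.exists_zmod hv
  refine ⟨c, ⟨hinj, fun i => ?_⟩, hv⟩
  rw [(harc i).1, show i + 2 = i + 1 + 1 by ring, (harc (i + 1)).1]
  exact (harc i).2

end Coloring

theorem degenerate_vertex_pancyclic_general
    (n : ℕ) (col : Fin n → Fin n → ℕ)
    (hsym : ∀ u v, col u v = col v u)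
    (hmono : ¬ HasMonoTriangle col)
    (f : Fin n → ℕ)
    (hcompat : ∀ u v : Fin n, u ≠ v → col u v = f u ∨ col u v = f v)
    (hnodeg : ∀ S : Set (Fin n), DegenSet col S → S = Set.univ) :
    ∀ v : Fin n, ∀ ℓ : ℕ, 4 ≤ ℓ → ℓ ≤ n → PCThrough col ℓ v := by
  intro v ℓ hℓ hℓn
  obtain ⟨s, hs, hv, rfl⟩ :=
    (isMultipartiteTournament_colorArc hsym hcompat).exists_isDirCycle_length
      (colorArc_part hcompat hmono) (colorArc_twin hcompat hmono)
      (reflTransGen_colorArc hsym hcompat hnodeg) v hℓ (by simpa using hℓn)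
  exact pcThrough_of_isDirCycle hs hv

/-- In a degenerate edge-colored $K_n$ ($n ≥ 4$) with no monochromatic
triangle, in which no proper subset is a degenerate set, every vertex lies on
properly colored cycles of all lengths from 4 to $n$. -/
theorem degenerate_vertex_pancyclic
    (n : ℕ) (hn : 4 ≤ n) (col : Fin n → Fin n → ℕ)
    (hsym : ∀ u v, col u v = col v u)
    (hmono : ¬ HasMonoTriangle col)
    (f : Fin n → ℕ)
    (hcompat : ∀ u v : Fin n, u ≠ v → col u v = f u ∨ col u v = f v)
    (hnodeg : ∀ S : Set (Fin n), DegenSet col S → S = Set.univ) :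
    ∀ v : Fin n, ∀ ℓ : ℕ, 4 ≤ ℓ → ℓ ≤ n → PCThrough col ℓ v :=
  degenerate_vertex_pancyclic_general n col hsym hmono f hcompat hnodeg
end

section
/- Let G be an edge-colored complete graph K_n (n ≥ 4) containing no monochromatic triangle and having a degenerate set S with S ≠ V(G). Then the minimum color degree δ^c(G) is less than (n+1)/2 and the maximum monochromatic degree Δ^mon(G) is at least ⌊n/2⌋. -/
/-- If an edge-colored $K_n$ ($n ≥ 4$) with no monochromatic triangle has a
degenerate set $S ≠ V$, then its minimum color degree is less than $(n+1)/2$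
and its maximum monochromatic degree is at least $⌊n/2⌋$. -/
theorem degenerate_set_degree_bounds
    (n : ℕ) (hn : 4 ≤ n) (col : Fin n → Fin n → ℕ)
    (hsym : ∀ u v, col u v = col v u)
    (hmono : ¬ HasMonoTriangle col)
    (S : Set (Fin n)) (hdeg : DegenSet col S) (hSV : S ≠ Set.univ) :
    (∃ v : Fin n,
      2 * ((Finset.univ.filter fun u => u ≠ v).image (col v)).card < n + 1) ∧
    (∃ (a : ℕ) (v : Fin n),
      n / 2 ≤ (Finset.univ.filter fun u => u ≠ v ∧ col v u = a).card) := by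
  classical
  obtain ⟨hSne, f, hin, hout⟩ := hdeg
  set T : Finset (Fin n) := (Set.toFinite S).toFinset with hT
  have hmemT : ∀ v, v ∈ T ↔ v ∈ S := fun v => Set.Finite.mem_toFinset _
  obtain ⟨w, hw⟩ : ∃ w, w ∉ S := by
    by_contra h; push_neg at h; exact hSV (Set.eq_univ_iff_forall.2 h)
  have hTne : T.Nonempty := ⟨hSne.choose, (hmemT _).2 hSne.choose_spec⟩
  set s := T.card with hs
  have hslt : s < n := by
    have hss : T ⊂ Finset.univ := by
      refine Finset.ssubset_univ_iff.2 ?_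
      intro h
      exact hw ((hmemT w).1 (h ▸ Finset.mem_univ w))
    simpa using Finset.card_lt_card hss
  set g : Fin n → ℕ := fun u => ((T.erase u).filter (fun v => col u v = f u)).card
    with hgdef
  set h : Fin n → ℕ := fun u => ((T.erase u).filter (fun v => col u v = f v)).card
    with hhdef
  -- each pair contributes
  have hsplit : ∀ u ∈ T, s - 1 ≤ g u + h u := by
    intro u hu
    have hsub : T.erase u ⊆
        ((T.erase u).filter (fun v => col u v = f u)) ∪
        ((T.erase u).filter (fun v => col u v = f v)) := by
      intro v hv
      have hvT := Finset.mem_of_mem_erase hv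
      have hvu : v ≠ u := Finset.ne_of_mem_erase hv
      rcases hin u ((hmemT u).1 hu) v ((hmemT v).1 hvT) (Ne.symm hvu) with h1 | h1
      · exact Finset.mem_union_left _ (Finset.mem_filter.2 ⟨hv, h1⟩)
      · exact Finset.mem_union_right _ (Finset.mem_filter.2 ⟨hv, h1⟩)
    have := Finset.card_le_card hsub
    calc s - 1 = (T.erase u).card := (Finset.card_erase_of_mem hu).symm
      _ ≤ _ := this
      _ ≤ g u + h u := Finset.card_union_le _ _
  -- swap argument : ∑ h = ∑ g
  have hswap : ∑ u ∈ T, h u = ∑ u ∈ T, g u := by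
    have e1 : ∀ u : Fin n, h u =
        ∑ v ∈ T, if v ≠ u ∧ col u v = f v then 1 else 0 := by
      intro u
      rw [hhdef]
      simp only
      rw [show (T.erase u).filter (fun v => col u v = f v)
          = T.filter (fun v => v ≠ u ∧ col u v = f v) by
        ext v
        simp [Finset.mem_erase, Finset.mem_filter]
        tauto]
      rw [Finset.card_filter]
    have e2 : ∀ v : Fin n, g v =
        ∑ u ∈ T, if u ≠ v ∧ col v u = f v then 1 else 0 := by
      intro v
      rw [hgdef]
      simp only
      rw [show (T.erase v).filter (fun u => col v u = f v)
          = T.filter (fun u => u ≠ v ∧ col v u = f v) by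
        ext u
        simp [Finset.mem_erase, Finset.mem_filter]
        tauto]
      rw [Finset.card_filter]
    calc ∑ u ∈ T, h u = ∑ u ∈ T, ∑ v ∈ T, (if v ≠ u ∧ col u v = f v then 1 else 0) := by
          exact Finset.sum_congr rfl fun u _ => e1 u
      _ = ∑ v ∈ T, ∑ u ∈ T, (if v ≠ u ∧ col u v = f v then 1 else 0) :=
          Finset.sum_comm
      _ = ∑ v ∈ T, ∑ u ∈ T, (if u ≠ v ∧ col v u = f v then 1 else 0) := by
          refine Finset.sum_congr rfl fun v _ => Finset.sum_congr rfl fun u _ => ?_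
          rw [hsym u v]
          congr 1
          exact propext (and_congr_left' ne_comm)
      _ = ∑ v ∈ T, g v := Finset.sum_congr rfl fun v _ => (e2 v).symm
  have hsum : s * (s - 1) ≤ ∑ u ∈ T, 2 * g u := by
    calc s * (s - 1) = ∑ _u ∈ T, (s - 1) := by rw [Finset.sum_const, smul_eq_mul]
      _ ≤ ∑ u ∈ T, (g u + h u) := Finset.sum_le_sum hsplit
      _ = ∑ u ∈ T, g u + ∑ u ∈ T, h u := Finset.sum_add_distrib
      _ = ∑ u ∈ T, 2 * g u := by
          rw [hswap, ← Finset.sum_add_distrib]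
          exact Finset.sum_congr rfl fun u _ => (two_mul _).symm
  -- a vertex with many out-edges
  obtain ⟨u0, hu0T, hu0⟩ : ∃ u ∈ T, s - 1 ≤ 2 * g u := by
    by_contra hcon
    push_neg at hcon
    have h1 : ∑ u ∈ T, 2 * g u ≤ ∑ _u ∈ T, (s - 2) :=
      Finset.sum_le_sum (fun u hu => by have := hcon u hu; omega)
    rw [Finset.sum_const, smul_eq_mul] at h1
    have hs2 : 2 ≤ s := by
      obtain ⟨u, hu⟩ := hTne
      have := hcon u hu
      omega
    have := le_trans hsum h1
    have := Nat.le_of_mul_le_mul_left this (by omega : 0 < s)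
    omega
  set a := f u0 with ha
  set M : Finset (Fin n) := Finset.univ.filter (fun v => v ≠ u0 ∧ col u0 v = a)
    with hM
  -- M is large
  have hMcard : g u0 + (n - s) ≤ M.card := by
    set A : Finset (Fin n) := (T.erase u0).filter (fun v => col u0 v = f u0)
    set B : Finset (Fin n) := Finset.univ \ T with hB
    have hBcard : B.card = n - s := by
      rw [hB, Finset.card_sdiff_of_subset (Finset.subset_univ T)]
      simp [hs]
    have hdisj : Disjoint A B := by
      rw [Finset.disjoint_left]
      intro v hv hvB
      have : v ∈ T := Finset.mem_of_mem_erase (Finset.mem_filter.1 hv).1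
      exact (Finset.mem_sdiff.1 hvB).2 this
    have hsub : A ∪ B ⊆ M := by
      intro v hv
      rcases Finset.mem_union.1 hv with hv | hv
      · obtain ⟨hv1, hv2⟩ := Finset.mem_filter.1 hv
        exact Finset.mem_filter.2 ⟨Finset.mem_univ v,
          Finset.ne_of_mem_erase hv1, hv2⟩
      · have hvT : v ∉ T := (Finset.mem_sdiff.1 hv).2
        have hvS : v ∉ S := fun hc => hvT ((hmemT v).2 hc)
        have hvu : v ≠ u0 := fun hc => hvT (hc ▸ hu0T)
        refine Finset.mem_filter.2 ⟨Finset.mem_univ v, hvu, ?_⟩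
        exact hout u0 ((hmemT u0).1 hu0T) v hvS
    calc g u0 + (n - s) = A.card + B.card := by rw [hBcard]
      _ = (A ∪ B).card := (Finset.card_union_of_disjoint hdisj).symm
      _ ≤ M.card := Finset.card_le_card hsub
  have hMn : n ≤ 2 * M.card := by omega
  refine ⟨⟨u0, ?_⟩, ⟨a, u0, ?_⟩⟩
  swap
  · show n / 2 ≤ M.card
    omega
  -- color degree bound
  set X : Finset (Fin n) := Finset.univ.filter (fun u => u ≠ u0) with hX
  have hXcard : X.card = n - 1 := by
    rw [hX]
    rw [show Finset.univ.filter (fun u => u ≠ u0) = Finset.univ.erase u0 by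
      ext v; simp [Finset.mem_erase]]
    simp [Finset.card_erase_of_mem]
  have hMX : M = X.filter (fun v => col u0 v = a) := by
    rw [hM, hX, Finset.filter_filter]
  have hsubI : X.image (col u0) ⊆
      insert a ((X.filter (fun v => col u0 v ≠ a)).image (col u0)) := by
    intro c hc
    obtain ⟨x, hx, rfl⟩ := Finset.mem_image.1 hc
    by_cases hxa : col u0 x = a
    · rw [hxa]; exact Finset.mem_insert_self _ _
    · exact Finset.mem_insert_of_mem
        (Finset.mem_image.2 ⟨x, Finset.mem_filter.2 ⟨hx, hxa⟩, rfl⟩)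
  have hfc : (X.filter (fun v => col u0 v = a)).card
      + (X.filter (fun v => col u0 v ≠ a)).card = X.card :=
    Finset.card_filter_add_card_filter_not _
  have hIle : (X.image (col u0)).card ≤ 1 + ((n - 1) - M.card) := by
    calc (X.image (col u0)).card
        ≤ (insert a ((X.filter (fun v => col u0 v ≠ a)).image (col u0))).card :=
          Finset.card_le_card hsubI
      _ ≤ ((X.filter (fun v => col u0 v ≠ a)).image (col u0)).card + 1 :=
          Finset.card_insert_le _ _
      _ ≤ (X.filter (fun v => col u0 v ≠ a)).card + 1 :=
          Nat.add_le_add_right Finset.card_image_le 1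
      _ = 1 + ((n - 1) - M.card) := by
          rw [← hMX] at hfc
          omega
  omega
end

section
/- Let G be an edge-colored complete graph containing no properly colored triangle. Then V(G) can be partitioned into nonempty parts V_1, …, V_p (p ≥ 2 when |V(G)| ≥ 2) such that all edges between any two fixed parts V_i and V_j receive a single common color, and at most two colors in total appear on edges between different parts (Gallai's theorem). -/
/-!
For a set `C` of colours, consider the graph of edges whose colour avoids `C`. If `z` lies outside
the component of `x` and `y`, then `z` sees `x` and `y` in the same colour: along a path from `x`
to `y` the edges to `z` have colours in `C` and the path edges do not, so the absence of rainbow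
triangles forces consecutive edges to `z` to agree. Hence the components form a partition in which
two parts are joined in a single colour and all cross edges have colours in `C`.

It remains to find two colours `a`, `b` whose avoiding graph is disconnected, by induction on the
number of vertices. Delete a vertex `v` and take `a`, `b` for the rest. If some component sees `v`
only in colours `a`, `b`, it is still a component. Otherwise every component contains a vertex
joined to `v` in a third colour, and a triangle argument shows that `v` sees all vertices in just
two colours, which then isolate `v`.
-/

namespace GallaiColoring

open SimpleGraph

variable {V W α : Type*}

def NoRainbowTriangle (col : V → V → α) : Prop :=
  ¬ ∃ x y z : V, x ≠ y ∧ y ≠ z ∧ x ≠ z ∧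
    col x y ≠ col y z ∧ col y z ≠ col x z ∧ col x y ≠ col x z

theorem NoRainbowTriangle.legs_eq {col : V → V → α} (hno : NoRainbowTriangle col)
    {x y z : V} (hzx : z ≠ x) (hzy : z ≠ y) (hxy : x ≠ y)
    (hx : col z x ≠ col x y) (hy : col x y ≠ col z y) : col z x = col z y :=
  by_contra fun h => hno ⟨z, x, y, hzx, hxy, hzy, hx, hy, h⟩

theorem NoRainbowTriangle.comp {col : V → V → α} (hno : NoRainbowTriangle col)
    {g : W → V} (hg : g.Injective) : NoRainbowTriangle fun x y => col (g x) (g y) :=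
  fun ⟨x, y, z, hxy, hyz, hxz, h⟩ => hno ⟨g x, g y, g z, hg.ne hxy, hg.ne hyz, hg.ne hxz, h⟩

def avoidGraph (col : V → V → α) (C : Set α) : SimpleGraph V :=
  SimpleGraph.fromRel fun x y => col x y ∉ C

section avoidGraph

variable {col : V → V → α} {C : Set α}

theorem mem_of_not_reachable_avoidGraph {x y : V} (h : ¬ (avoidGraph col C).Reachable x y) :
    col x y ∈ C := by
  by_contra hxy
  refine h (Adj.reachable ?_)
  exact (fromRel_adj _ x y).2 ⟨fun e => h (e ▸ Reachable.refl x), Or.inl hxy⟩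

variable (hsym : ∀ u v, col u v = col v u)
include hsym

theorem avoidGraph_adj_iff {x y : V} :
    (avoidGraph col C).Adj x y ↔ x ≠ y ∧ col x y ∉ C := by
  rw [avoidGraph, fromRel_adj, hsym y x, or_self]

theorem not_preconnected_avoidGraph_of_cut {S : Set V} {x y : V} (hx : x ∈ S) (hy : y ∉ S)
    (hS : ∀ x ∈ S, ∀ y ∉ S, col x y ∈ C) : ¬ (avoidGraph col C).Preconnected := by
  intro h
  obtain ⟨d, -, hd₁, hd₂⟩ := (h x y).some.exists_boundary_dart S hx hy
  exact ((avoidGraph_adj_iff hsym).1 d.adj).2 (hS _ hd₁ _ hd₂)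

variable (hno : NoRainbowTriangle col)
include hno

theorem col_eq_of_reachable_avoidGraph {x y z : V} (hxy : (avoidGraph col C).Reachable x y)
    (hzx : ¬ (avoidGraph col C).Reachable z x) : col z x = col z y := by
  obtain ⟨p⟩ := hxy
  induction p with
  | nil => rfl
  | @cons u w y hadj p ih =>
    have hzw : ¬ (avoidGraph col C).Reachable z w :=
      fun h => hzx (h.trans hadj.reachable.symm)
    have hne : ∀ {t}, ¬ (avoidGraph col C).Reachable z t → z ≠ t :=
      fun h e => h (e ▸ .refl _)
    obtain ⟨huw, hc⟩ := (avoidGraph_adj_iff hsym).1 hadj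
    refine (hno.legs_eq (hne hzx) (hne hzw) huw ?_ ?_).trans (ih hzw)
    · exact fun e => hc (e ▸ mem_of_not_reachable_avoidGraph hzx)
    · exact fun e => hc (e ▸ mem_of_not_reachable_avoidGraph hzw)

theorem col_eq_of_not_reachable_avoidGraph {u v u' v' : V}
    (huv : ¬ (avoidGraph col C).Reachable u v)
    (hu : (avoidGraph col C).Reachable u u') (hv : (avoidGraph col C).Reachable v v') :
    col u v = col u' v' := by
  have hvu' : ¬ (avoidGraph col C).Reachable v u' := fun h => huv (hu.trans h.symm)
  calc col u v = col v u := hsym u v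
    _ = col v u' := col_eq_of_reachable_avoidGraph hsym hno hu (fun h => huv h.symm)
    _ = col u' v := hsym v u'
    _ = col u' v' := col_eq_of_reachable_avoidGraph hsym hno hv (fun h => hvu' h.symm)

end avoidGraph

section OnePointExtension

/- `f w` is the colour of the edge from a new vertex to `w`; `hf` says that no triangle through the
new vertex is rainbow. -/
variable {col : W → W → α} {f : W → α} {C : Set α}

theorem exists_not_mem_not_reachable (hG : ¬ (avoidGraph col C).Preconnected)
    (hcomp : ∀ w, ∃ u, (avoidGraph col C).Reachable w u ∧ f u ∉ C) (w : W) :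
    ∃ u, f u ∉ C ∧ ¬ (avoidGraph col C).Reachable w u := by
  obtain ⟨p, q, hpq⟩ : ∃ p q, ¬ (avoidGraph col C).Reachable p q := by
    simpa [Preconnected] using hG
  by_cases hwp : (avoidGraph col C).Reachable w p
  · obtain ⟨u, hqu, hu⟩ := hcomp q
    exact ⟨u, hu, fun hwu => hpq (hwp.symm.trans (hwu.trans hqu.symm))⟩
  · obtain ⟨u, hpu, hu⟩ := hcomp p
    exact ⟨u, hu, fun hwu => hwp (hwu.trans hpu.symm)⟩

variable (hf : ∀ u w, u ≠ w → f u = f w ∨ f u = col u w ∨ f w = col u w)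
include hf

theorem eq_of_not_mem_of_not_reachable {u u' : W} (hu : f u ∉ C) (hu' : f u' ∉ C)
    (h : ¬ (avoidGraph col C).Reachable u u') : f u = f u' := by
  have hC := mem_of_not_reachable_avoidGraph h
  rcases hf u u' (fun e => h (e ▸ .refl _)) with e | e | e
  · exact e
  · exact absurd (e ▸ hC) hu
  · exact absurd (e ▸ hC) hu'

theorem eq_col_of_mem_of_not_mem (hsym : ∀ u v, col u v = col v u) {w u : W} (hw : f w ∈ C)
    (hu : f u ∉ C) (h : ¬ (avoidGraph col C).Reachable w u) : f w = col w u := by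
  have hC := mem_of_not_reachable_avoidGraph h
  rcases hf u w (fun e => h (e ▸ .refl _)) with e | e | e
  · exact absurd (e ▸ hw) hu
  · exact absurd (e ▸ hsym w u ▸ hC) hu
  · exact e.trans (hsym u w)

variable (hG : ¬ (avoidGraph col C).Preconnected)
  (hcomp : ∀ w, ∃ u, (avoidGraph col C).Reachable w u ∧ f u ∉ C)
include hG hcomp

theorem eq_of_not_mem {u u' : W} (hu : f u ∉ C) (hu' : f u' ∉ C) : f u = f u' := by
  by_cases h : (avoidGraph col C).Reachable u u'
  · obtain ⟨u'', hu'', hnr⟩ := exists_not_mem_not_reachable hG hcomp u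
    have hnr' : ¬ (avoidGraph col C).Reachable u' u'' := fun h' => hnr (h.trans h')
    exact (eq_of_not_mem_of_not_reachable hf hu hu'' hnr).trans
      (eq_of_not_mem_of_not_reachable hf hu' hu'' hnr').symm
  · exact eq_of_not_mem_of_not_reachable hf hu hu' h

theorem eq_of_mem (hsym : ∀ u v, col u v = col v u) (hno : NoRainbowTriangle col) {w w' : W}
    (hw : f w ∈ C) (hw' : f w' ∈ C) : f w = f w' := by
  by_cases h : (avoidGraph col C).Reachable w w'
  · obtain ⟨u, hu, hnr⟩ := exists_not_mem_not_reachable hG hcomp w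
    have hnr' : ¬ (avoidGraph col C).Reachable w' u := fun h' => hnr (h.trans h')
    calc f w = col w u := eq_col_of_mem_of_not_mem hf hsym hw hu hnr
      _ = col w' u := col_eq_of_not_reachable_avoidGraph hsym hno hnr h .rfl
      _ = f w' := (eq_col_of_mem_of_not_mem hf hsym hw' hu hnr').symm
  · obtain ⟨u, hwu, hu⟩ := hcomp w
    obtain ⟨u', hwu', hu'⟩ := hcomp w'
    have hnr : ¬ (avoidGraph col C).Reachable w u' := fun h' => h (h'.trans hwu'.symm)
    have hnr' : ¬ (avoidGraph col C).Reachable w' u := fun h' => h (hwu.trans h'.symm)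
    calc f w = col w u' := eq_col_of_mem_of_not_mem hf hsym hw hu' hnr
      _ = col u w' := col_eq_of_not_reachable_avoidGraph hsym hno hnr hwu hwu'.symm
      _ = col w' u := hsym u w'
      _ = f w' := (eq_col_of_mem_of_not_mem hf hsym hw' hu hnr').symm

theorem exists_forall_eq_or_eq (hsym : ∀ u v, col u v = col v u)
    (hno : NoRainbowTriangle col) : ∃ e d, ∀ w, f w = e ∨ f w = d := by
  obtain ⟨w₀⟩ : Nonempty W := by
    by_contra hW
    exact hG fun w => (hW ⟨w⟩).elim
  obtain ⟨u₀, -, hu₀⟩ := hcomp w₀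
  by_cases hin : ∃ w₁, f w₁ ∈ C
  · obtain ⟨w₁, hw₁⟩ := hin
    refine ⟨f u₀, f w₁, fun w => ?_⟩
    by_cases hw : f w ∈ C
    · exact .inr (eq_of_mem hf hG hcomp hsym hno hw hw₁)
    · exact .inl (eq_of_not_mem hf hG hcomp hw hu₀)
  · simp only [not_exists] at hin
    exact ⟨f u₀, f u₀, fun w => .inl (eq_of_not_mem hf hG hcomp (hin w) hu₀)⟩

end OnePointExtension

theorem not_preconnected_avoidGraph_of_component {col : V → V → α}
    (hsym : ∀ u v, col u v = col v u) {C : Set α} {v : V} {w₀ : {w // w ≠ v}}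
    (h : ∀ u, (avoidGraph (fun x y : {w // w ≠ v} => col x y) C).Reachable w₀ u →
      col v u ∈ C) :
    ¬ (avoidGraph col C).Preconnected := by
  let K := {u | (avoidGraph (fun x y : {w // w ≠ v} => col x y) C).Reachable w₀ u}
  refine not_preconnected_avoidGraph_of_cut hsym (S := Subtype.val '' K)
    ⟨w₀, Reachable.refl _, rfl⟩ (y := v) (fun ⟨u, _, hu⟩ => u.2 hu) ?_
  rintro _ ⟨x, hx, rfl⟩ y hy
  by_cases hyv : y = v
  · rw [hyv, hsym]
    exact h x hx
  · exact mem_of_not_reachable_avoidGraph (col := fun x y : {w // w ≠ v} => col x y)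
      (y := ⟨y, hyv⟩) fun hxy => hy ⟨⟨y, hyv⟩, hx.trans hxy, rfl⟩

theorem exists_not_preconnected_avoidGraph [Finite V] [Nontrivial V] {col : V → V → α}
    (hsym : ∀ u v, col u v = col v u) (hno : NoRainbowTriangle col) :
    ∃ a b, ¬ (avoidGraph col {a, b}).Preconnected := by
  revert ‹Nontrivial V›
  induction V using Finite.induction_subsingleton_or_nontrivial with
  | hbase V => exact (not_nontrivial V ‹_›).elim
  | hstep V ih =>
    intro
    obtain ⟨v⟩ : Nonempty V := inferInstance
    obtain ⟨u, hu⟩ := exists_ne v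
    have hcut : ∀ {C : Set α}, (∀ w ≠ v, col v w ∈ C) →
        ¬ (avoidGraph col C).Preconnected :=
      fun hC => not_preconnected_avoidGraph_of_cut hsym (S := {v}) rfl hu
        fun x hx y hy => (Set.mem_singleton_iff.1 hx) ▸ hC y hy
    rcases subsingleton_or_nontrivial {w // w ≠ v} with hW | hW
    · refine ⟨col v u, col v u, hcut fun w hw => ?_⟩
      obtain rfl : w = u :=
        congrArg Subtype.val (Subsingleton.elim (⟨w, hw⟩ : {w // w ≠ v}) ⟨u, hu⟩)
      exact Set.mem_insert _ _
    let col' : {w // w ≠ v} → {w // w ≠ v} → α := fun x y => col x y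
    obtain ⟨a, b, hG⟩ := ih {w // w ≠ v} (Finite.card_subtype_lt (not_not.2 rfl))
      (col := col') (fun x y => hsym x y) (hno.comp Subtype.val_injective)
    have hf : ∀ x y : {w // w ≠ v}, x ≠ y →
        col v x = col v y ∨ col v x = col' x y ∨ col v y = col' x y := by
      intro x y hxy
      by_contra h
      simp only [not_or] at h
      exact hno ⟨v, x, y, x.2.symm, Subtype.coe_ne_coe.2 hxy, y.2.symm,
        h.2.1, Ne.symm h.2.2, h.1⟩
    by_cases hcomp :
        ∀ w, ∃ u, (avoidGraph col' {a, b}).Reachable w u ∧ col v u ∉ ({a, b} : Set α)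
    · obtain ⟨e, d, hed⟩ := exists_forall_eq_or_eq hf hG hcomp (fun x y => hsym x y)
        (hno.comp Subtype.val_injective)
      exact ⟨e, d, hcut fun w hw => hed ⟨w, hw⟩⟩
    · simp only [not_forall, not_exists, not_and, not_not] at hcomp
      obtain ⟨w₀, hw₀⟩ := hcomp
      exact ⟨a, b, not_preconnected_avoidGraph_of_component hsym hw₀⟩

end GallaiColoring

open GallaiColoring SimpleGraph

/-- Gallai's theorem: an edge-colored complete graph with no rainbow triangle
admits a partition of its vertex set into (at least two, when $|V| ≥ 2$)
parts such that all edges between two fixed parts get one color, and at most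
two colors appear between parts in total. -/
theorem gallai_partition
    {V : Type*} [Fintype V] (col : V → V → ℕ)
    (hsym : ∀ u v, col u v = col v u)
    (hno : ¬ ∃ x y z : V, x ≠ y ∧ y ≠ z ∧ x ≠ z ∧
        col x y ≠ col y z ∧ col y z ≠ col x z ∧ col x y ≠ col x z) :
    ∃ (k : ℕ) (p : V → Fin k), Function.Surjective p ∧
      (2 ≤ Fintype.card V → 2 ≤ k) ∧
      (∀ i j : Fin k, i ≠ j → ∃ a : ℕ, ∀ u v : V, p u = i → p v = j → col u v = a) ∧
      (∃ a b : ℕ, ∀ u v : V, p u ≠ p v → col u v = a ∨ col u v = b) := by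
  classical
  obtain ⟨a, b, hdisc⟩ :
      ∃ a b : ℕ, 2 ≤ Fintype.card V → ¬ (avoidGraph col {a, b}).Preconnected := by
    by_cases hV : 2 ≤ Fintype.card V
    · have := Fintype.one_lt_card_iff_nontrivial.mp hV
      obtain ⟨a, b, h⟩ := exists_not_preconnected_avoidGraph hsym hno
      exact ⟨a, b, fun _ => h⟩
    · exact ⟨0, 0, fun h => absurd h hV⟩
  let G := avoidGraph col {a, b}
  let p : V → Fin _ := fun v => Fintype.equivFin G.ConnectedComponent (G.connectedComponentMk v)
  have hp : ∀ u v, p u = p v ↔ G.Reachable u v := by simp [p, ConnectedComponent.eq]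
  have hsurj : Function.Surjective p :=
    (Fintype.equivFin _).surjective.comp Quot.mk_surjective
  refine ⟨_, p, hsurj, fun hV => ?_, fun i j hij => ?_, a, b, fun u v huv => ?_⟩
  · obtain ⟨u, v, huv⟩ : ∃ u v, ¬ G.Reachable u v := by simpa [Preconnected] using hdisc hV
    exact Fintype.one_lt_card_iff.2 ⟨_, _, mt ConnectedComponent.eq.1 huv⟩
  · obtain ⟨u₀, rfl⟩ := hsurj i
    obtain ⟨v₀, rfl⟩ := hsurj j
    exact ⟨col u₀ v₀, fun u v hu hv => (col_eq_of_not_reachable_avoidGraph hsym hno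
      (mt (hp _ _).2 hij) ((hp _ _).1 hu.symm) ((hp _ _).1 hv.symm)).symm⟩
  · simpa using mem_of_not_reachable_avoidGraph (mt (hp u v).2 huv)
end

section
/- Let G be an edge-colored complete graph with no monochromatic triangle, let C = v_1v_2⋯v_ℓv_1 be a properly colored cycle, let z be a vertex off C with col(zv_i) = col(v_iv_{i+1}) =: f(v_i) for all i (indices mod ℓ), and suppose no properly colored cycle of length ℓ+1 passes through a fixed vertex u* ∈ V(C). If some chord v_iv_j satisfies col(v_iv_j) ∉ {f(v_i), f(v_j)}, then ℓ is even, j − i ≡ ℓ/2 (mod ℓ), every color on C appears exactly twice on C, f(v_i) = f(v_{i+ℓ/2}) for all i, and col(v_iv_{i+ℓ/2}) = f(v_{i−1}) for all i. -/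
namespace ChordAux

lemma cast_eq_of_lt {ℓ p q : ℕ} (hp : p < ℓ) (hq : q < ℓ)
    (h : (p : ZMod ℓ) = q) : p = q := by
  have h2 := congrArg ZMod.val h
  rwa [ZMod.val_cast_of_lt hp, ZMod.val_cast_of_lt hq] at h2

lemma cast_eq_window {ℓ p q : ℕ} [NeZero ℓ] (h : (p : ZMod ℓ) = q)
    (h1 : p < q + ℓ) (h2 : q < p + ℓ) : p = q := by
  rw [ZMod.natCast_eq_natCast_iff] at h
  rcases le_total p q with hle | hle
  · have hd := (Nat.modEq_iff_dvd' hle).mp h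
    have := Nat.eq_zero_of_dvd_of_lt hd (by omega)
    omega
  · have hd := (Nat.modEq_iff_dvd' hle).mp h.symm
    have := Nat.eq_zero_of_dvd_of_lt hd (by omega)
    omega

lemma cast_modeq {ℓ p q : ℕ} [NeZero ℓ] (h : (p : ZMod ℓ) = q) (hle : q ≤ p) :
    ∃ k, p = q + ℓ * k := by
  rw [ZMod.natCast_eq_natCast_iff] at h
  obtain ⟨k, hk⟩ := (Nat.modEq_iff_dvd' hle).mp h.symm
  exact ⟨k, by omega⟩

lemma val_natCast_eq {ℓ : ℕ} [NeZero ℓ] (x : ZMod ℓ) : ((x.val : ℕ) : ZMod ℓ) = x :=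
  (ZMod.natCast_val x).trans (ZMod.cast_id _ _)

lemma buildPC {V : Type*} (col : V → V → ℕ) {n : ℕ} [NeZero n] (W : ℕ → V)
    (hinj : ∀ p < n, ∀ q < n, W p = W q → p = q)
    (hprop : ∀ p < n, col (W p) (W ((p+1) % n)) ≠ col (W ((p+1) % n)) (W ((p+2) % n))) :
    IsPCCycle col (fun t : ZMod n => W t.val) := by
  have hval : ∀ (t : ZMod n) (k : ℕ), (t + (k : ZMod n)).val = (t.val + k) % n := by
    intro t k
    rw [ZMod.val_add, ZMod.val_natCast, Nat.add_mod_mod]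
  constructor
  · intro s t h
    exact ZMod.val_injective n (hinj _ s.val_lt _ t.val_lt h)
  · intro t
    have h1 : (t + 1).val = (t.val + 1) % n := by
      have := hval t 1; push_cast at this; exact this
    have h2 : (t + 2).val = (t.val + 2) % n := by
      have := hval t 2; push_cast at this; exact this
    show col (W t.val) (W ((t+1).val)) ≠ col (W ((t+1).val)) (W ((t+2).val))
    rw [h1, h2]
    exact hprop t.val t.val_lt

lemma half_spec {ℓ : ℕ} [NeZero ℓ] {x : ZMod ℓ} (hx : x ≠ 0) (h2 : x + x = 0) :
    ℓ % 2 = 0 ∧ x = ((ℓ / 2 : ℕ) : ZMod ℓ) := by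
  have hal : x.val < ℓ := x.val_lt
  have ha0 : x.val ≠ 0 := by
    intro h
    apply hx
    rw [← val_natCast_eq x, h]
    simp
  have hcast : ((x.val + x.val : ℕ) : ZMod ℓ) = ((0 : ℕ) : ZMod ℓ) := by
    push_cast [val_natCast_eq x]
    exact h2
  obtain ⟨k, hk⟩ := cast_modeq hcast (by omega)
  have hk2 : ℓ * k < ℓ * 2 := by omega
  have hk3 : k < 2 := lt_of_mul_lt_mul_left hk2 (Nat.zero_le ℓ)
  interval_cases k
  · omega
  · have hℓ : ℓ = x.val + x.val := by omega
    refine ⟨by omega, ?_⟩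
    have h5 : ℓ / 2 = x.val := by omega
    rw [h5, val_natCast_eq x]

end ChordAux

namespace ChordAux

variable {V : Type*} {ℓ : ℕ} [NeZero ℓ]

/-- forward edge color -/
def Fc (col : V → V → ℕ) (c : ZMod ℓ → V) (m : ZMod ℓ) : ℕ := col (c m) (c (m+1))

/-- a bad chord -/
def Bad (col : V → V → ℕ) (c : ZMod ℓ → V) (i j : ZMod ℓ) : Prop :=
  i ≠ j ∧ col (c i) (c j) ≠ Fc col c i ∧ col (c i) (c j) ≠ Fc col c j

section Main
set_option linter.unusedSectionVars false

variable {col : V → V → ℕ} {c : ZMod ℓ → V} {z : V}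

lemma fwd_ne (hC : IsPCCycle col c) (m : ZMod ℓ) :
    col (c m) (c (m+1)) ≠ col (c (m+1)) (c (m+2)) := hC.2 m

lemma back_ne (hsym : ∀ u v, col u v = col v u) (hC : IsPCCycle col c) (m : ZMod ℓ) :
    col (c (m+2)) (c (m+1)) ≠ col (c (m+1)) (c m) := by
  intro h
  apply hC.2 m
  rw [hsym (c m) (c (m+1)), ← h, hsym]

lemma mixA_ne (hsym : ∀ u v, col u v = col v u) (hC : IsPCCycle col c) (m : ZMod ℓ) :
    col (c (m+1)) (c (m+2)) ≠ col (c (m+1)) (c m) := by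
  intro h
  apply hC.2 m
  rw [hsym (c m) (c (m+1)), h, hsym]

lemma bad_bounds (hsym : ∀ u v, col u v = col v u) {i j : ZMod ℓ}
    (hbad : Bad col c i j) : 2 ≤ (j - i).val ∧ (j - i).val ≤ ℓ - 2 := by
  obtain ⟨hij, h1, h2⟩ := hbad
  have hlt : (j - i).val < ℓ := (j - i).val_lt
  have hne0 : (j - i).val ≠ 0 := by
    intro h
    apply hij
    have h0 := val_natCast_eq (j - i)
    rw [h] at h0
    simp at h0
    exact (sub_eq_zero.mp h0.symm).symm
  have hne1 : (j - i).val ≠ 1 := by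
    intro h
    have h0 := val_natCast_eq (j - i)
    rw [h] at h0
    push_cast at h0
    apply h1
    have hj : j = i + 1 := by linear_combination -h0
    rw [Fc, ← hj]
  have hnetop : (j - i).val ≠ ℓ - 1 := by
    intro h
    have h0 := val_natCast_eq (j - i)
    rw [h] at h0
    have hℓ1 : 1 ≤ ℓ := Nat.pos_of_ne_zero (NeZero.ne ℓ)
    rw [Nat.cast_sub hℓ1] at h0
    push_cast [ZMod.natCast_self] at h0
    apply h2
    have hi : i = j + 1 := by linear_combination h0
    rw [Fc, ← hi, hsym]
  omega


lemma stepA (hsym : ∀ u v, col u v = col v u)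
    (hC : IsPCCycle col c) (hz : z ∉ Set.range c)
    (hzc : ∀ m : ZMod ℓ, col z (c m) = col (c m) (c (m + 1)))
    {i₀ : ZMod ℓ} (hnoext : ¬ PCThrough col (ℓ + 1) (c i₀))
    {i j : ZMod ℓ} (hbad : Bad col c i j) :
    Fc col c (i - 1) = Fc col c (j - 1) := by
  by_contra hne
  apply hnoext
  obtain ⟨ha2, haℓ⟩ := bad_bounds hsym hbad
  set a := (j - i).val with hadef
  have hlt : a < ℓ := (j - i).val_lt
  have hl4 : 4 ≤ ℓ := by omega
  have hacast : ((a : ℕ) : ZMod ℓ) = j - i := val_natCast_eq (j - i)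
  have hji : j - (a : ZMod ℓ) = i := by rw [hacast]; ring
  set W : ℕ → V := fun p => if p = 0 then z else if p ≤ a then c (j - (p : ZMod ℓ))
    else c (j + (p : ZMod ℓ) - (a : ZMod ℓ) - 1) with hWdef
  have hW0 : W 0 = z := by simp [hWdef]
  have hWb : ∀ p : ℕ, p ≠ 0 → p ≤ a → W p = c (j - (p : ZMod ℓ)) := by
    intro p h1 h2; simp [hWdef, h1, h2]
  have hWf : ∀ p : ℕ, a < p → W p = c (j + (p : ZMod ℓ) - (a : ZMod ℓ) - 1) := by
    intro p h
    have h1 : p ≠ 0 := by omega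
    have h2 : ¬ p ≤ a := by omega
    simp [hWdef, h1, h2]
  have hWc : ∀ p : ℕ, p ≠ 0 → ∃ m : ZMod ℓ, W p = c m := by
    intro p h1
    by_cases h2 : p ≤ a
    · exact ⟨_, hWb p h1 h2⟩
    · exact ⟨_, hWf p (by omega)⟩
  have hinj : ∀ p < ℓ+1, ∀ q < ℓ+1, W p = W q → p = q := by
    intro p hp q hq h
    by_cases hp0 : p = 0 <;> by_cases hq0 : q = 0
    · omega
    · exfalso
      obtain ⟨m, hm⟩ := hWc q hq0
      rw [hp0, hW0, hm] at h
      exact hz ⟨m, h.symm⟩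
    · exfalso
      obtain ⟨m, hm⟩ := hWc p hp0
      rw [hq0, hW0, hm] at h
      exact hz ⟨m, h⟩
    · by_cases hpa : p ≤ a <;> by_cases hqa : q ≤ a
      · rw [hWb p hp0 hpa, hWb q hq0 hqa] at h
        have h2 := hC.1 h
        have h3 : ((p:ℕ) : ZMod ℓ) = ((q:ℕ) : ZMod ℓ) := by linear_combination -h2
        exact cast_eq_of_lt (by omega) (by omega) h3
      · exfalso
        rw [hWb p hp0 hpa, hWf q (by omega)] at h
        have h2 := hC.1 h
        have h3 : ((a + 1 : ℕ) : ZMod ℓ) = ((q + p : ℕ) : ZMod ℓ) := by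
          push_cast
          linear_combination h2
        have := cast_eq_window h3 (by omega) (by omega)
        omega
      · exfalso
        rw [hWf p (by omega), hWb q hq0 hqa] at h
        have h2 := hC.1 h
        have h3 : ((a + 1 : ℕ) : ZMod ℓ) = ((p + q : ℕ) : ZMod ℓ) := by
          push_cast
          linear_combination -h2
        have := cast_eq_window h3 (by omega) (by omega)
        omega
      · rw [hWf p (by omega), hWf q (by omega)] at h
        have h2 := hC.1 h
        have h3 : ((p:ℕ) : ZMod ℓ) = ((q:ℕ) : ZMod ℓ) := by linear_combination h2
        exact cast_eq_window h3 (by omega) (by omega)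
  have hprop : ∀ p < ℓ+1, col (W p) (W ((p+1) % (ℓ+1))) ≠
      col (W ((p+1) % (ℓ+1))) (W ((p+2) % (ℓ+1))) := by
    intro p hp
    obtain ⟨hij, hch1, hch2⟩ := hbad
    simp only [Fc] at hch1 hch2
    by_cases h0 : p = 0
    · subst h0
      rw [Nat.mod_eq_of_lt (by omega), Nat.mod_eq_of_lt (by omega), hW0,
        hWb 1 (by omega) (by omega), hWb 2 (by omega) (by omega)]
      rw [hzc (j - ((1:ℕ) : ZMod ℓ))]
      have h := mixA_ne hsym hC (j - ((2:ℕ) : ZMod ℓ))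
      push_cast
      push_cast at h
      ring_nf
      ring_nf at h
      exact h
    by_cases hc2 : p + 2 ≤ a
    · rw [Nat.mod_eq_of_lt (by omega), Nat.mod_eq_of_lt (by omega),
        hWb p h0 (by omega), hWb (p+1) (by omega) (by omega),
        hWb (p+2) (by omega) (by omega)]
      have h := back_ne hsym hC (j - (p : ZMod ℓ) - 2)
      push_cast
      ring_nf
      ring_nf at h
      exact h
    by_cases hc3 : p + 1 = a
    · rw [Nat.mod_eq_of_lt (by omega), Nat.mod_eq_of_lt (by omega),
        hWb p h0 (by omega), hWb (p+1) (by omega) (by omega),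
        hWf (p+2) (by omega)]
      have e1 : ((p:ℕ) : ZMod ℓ) = (a : ZMod ℓ) - 1 := by
        have h5 : ((p+1 : ℕ) : ZMod ℓ) = (a : ZMod ℓ) := by rw [hc3]
        push_cast at h5
        linear_combination h5
      have e2 : j - ((p:ℕ) : ZMod ℓ) = i + 1 := by linear_combination hji - e1
      have e3 : j - (((p+1:ℕ)) : ZMod ℓ) = i := by push_cast; linear_combination hji - e1
      have e4 : j + (((p+2:ℕ)) : ZMod ℓ) - (a : ZMod ℓ) - 1 = j := by
        push_cast; linear_combination e1
      rw [e2, e3, e4]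
      intro hcon
      apply hch1
      rw [← hcon, hsym]
    by_cases hc4 : p = a
    · rw [Nat.mod_eq_of_lt (by omega), Nat.mod_eq_of_lt (by omega),
        hWb p h0 (by omega), hWf (p+1) (by omega), hWf (p+2) (by omega)]
      have e0 : ((p:ℕ) : ZMod ℓ) = (a : ZMod ℓ) := by rw [hc4]
      have e2 : j - ((p:ℕ) : ZMod ℓ) = i := by rw [e0]; exact hji
      have e3 : j + (((p+1:ℕ)) : ZMod ℓ) - (a : ZMod ℓ) - 1 = j := by
        push_cast; linear_combination e0
      have e4 : j + (((p+2:ℕ)) : ZMod ℓ) - (a : ZMod ℓ) - 1 = j + 1 := by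
        push_cast; linear_combination e0
      rw [e2, e3, e4]
      exact hch2
    have hgt : a < p := by omega
    by_cases hc5 : p + 2 ≤ ℓ
    · rw [Nat.mod_eq_of_lt (by omega), Nat.mod_eq_of_lt (by omega),
        hWf p hgt, hWf (p+1) (by omega), hWf (p+2) (by omega)]
      have h := fwd_ne hC (j + (p : ZMod ℓ) - (a : ZMod ℓ) - 1)
      push_cast
      ring_nf
      ring_nf at h
      exact h
    by_cases hc6 : p + 1 = ℓ
    · have hm2 : p + 2 = ℓ + 1 := by omega
      rw [Nat.mod_eq_of_lt (by omega), hm2, Nat.mod_self,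
        hWf p hgt, hWf (p+1) (by omega), hW0]
      have e1 : ((p+1 : ℕ) : ZMod ℓ) = 0 := by rw [hc6]; exact ZMod.natCast_self ℓ
      have e1' : ((p:ℕ) : ZMod ℓ) = -1 := by
        have := e1; push_cast at this; linear_combination this
      have e2 : j + ((p:ℕ) : ZMod ℓ) - (a : ZMod ℓ) - 1 = i - 2 := by
        linear_combination hji + e1'
      have e3 : j + (((p+1:ℕ)) : ZMod ℓ) - (a : ZMod ℓ) - 1 = i - 1 := by
        push_cast; linear_combination hji + e1'
      rw [e2, e3, hsym (c (i-1)) z, hzc (i-1)]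
      have h := fwd_ne hC (i - 2)
      ring_nf
      ring_nf at h
      exact h
    have hc7 : p = ℓ := by omega
    have hm1' : (p + 1) % (ℓ+1) = 0 := by rw [hc7]; exact Nat.mod_self _
    have hm2 : (p + 2) % (ℓ+1) = 1 := by
      rw [show p + 2 = (ℓ+1) + 1 by omega, Nat.add_mod_left, Nat.mod_eq_of_lt (by omega)]
    rw [hm1', hm2, hW0, hWf p (by omega), hWb 1 (by omega) (by omega)]
    have e1 : ((p:ℕ) : ZMod ℓ) = 0 := by rw [hc7]; exact ZMod.natCast_self ℓ
    have e2 : j + ((p:ℕ) : ZMod ℓ) - (a : ZMod ℓ) - 1 = i - 1 := by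
      linear_combination hji + e1
    rw [e2, hsym (c (i-1)) z, hzc (i-1), hzc (j - ((1:ℕ) : ZMod ℓ))]
    simp only [Fc] at hne
    push_cast
    exact hne
  refine ⟨fun t => W t.val, buildPC col W hinj hprop, ?_⟩
  set q := (i₀ - j).val with hqdef
  have hqlt : q < ℓ := (i₀ - j).val_lt
  have hqc : ((q:ℕ) : ZMod ℓ) = i₀ - j := val_natCast_eq _
  by_cases hle : q ≤ ℓ - a - 1
  · refine ⟨((a + 1 + q : ℕ) : ZMod (ℓ+1)), ?_⟩
    show W ((((a+1+q:ℕ)) : ZMod (ℓ+1)).val) = c i₀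
    rw [ZMod.val_cast_of_lt (by omega), hWf (a+1+q) (by omega)]
    congr 1
    push_cast
    linear_combination hqc
  · refine ⟨((ℓ - q : ℕ) : ZMod (ℓ+1)), ?_⟩
    show W ((((ℓ - q:ℕ)) : ZMod (ℓ+1)).val) = c i₀
    rw [ZMod.val_cast_of_lt (by omega), hWb (ℓ - q) (by omega) (by omega)]
    congr 1
    rw [Nat.cast_sub (by omega), ZMod.natCast_self]
    linear_combination hqc



lemma stepBad (hsym : ∀ u v, col u v = col v u) (hmono : ¬ HasMonoTriangle col)
    (hC : IsPCCycle col c) (hz : z ∉ Set.range c)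
    (hzc : ∀ m : ZMod ℓ, col z (c m) = col (c m) (c (m + 1)))
    {i₀ : ZMod ℓ} (hnoext : ¬ PCThrough col (ℓ + 1) (c i₀))
    {i j : ZMod ℓ} (hbad : Bad col c i j) :
    Bad col c (i - 1) (j - 1) := by
  have hF := stepA hsym hC hz hzc hnoext hbad
  have hzi : ∀ m : ZMod ℓ, z ≠ c m := fun m h => hz ⟨m, h.symm⟩
  have hne : c (i-1) ≠ c (j-1) := by
    intro h
    have h2 := hC.1 h
    exact hbad.1 (by linear_combination h2)
  have key : col (c (i-1)) (c (j-1)) ≠ Fc col c (i-1) := by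
    intro h
    apply hmono
    refine ⟨z, c (i-1), c (j-1), hzi _, hne, hzi _, ?_, ?_⟩
    · rw [hzc (i-1)]
      simp only [Fc] at h
      exact h.symm
    · rw [hzc (i-1), hzc (j-1)]
      simp only [Fc] at hF
      exact hF
  refine ⟨?_, key, ?_⟩
  · intro h
    exact hbad.1 (by linear_combination h)
  · rw [← hF]
    exact key

lemma propagate (hsym : ∀ u v, col u v = col v u) (hmono : ¬ HasMonoTriangle col)
    (hC : IsPCCycle col c) (hz : z ∉ Set.range c)
    (hzc : ∀ m : ZMod ℓ, col z (c m) = col (c m) (c (m + 1)))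
    {i₀ : ZMod ℓ} (hnoext : ¬ PCThrough col (ℓ + 1) (c i₀))
    {i j : ZMod ℓ} (hbad : Bad col c i j) (m : ZMod ℓ) :
    Bad col c m (m + (j - i)) := by
  have hn : ∀ n : ℕ, Bad col c (i - (n : ZMod ℓ)) (j - (n : ZMod ℓ)) := by
    intro n
    induction n with
    | zero => simpa using hbad
    | succ n ih =>
      have h := stepBad hsym hmono hC hz hzc hnoext ih
      have e1 : i - ((n : ℕ) : ZMod ℓ) - 1 = i - (((n+1 : ℕ)) : ZMod ℓ) := by
        push_cast; ring
      have e2 : j - ((n : ℕ) : ZMod ℓ) - 1 = j - (((n+1 : ℕ)) : ZMod ℓ) := by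
        push_cast; ring
      rwa [e1, e2] at h
  have h := hn (i - m).val
  have e1 : i - (((i - m).val : ℕ) : ZMod ℓ) = m := by rw [val_natCast_eq]; ring
  have e2 : j - (((i - m).val : ℕ) : ZMod ℓ) = m + (j - i) := by rw [val_natCast_eq]; ring
  rwa [e1, e2] at h

lemma periodF (hsym : ∀ u v, col u v = col v u) (hmono : ¬ HasMonoTriangle col)
    (hC : IsPCCycle col c) (hz : z ∉ Set.range c)
    (hzc : ∀ m : ZMod ℓ, col z (c m) = col (c m) (c (m + 1)))
    {i₀ : ZMod ℓ} (hnoext : ¬ PCThrough col (ℓ + 1) (c i₀))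
    {i j : ZMod ℓ} (hbad : Bad col c i j) (m : ZMod ℓ) :
    Fc col c m = Fc col c (m + (j - i)) := by
  have h := stepA hsym hC hz hzc hnoext
    (propagate hsym hmono hC hz hzc hnoext hbad (m+1))
  have e1 : m + 1 - 1 = m := by ring
  have e2 : m + 1 + (j - i) - 1 = m + (j - i) := by ring
  rwa [e1, e2] at h



lemma chordcol (hsym : ∀ u v, col u v = col v u)
    (hC : IsPCCycle col c) (hz : z ∉ Set.range c)
    (hzc : ∀ m : ZMod ℓ, col z (c m) = col (c m) (c (m + 1)))
    {i₀ : ZMod ℓ} (hnoext : ¬ PCThrough col (ℓ + 1) (c i₀))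
    {e : ZMod ℓ} (hb : ∀ m : ZMod ℓ, Bad col c m (m + e)) (i : ZMod ℓ) :
    col (c i) (c (i + e)) = Fc col c (i - 1) := by
  by_contra hne
  apply hnoext
  have hbnds := bad_bounds hsym (hb 0)
  rw [show (0 : ZMod ℓ) + e - 0 = e from by ring] at hbnds
  obtain ⟨ha2, haℓ⟩ := hbnds
  set a := e.val with hadef
  have hlt : a < ℓ := e.val_lt
  have hl4 : 4 ≤ ℓ := by omega
  have hecast : ((a : ℕ) : ZMod ℓ) = e := val_natCast_eq e
  have chord_ne_fwd : ∀ m : ZMod ℓ, col (c (m+e)) (c m) ≠ col (c m) (c (m+1)) := by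
    intro m h
    apply (hb m).2.1
    simp only [Fc]
    rw [hsym (c m) (c (m+e)), h]
  have chord_ne_back : ∀ m : ZMod ℓ, col (c (m+e+1)) (c (m+e)) ≠ col (c (m+e)) (c m) := by
    intro m h
    apply (hb m).2.2
    simp only [Fc]
    calc col (c m) (c (m+e)) = col (c (m+e)) (c m) := hsym _ _
      _ = col (c (m+e+1)) (c (m+e)) := h.symm
      _ = col (c (m+e)) (c (m+e+1)) := hsym _ _
  set W : ℕ → V := fun p => if p = 0 then z else if p = 1 then c (i + e)
    else if p ≤ ℓ - a + 1 then c (i - (p : ZMod ℓ) + 2)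
    else c (i + (p : ZMod ℓ) + (a : ZMod ℓ) - 1) with hWdef
  have hW0 : W 0 = z := by simp [hWdef]
  have hW1 : W 1 = c (i + e) := by simp [hWdef]
  have hWB : ∀ p : ℕ, 2 ≤ p → p ≤ ℓ - a + 1 → W p = c (i - (p : ZMod ℓ) + 2) := by
    intro p h1 h2
    have e0 : p ≠ 0 := by omega
    have e1 : p ≠ 1 := by omega
    simp [hWdef, e0, e1, h2]
  have hWC : ∀ p : ℕ, ℓ - a + 1 < p → W p = c (i + (p : ZMod ℓ) + (a : ZMod ℓ) - 1) := by
    intro p h1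
    have e0 : p ≠ 0 := by omega
    have e1 : p ≠ 1 := by omega
    have e2 : ¬ p ≤ ℓ - a + 1 := by omega
    simp [hWdef, e0, e1, e2]
  have hWc : ∀ p : ℕ, p ≠ 0 → ∃ m : ZMod ℓ, W p = c m := by
    intro p h1
    by_cases h2 : p = 1
    · exact ⟨_, by rw [h2]; exact hW1⟩
    by_cases h3 : p ≤ ℓ - a + 1
    · exact ⟨_, hWB p (by omega) h3⟩
    · exact ⟨_, hWC p (by omega)⟩
  have hinj : ∀ p < ℓ+1, ∀ q < ℓ+1, W p = W q → p = q := by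
    intro p hp q hq h
    by_cases hp0 : p = 0 <;> by_cases hq0 : q = 0
    · omega
    · exfalso
      obtain ⟨m, hm⟩ := hWc q hq0
      rw [hp0, hW0, hm] at h
      exact hz ⟨m, h.symm⟩
    · exfalso
      obtain ⟨m, hm⟩ := hWc p hp0
      rw [hq0, hW0, hm] at h
      exact hz ⟨m, h⟩
    by_cases hp1 : p = 1 <;> by_cases hq1 : q = 1
    · omega
    · exfalso
      by_cases hqB : q ≤ ℓ - a + 1
      · rw [hp1, hW1, hWB q (by omega) hqB] at h
        have h2 := hC.1 h
        have h3 : ((a + q : ℕ) : ZMod ℓ) = ((2 : ℕ) : ZMod ℓ) := by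
          push_cast
          linear_combination h2 + hecast
        have := cast_eq_window h3 (by omega) (by omega)
        omega
      · rw [hp1, hW1, hWC q (by omega)] at h
        have h2 := hC.1 h
        have h3 : ((q : ℕ) : ZMod ℓ) = ((1 : ℕ) : ZMod ℓ) := by
          push_cast
          linear_combination -h2 - hecast
        have := cast_eq_window h3 (by omega) (by omega)
        omega
    · exfalso
      by_cases hpB : p ≤ ℓ - a + 1
      · rw [hq1, hW1, hWB p (by omega) hpB] at h
        have h2 := hC.1 h
        have h3 : ((a + p : ℕ) : ZMod ℓ) = ((2 : ℕ) : ZMod ℓ) := by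
          push_cast
          linear_combination -h2 + hecast
        have := cast_eq_window h3 (by omega) (by omega)
        omega
      · rw [hq1, hW1, hWC p (by omega)] at h
        have h2 := hC.1 h
        have h3 : ((p : ℕ) : ZMod ℓ) = ((1 : ℕ) : ZMod ℓ) := by
          push_cast
          linear_combination h2 - hecast
        have := cast_eq_window h3 (by omega) (by omega)
        omega
    by_cases hpB : p ≤ ℓ - a + 1 <;> by_cases hqB : q ≤ ℓ - a + 1
    · rw [hWB p (by omega) hpB, hWB q (by omega) hqB] at h
      have h2 := hC.1 h
      have h3 : ((p:ℕ) : ZMod ℓ) = ((q:ℕ) : ZMod ℓ) := by linear_combination -h2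
      exact cast_eq_of_lt (by omega) (by omega) h3
    · exfalso
      rw [hWB p (by omega) hpB, hWC q (by omega)] at h
      have h2 := hC.1 h
      have h3 : ((3 : ℕ) : ZMod ℓ) = ((p + q + a : ℕ) : ZMod ℓ) := by
        push_cast
        linear_combination h2
      obtain ⟨k, hk⟩ := cast_modeq h3.symm (by omega)
      have hk2 : ℓ * k < ℓ * 3 := by omega
      have hk3 : k < 3 := lt_of_mul_lt_mul_left hk2 (Nat.zero_le ℓ)
      interval_cases k <;> omega
    · exfalso
      rw [hWC p (by omega), hWB q (by omega) hqB] at h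
      have h2 := hC.1 h
      have h3 : ((3 : ℕ) : ZMod ℓ) = ((q + p + a : ℕ) : ZMod ℓ) := by
        push_cast
        linear_combination -h2
      obtain ⟨k, hk⟩ := cast_modeq h3.symm (by omega)
      have hk2 : ℓ * k < ℓ * 3 := by omega
      have hk3 : k < 3 := lt_of_mul_lt_mul_left hk2 (Nat.zero_le ℓ)
      interval_cases k <;> omega
    · rw [hWC p (by omega), hWC q (by omega)] at h
      have h2 := hC.1 h
      have h3 : ((p:ℕ) : ZMod ℓ) = ((q:ℕ) : ZMod ℓ) := by linear_combination h2
      exact cast_eq_window h3 (by omega) (by omega)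
  have hprop : ∀ p < ℓ+1, col (W p) (W ((p+1) % (ℓ+1))) ≠
      col (W ((p+1) % (ℓ+1))) (W ((p+2) % (ℓ+1))) := by
    intro p hp
    by_cases h0 : p = 0
    · subst h0
      rw [Nat.mod_eq_of_lt (by omega), Nat.mod_eq_of_lt (by omega), hW0, hW1,
        hWB 2 (by omega) (by omega)]
      rw [show i - ((2:ℕ) : ZMod ℓ) + 2 = i from by push_cast; ring]
      rw [hzc (i + e)]
      intro h
      apply (hb i).2.2
      simp only [Fc]
      rw [hsym (c i) (c (i+e)), ← h]
    by_cases h1 : p = 1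
    · subst h1
      rw [Nat.mod_eq_of_lt (by omega), Nat.mod_eq_of_lt (by omega), hW1,
        hWB 2 (by omega) (by omega), hWB 3 (by omega) (by omega)]
      rw [show i - ((2:ℕ) : ZMod ℓ) + 2 = i from by push_cast; ring]
      rw [show i - ((3:ℕ) : ZMod ℓ) + 2 = i - 1 from by push_cast; ring]
      intro h
      apply hne
      simp only [Fc]
      rw [show i - 1 + 1 = i from by ring]
      rw [hsym (c i) (c (i+e)), h]
      exact hsym _ _
    by_cases h2 : p + 2 ≤ ℓ - a + 1
    · rw [Nat.mod_eq_of_lt (by omega), Nat.mod_eq_of_lt (by omega),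
        hWB p (by omega) (by omega), hWB (p+1) (by omega) (by omega),
        hWB (p+2) (by omega) (by omega)]
      have h := back_ne hsym hC (i - (p : ZMod ℓ))
      push_cast
      ring_nf
      ring_nf at h
      exact h
    by_cases h3 : p + 1 = ℓ - a + 1
    · rw [Nat.mod_eq_of_lt (by omega), Nat.mod_eq_of_lt (by omega),
        hWB p (by omega) (by omega), hWB (p+1) (by omega) (by omega),
        hWC (p+2) (by omega)]
      have ep : ((p:ℕ) : ZMod ℓ) = -((a:ℕ) : ZMod ℓ) := by
        have h5 : p = ℓ - a := by omega
        rw [h5, Nat.cast_sub (by omega), ZMod.natCast_self]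
        ring
      rw [show i - ((p:ℕ) : ZMod ℓ) + 2 = i + ((a:ℕ) : ZMod ℓ) + 2 from by rw [ep]; ring]
      rw [show i - (((p+1:ℕ)) : ZMod ℓ) + 2 = i + ((a:ℕ) : ZMod ℓ) + 1 from by
        push_cast; linear_combination -ep]
      rw [show i + (((p+2:ℕ)) : ZMod ℓ) + ((a:ℕ) : ZMod ℓ) - 1 = i + 1 from by
        push_cast; linear_combination ep]
      rw [hecast]
      have h := chord_ne_back (i+1)
      ring_nf
      ring_nf at h
      exact h
    by_cases h4 : p = ℓ - a + 1
    · have ep : ((p:ℕ) : ZMod ℓ) = 1 - ((a:ℕ) : ZMod ℓ) := by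
        rw [h4, Nat.cast_add, Nat.cast_sub (by omega), ZMod.natCast_self]
        push_cast
        ring
      rw [Nat.mod_eq_of_lt (by omega)]
      rw [hWB p (by omega) (by omega), hWC (p+1) (by omega)]
      rw [show i - ((p:ℕ) : ZMod ℓ) + 2 = i + ((a:ℕ) : ZMod ℓ) + 1 from by
        rw [ep]; ring]
      rw [show i + (((p+1:ℕ)) : ZMod ℓ) + ((a:ℕ) : ZMod ℓ) - 1 = i + 1 from by
        push_cast; linear_combination ep]
      by_cases h4b : p + 2 ≤ ℓ
      · rw [Nat.mod_eq_of_lt (by omega), hWC (p+2) (by omega)]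
        rw [show i + (((p+2:ℕ)) : ZMod ℓ) + ((a:ℕ) : ZMod ℓ) - 1 = i + 2 from by
          push_cast; linear_combination ep]
        rw [hecast]
        have h := chord_ne_fwd (i+1)
        ring_nf
        ring_nf at h
        exact h
      · have hm2 : (p + 2) % (ℓ+1) = 0 := by
          rw [show p + 2 = ℓ + 1 from by omega, Nat.mod_self]
        rw [hm2, hW0, hsym (c (i+1)) z, hzc (i+1), hecast]
        have h := chord_ne_fwd (i+1)
        ring_nf
        ring_nf at h
        exact h
    by_cases h5 : p + 2 ≤ ℓ
    · rw [Nat.mod_eq_of_lt (by omega), Nat.mod_eq_of_lt (by omega),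
        hWC p (by omega), hWC (p+1) (by omega), hWC (p+2) (by omega)]
      have h := fwd_ne hC (i + (p : ZMod ℓ) + ((a:ℕ) : ZMod ℓ) - 1)
      push_cast
      ring_nf
      ring_nf at h
      exact h
    by_cases h6 : p + 1 = ℓ
    · have hm2 : (p + 2) % (ℓ+1) = 0 := by
        rw [show p + 2 = ℓ + 1 from by omega, Nat.mod_self]
      rw [Nat.mod_eq_of_lt (by omega), hm2, hWC p (by omega), hWC (p+1) (by omega), hW0]
      have ep : ((p:ℕ) : ZMod ℓ) = -1 := by
        have h7 : ((p+1 : ℕ) : ZMod ℓ) = 0 := by rw [h6]; exact ZMod.natCast_self ℓ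
        push_cast at h7
        linear_combination h7
      rw [show i + ((p:ℕ) : ZMod ℓ) + ((a:ℕ) : ZMod ℓ) - 1 =
        i + ((a:ℕ) : ZMod ℓ) - 2 from by rw [ep]; ring]
      rw [show i + (((p+1:ℕ)) : ZMod ℓ) + ((a:ℕ) : ZMod ℓ) - 1 =
        i + ((a:ℕ) : ZMod ℓ) - 1 from by push_cast; linear_combination ep]
      rw [hsym (c (i + ((a:ℕ) : ZMod ℓ) - 1)) z, hzc (i + ((a:ℕ) : ZMod ℓ) - 1)]
      have h := fwd_ne hC (i + ((a:ℕ) : ZMod ℓ) - 2)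
      ring_nf
      ring_nf at h
      exact h
    have h7 : p = ℓ := by omega
    have hm1 : (p + 1) % (ℓ+1) = 0 := by rw [h7]; exact Nat.mod_self _
    have hm2 : (p + 2) % (ℓ+1) = 1 := by
      rw [show p + 2 = (ℓ+1) + 1 from by omega, Nat.add_mod_left,
        Nat.mod_eq_of_lt (by omega)]
    rw [hm1, hm2, hWC p (by omega), hW0, hW1]
    have ep : ((p:ℕ) : ZMod ℓ) = 0 := by rw [h7]; exact ZMod.natCast_self ℓ
    rw [show i + ((p:ℕ) : ZMod ℓ) + ((a:ℕ) : ZMod ℓ) - 1 =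
      i + ((a:ℕ) : ZMod ℓ) - 1 from by rw [ep]; ring]
    rw [hsym (c (i + ((a:ℕ) : ZMod ℓ) - 1)) z, hzc (i + ((a:ℕ) : ZMod ℓ) - 1),
      hzc (i + e), hecast]
    have h := fwd_ne hC (i + e - 1)
    ring_nf
    ring_nf at h
    exact h
  refine ⟨fun t => W t.val, buildPC col W hinj hprop, ?_⟩
  set q := (i₀ - i).val with hqdef
  have hqlt : q < ℓ := (i₀ - i).val_lt
  have hqc : ((q:ℕ) : ZMod ℓ) = i₀ - i := val_natCast_eq _
  by_cases hq0 : q = 0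
  · refine ⟨((2 : ℕ) : ZMod (ℓ+1)), ?_⟩
    show W (((2:ℕ) : ZMod (ℓ+1)).val) = c i₀
    rw [ZMod.val_cast_of_lt (by omega), hWB 2 (by omega) (by omega)]
    congr 1
    rw [hq0] at hqc
    push_cast at hqc ⊢
    linear_combination hqc
  by_cases hqa : q = a
  · refine ⟨((1 : ℕ) : ZMod (ℓ+1)), ?_⟩
    show W (((1:ℕ) : ZMod (ℓ+1)).val) = c i₀
    rw [ZMod.val_cast_of_lt (by omega), hW1]
    congr 1
    rw [hqa] at hqc
    rw [← hecast]
    linear_combination hqc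
  by_cases hqlea : q ≤ a
  · refine ⟨((ℓ - a + 1 + q : ℕ) : ZMod (ℓ+1)), ?_⟩
    show W (((ℓ - a + 1 + q : ℕ) : ZMod (ℓ+1)).val) = c i₀
    rw [ZMod.val_cast_of_lt (by omega), hWC (ℓ - a + 1 + q) (by omega)]
    congr 1
    push_cast [Nat.cast_sub (show a ≤ ℓ from by omega), ZMod.natCast_self]
    linear_combination hqc
  · refine ⟨((ℓ - q + 2 : ℕ) : ZMod (ℓ+1)), ?_⟩
    show W (((ℓ - q + 2 : ℕ) : ZMod (ℓ+1)).val) = c i₀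
    rw [ZMod.val_cast_of_lt (by omega), hWB (ℓ - q + 2) (by omega) (by omega)]
    congr 1
    push_cast [Nat.cast_sub (show q ≤ ℓ from by omega), ZMod.natCast_self]
    linear_combination hqc



lemma bad_gives_half (hsym : ∀ u v, col u v = col v u) (hmono : ¬ HasMonoTriangle col)
    (hC : IsPCCycle col c) (hz : z ∉ Set.range c)
    (hzc : ∀ m : ZMod ℓ, col z (c m) = col (c m) (c (m + 1)))
    {i₀ : ZMod ℓ} (hnoext : ¬ PCThrough col (ℓ + 1) (c i₀))
    {i j : ZMod ℓ} (hbad : Bad col c i j) :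
    ℓ % 2 = 0 ∧ j - i = ((ℓ / 2 : ℕ) : ZMod ℓ) := by
  have hb : ∀ m : ZMod ℓ, Bad col c m (m + (j - i)) :=
    propagate hsym hmono hC hz hzc hnoext hbad
  have hf : ∀ m : ZMod ℓ, Fc col c m = Fc col c (m + (j - i)) :=
    periodF hsym hmono hC hz hzc hnoext hbad
  have hcc : ∀ m : ZMod ℓ, col (c m) (c (m + (j - i))) = Fc col c (m - 1) :=
    chordcol hsym hC hz hzc hnoext hb
  set e := j - i with hedef
  have he0 : e ≠ 0 := sub_ne_zero.mpr hbad.1.symm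
  have hzi : ∀ m : ZMod ℓ, z ≠ c m := fun m h => hz ⟨m, h.symm⟩
  have hfe : Fc col c (e + e) = Fc col c 0 := by
    have k1 : Fc col c 0 = Fc col c e := by have := hf 0; rwa [zero_add] at this
    exact (k1.trans (hf e)).symm
  have h2e : e + e = 0 := by
    by_contra hg
    by_cases hχ : col (c 0) (c (e + e)) = Fc col c 0
    · apply hmono
      refine ⟨z, c 0, c (e+e), hzi _, ?_, hzi _, ?_, ?_⟩
      · intro h
        have h2 := hC.1 h
        exact hg h2.symm
      · rw [hzc 0]
        simp only [Fc] at hχ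
        exact hχ.symm
      · rw [hzc 0, hzc (e+e)]
        simp only [Fc] at hfe
        exact hfe.symm
    · have hbad2 : Bad col c 0 (e + e) := by
        refine ⟨fun h => hg h.symm, hχ, ?_⟩
        rw [hfe]
        exact hχ
      have hbb := propagate hsym hmono hC hz hzc hnoext hbad2
      have hff : e + e - 0 = e + e := sub_zero _
      simp only [hff] at hbb
      have hcc2 := chordcol hsym hC hz hzc hnoext hbb
      apply hmono
      refine ⟨c 0, c e, c (e + e), ?_, ?_, ?_, ?_, ?_⟩
      · intro h
        exact he0 (hC.1 h).symm
      · intro h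
        have h2 := hC.1 h
        exact he0 (by linear_combination -h2)
      · intro h
        have h2 := hC.1 h
        exact hg h2.symm
      · -- col (c 0) (c e) = col (c e) (c (e+e))
        have k1 := hcc 0
        rw [zero_add, zero_sub] at k1
        have k2 := hcc e
        have k3 : Fc col c (e - 1) = Fc col c (-1) := by
          have := hf (-1)
          rw [show (-1 : ZMod ℓ) + e = e - 1 from by ring] at this
          exact this.symm
        rw [k1, k2, k3]
      · -- col (c 0) (c (e+e)) = Fc (-1)
        have k1 := hcc 0
        rw [zero_add, zero_sub] at k1
        have k4 := hcc2 0
        rw [zero_add, zero_sub] at k4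
        rw [k1, k4]
  exact half_spec he0 h2e


end Main
end ChordAux

/-- Structure of a PC cycle with a bad chord, when some vertex $u^*$ of the
cycle lies on no PC cycle of length $ℓ+1$ and an outside vertex $z$ sees each
$v_i$ in the color $f(v_i)$ of its forward edge. -/
theorem chord_forces_antipodal_structure
    {V : Type*} (col : V → V → ℕ) (hsym : ∀ u v, col u v = col v u)
    (hmono : ¬ HasMonoTriangle col)
    (ℓ : ℕ) [NeZero ℓ] (hl : 3 ≤ ℓ)
    (c : ZMod ℓ → V) (hC : IsPCCycle col c)
    (z : V) (hz : z ∉ Set.range c)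
    (hzc : ∀ i : ZMod ℓ, col z (c i) = col (c i) (c (i + 1)))
    (i₀ : ZMod ℓ)
    (hnoext : ¬ PCThrough col (ℓ + 1) (c i₀))
    (i j : ZMod ℓ) (hij : i ≠ j)
    (hchord1 : col (c i) (c j) ≠ col (c i) (c (i + 1)))
    (hchord2 : col (c i) (c j) ≠ col (c j) (c (j + 1))) :
    Even ℓ ∧ j - i = ((ℓ / 2 : ℕ) : ZMod ℓ) ∧
    (∀ m : ZMod ℓ,
      col (c m) (c (m + 1)) =
        col (c (m + (ℓ / 2 : ℕ))) (c (m + (ℓ / 2 : ℕ) + 1))) ∧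
    (∀ m : ZMod ℓ,
      col (c m) (c (m + (ℓ / 2 : ℕ))) = col (c (m - 1)) (c m)) ∧
    (∀ m : ZMod ℓ,
      (Finset.univ.filter fun s : ZMod ℓ =>
        col (c s) (c (s + 1)) = col (c m) (c (m + 1))).card = 2) := by
  
  classical
  have hbad : ChordAux.Bad col c i j :=
    ⟨hij, by simpa [ChordAux.Fc] using hchord1, by simpa [ChordAux.Fc] using hchord2⟩
  obtain ⟨hev, hd⟩ := ChordAux.bad_gives_half hsym hmono hC hz hzc hnoext hbad
  have hb : ∀ m : ZMod ℓ, ChordAux.Bad col c m (m + (j - i)) :=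
    ChordAux.propagate hsym hmono hC hz hzc hnoext hbad
  have hf : ∀ m : ZMod ℓ, ChordAux.Fc col c m = ChordAux.Fc col c (m + (j - i)) :=
    ChordAux.periodF hsym hmono hC hz hzc hnoext hbad
  have hcc : ∀ m : ZMod ℓ, col (c m) (c (m + (j - i))) = ChordAux.Fc col c (m - 1) :=
    ChordAux.chordcol hsym hC hz hzc hnoext hb
  have hzi : ∀ m : ZMod ℓ, z ≠ c m := fun m h => hz ⟨m, h.symm⟩
  have hhalf0 : ((ℓ/2 : ℕ) : ZMod ℓ) ≠ 0 := by
    rw [← hd]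
    exact sub_ne_zero.mpr hij.symm
  refine ⟨Nat.even_iff.mpr hev, hd, ?_, ?_, ?_⟩
  · intro m
    have h1 := hf m
    rw [hd] at h1
    simpa [ChordAux.Fc] using h1
  · intro m
    have h1 := hcc m
    rw [hd] at h1
    simp only [ChordAux.Fc] at h1
    rw [show m - 1 + 1 = m from by ring] at h1
    exact h1
  · intro m
    have hset : (Finset.univ.filter fun s : ZMod ℓ =>
        col (c s) (c (s + 1)) = col (c m) (c (m + 1))) =
        {m, m + ((ℓ/2 : ℕ) : ZMod ℓ)} := by
      ext s
      simp only [Finset.mem_filter, Finset.mem_univ, true_and, Finset.mem_insert,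
        Finset.mem_singleton]
      constructor
      · intro hFs
        by_cases hsm : s = m
        · exact Or.inl hsm
        right
        have hkey : col (c m) (c s) ≠ ChordAux.Fc col c m := by
          intro hcol
          apply hmono
          refine ⟨z, c m, c s, hzi _, fun h => hsm (hC.1 h).symm, hzi _, ?_, ?_⟩
          · rw [hzc m]
            simp only [ChordAux.Fc] at hcol
            exact hcol.symm
          · rw [hzc m, hzc s]
            exact hFs.symm
        have hbad2 : ChordAux.Bad col c m s := by
          refine ⟨fun h => hsm h.symm, hkey, ?_⟩
          simp only [ChordAux.Fc] at hkey ⊢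
          rw [hFs]
          exact hkey
        obtain ⟨_, hd2⟩ := ChordAux.bad_gives_half hsym hmono hC hz hzc hnoext hbad2
        linear_combination hd2
      · intro hs
        rcases hs with rfl | rfl
        · rfl
        · have h1 := hf m
          rw [hd] at h1
          simpa [ChordAux.Fc] using h1.symm
    rw [hset]
    exact Finset.card_pair (fun h => hhalf0 (left_eq_add.mp h))
end

section
/- Let D be the digraph associated to a degenerate edge-colored complete graph K_n with compatible function f, where the arc set is A(D) = {uv : col(uv) = f(u) and col(uv) ≠ f(v)}. If K_n contains no monochromatic triangle and no proper subset of V is a degenerate set, then D is a strongly connected multipartite tournament whose partite sets are the color classes V_i = f^{-1}(i), each of size at most 2, and for any two vertices x, y in the same partite set, N^+(x) ∩ N^+(y) = ∅. -/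
/-- The color classes of  partition the degenerate
edge-colored $K_n$ into parts of size at most 2, and the associated digraph
is a strongly connected multipartite tournament in which vertices of a common
part have disjoint out-neighborhoods. -/
theorem degenerate_digraph_is_strong_multipartite_tournament
    (n : ℕ) (col : Fin n → Fin n → ℕ)
    (hsym : ∀ u v, col u v = col v u)
    (f : Fin n → ℕ)
    (hcompat : ∀ u v : Fin n, u ≠ v → col u v = f u ∨ col u v = f v)
    (hmono : ¬ HasMonoTriangle col)
    (hnodeg : ∀ S : Set (Fin n), DegenSet col S → S = Set.univ)
    (r : Fin n → Fin n → Prop)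
    (hr : ∀ u v : Fin n, r u v ↔ u ≠ v ∧ col u v = f u ∧ col u v ≠ f v) :
    (∀ u v : Fin n, u ≠ v →
      (f u = f v → ¬ r u v ∧ ¬ r v u) ∧ (f u ≠ f v → Xor' (r u v) (r v u))) ∧
    (∀ a : ℕ, (Finset.univ.filter fun v : Fin n => f v = a).card ≤ 2) ∧
    (∀ u v : Fin n, Relation.ReflTransGen r u v) ∧
    (∀ x y : Fin n, x ≠ y → f x = f y → ∀ z : Fin n, ¬ (r x z ∧ r y z)) := by
  refine ⟨?_, ?_, ?_, ?_⟩
  · intro u v huv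
    constructor
    · intro hfe
      constructor
      · rw [hr]; rintro ⟨-, h1, h2⟩; exact h2 (h1.trans hfe)
      · rw [hr]; rintro ⟨-, h1, h2⟩; exact h2 (h1.trans hfe.symm)
    · intro hfne
      rcases hcompat u v huv with h | h
      · left
        refine ⟨(hr u v).mpr ⟨huv, h, h ▸ hfne⟩, ?_⟩
        rw [hr]
        rintro ⟨-, h1, -⟩
        exact hfne ((h.symm.trans (hsym u v)).trans h1)
      · right
        have hne : col u v ≠ f u := fun hh => hfne (hh.symm.trans h)
        refine ⟨(hr v u).mpr ⟨huv.symm, (hsym v u).trans h, fun hh => hne ((hsym u v).trans hh)⟩, ?_⟩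
        rw [hr]
        rintro ⟨-, h1, -⟩
        exact hne h1
  · intro a
    by_contra hcard
    push_neg at hcard
    rw [Finset.two_lt_card_iff] at hcard
    obtain ⟨x, y, z, hx, hy, hz, hxy, hxz, hyz⟩ := hcard
    simp only [Finset.mem_filter] at hx hy hz
    have cxy : col x y = a := by rcases hcompat x y hxy with h | h <;> rw [h] <;> [exact hx.2; exact hy.2]
    have cyz : col y z = a := by rcases hcompat y z hyz with h | h <;> rw [h] <;> [exact hy.2; exact hz.2]
    have cxz : col x z = a := by rcases hcompat x z hxz with h | h <;> rw [h] <;> [exact hx.2; exact hz.2]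
    exact hmono ⟨x, y, z, hxy, hyz, hxz, cxy.trans cyz.symm, cxy.trans cxz.symm⟩
  · intro u v
    by_contra hv
    set S : Set (Fin n) := {w | ¬ Relation.ReflTransGen r u w} with hSdef
    have hS : DegenSet col S := by
      refine ⟨⟨v, hv⟩, f, fun a _ b _ hab => hcompat a b hab, ?_⟩
      intro a ha b hb
      have hb' : Relation.ReflTransGen r u b := not_not.mp hb
      have hab : a ≠ b := by rintro rfl; exact ha hb'
      by_contra hcol
      have h2 : col a b = f b := (hcompat a b hab).resolve_left hcol
      have hrba : r b a := (hr b a).mpr ⟨hab.symm, (hsym b a).trans h2,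
        fun hh => hcol ((hsym a b).trans hh)⟩
      exact ha (hb'.tail hrba)
    have := hnodeg S hS
    have hu : u ∈ S := this ▸ Set.mem_univ u
    exact hu Relation.ReflTransGen.refl
  · rintro x y hxy hf z ⟨hxz, hyz⟩
    rw [hr] at hxz hyz
    obtain ⟨hxz1, hxz2, hxz3⟩ := hxz
    obtain ⟨hyz1, hyz2, hyz3⟩ := hyz
    have cxy : col x y = f x := by
      rcases hcompat x y hxy with h | h
      · exact h
      · exact h.trans hf.symm
    exact hmono ⟨x, y, z, hxy, hyz1, hxz1,
      cxy.trans (hyz2.trans hf.symm).symm, cxy.trans hxz2.symm⟩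
end
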